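/- arXiv:1909.00250 — 8 statements merged into one kernel-verified Lean document; each statement's English description precedes it below -/
import Mathlib

section
/- Let X be a Bernoulli random variable with parameter p ∈ [0,1], let Y = (X − p)·log p (with the convention 0·log 0 = 0), and let G(p,λ) = E[e^{λY}] = p·e^{λ(1−p)log p} + (1−p)·e^{−λ p log p} be the moment generating function of Y. Then for every real λ with |λ| < 1, G(p,λ) ≤ exp( λ² / (2(1−|λ|)) ). -/
open scoped Nat

/-- The moment generating function of `Y = (X - p) * log p` for `X ~ Ber(p)`:
`G(p, λ) = p * exp(λ(1-p)log p) + (1-p) * exp(-λ p log p)`.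
(With Lean's convention `Real.log 0 = 0`, this also covers `p ∈ {0,1}`.) -/
noncomputable def bernoulliLogLikMGF (p lam : ℝ) : ℝ :=
  p * Real.exp (lam * (1 - p) * Real.log p) +
    (1 - p) * Real.exp (-(lam * p * Real.log p))

private lemma aux_et (t : ℝ) : Real.exp 1 * t ≤ Real.exp t := by
  have h : t ≤ Real.exp (t - 1) := by linarith [Real.add_one_le_exp (t - 1)]
  calc Real.exp 1 * t ≤ Real.exp 1 * Real.exp (t - 1) :=
        mul_le_mul_of_nonneg_left h (Real.exp_nonneg 1)
    _ = Real.exp t := by rw [← Real.exp_add]; ring_nf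

private lemma aux_expL (L : ℝ) (hL : 0 ≤ L) (n : ℕ) (hn : 1 ≤ n) :
    Real.exp (-L) * L ^ n ≤ ((n : ℝ) * Real.exp (-1)) ^ n := by
  have hn0 : (0 : ℝ) < n := by exact_mod_cast Nat.pos_of_ne_zero (by omega)
  have h1 : Real.exp 1 * (L / n) ≤ Real.exp (L / n) := aux_et _
  have h1n : (0 : ℝ) ≤ Real.exp 1 * (L / n) := by positivity
  have key : (Real.exp 1 * (L / n)) ^ n ≤ Real.exp L := by
    calc (Real.exp 1 * (L / n)) ^ n ≤ (Real.exp (L / n)) ^ n :=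
          pow_le_pow_left₀ h1n h1 n
      _ = Real.exp ((n : ℝ) * (L / n)) := (Real.exp_nat_mul _ n).symm
      _ = Real.exp L := by rw [mul_div_cancel₀ _ (ne_of_gt hn0)]
  have hLfac : L = (Real.exp 1 * (L / n)) * ((n : ℝ) * Real.exp (-1)) := by
    rw [Real.exp_neg]
    field_simp
  calc Real.exp (-L) * L ^ n
      = Real.exp (-L) * ((Real.exp 1 * (L / n)) ^ n * ((n : ℝ) * Real.exp (-1)) ^ n) := by
        rw [← mul_pow, ← hLfac]
    _ ≤ Real.exp (-L) * (Real.exp L * ((n : ℝ) * Real.exp (-1)) ^ n) := by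
        apply mul_le_mul_of_nonneg_left _ (Real.exp_nonneg _)
        apply mul_le_mul_of_nonneg_right key (by positivity)
    _ = ((n : ℝ) * Real.exp (-1)) ^ n := by
        rw [← mul_assoc, ← Real.exp_add]; simp

private lemma aux_fact (n : ℕ) (hn : 2 ≤ n) :
    ((n : ℝ) * Real.exp (-1)) ^ n ≤ 3 / 8 * (n ! : ℝ) := by
  obtain ⟨m, rfl⟩ : ∃ m, n = m + 2 := ⟨n - 2, by omega⟩
  set n := m + 2 with hn'
  have hfac : (0 : ℝ) < (n ! : ℝ) := by exact_mod_cast Nat.factorial_pos n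
  have hnR : (0 : ℝ) < (n : ℝ) := by positivity
  -- the three consecutive exp-series terms
  have hsum : ∑ k ∈ Finset.range (n + 2), (n : ℝ) ^ k / (k ! : ℝ) ≤ Real.exp n :=
    Real.sum_le_exp_of_nonneg (by positivity) _
  have hsplit : ∑ k ∈ Finset.range (n + 2), (n : ℝ) ^ k / (k ! : ℝ) =
      (∑ k ∈ Finset.range (m + 1), (n : ℝ) ^ k / (k ! : ℝ)) +
        (n : ℝ) ^ (m + 1) / (m + 1)! + (n : ℝ) ^ (m + 2) / (m + 2)! +
        (n : ℝ) ^ (m + 3) / (m + 3)! := by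
    rw [show n + 2 = (m + 3) + 1 by omega, Finset.sum_range_succ,
      show m + 3 = (m + 2) + 1 by omega, Finset.sum_range_succ,
      show m + 2 = (m + 1) + 1 by omega, Finset.sum_range_succ]
  have hnonneg : (0 : ℝ) ≤ ∑ k ∈ Finset.range (m + 1), (n : ℝ) ^ k / (k ! : ℝ) :=
    Finset.sum_nonneg fun k _ => by positivity
  set A : ℝ := (n : ℝ) ^ n / (n ! : ℝ) with hA
  have hA1 : (n : ℝ) ^ (m + 1) / (m + 1)! = A := by
    rw [hA]
    rw [show ((m + 2 : ℕ) : ℝ) ^ (m + 2) = ((m + 2 : ℕ) : ℝ) ^ (m + 1) * (m + 2 : ℕ) by ring,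
      Nat.factorial_succ (m + 1)]
    push_cast
    field_simp
    rw [hn']; push_cast
    ring
  have hA3 : (n : ℝ) ^ (m + 3) / (m + 3)! = A * ((n : ℝ) / (m + 3)) := by
    rw [hA, Nat.factorial_succ (m + 2)]
    push_cast
    field_simp
    ring
  have hA3' : A * (2 / 3) ≤ A * ((n : ℝ) / (m + 3)) := by
    apply mul_le_mul_of_nonneg_left _ (by positivity)
    rw [div_le_div_iff₀ (by norm_num) (by positivity)]
    push_cast
    rw [hn']; push_cast
    linarith
  have hAexp : (8 / 3 : ℝ) * A ≤ Real.exp n := by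
    have : A + A + A * (2/3) ≤ Real.exp n := by
      calc A + A + A * (2/3) ≤
          (∑ k ∈ Finset.range (m + 1), (n : ℝ) ^ k / (k ! : ℝ)) +
            (n : ℝ) ^ (m + 1) / (m + 1)! + (n : ℝ) ^ (m + 2) / (m + 2)! +
            (n : ℝ) ^ (m + 3) / (m + 3)! := by
            rw [hA1, hA3]
            have : (n : ℝ) ^ (m + 2) / ((m + 2)! : ℝ) = A := rfl
            linarith [hA3']
        _ ≤ Real.exp n := by rw [← hsplit]; exact hsum
    linarith
  -- conclude
  have hexp : ((n : ℝ) * Real.exp (-1)) ^ n = (n : ℝ) ^ n * Real.exp (-(n : ℝ)) := by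
    rw [mul_pow, ← Real.exp_nat_mul]
    push_cast
    ring_nf
  rw [hexp, Real.exp_neg]
  have hEpos : (0 : ℝ) < Real.exp (n : ℝ) := Real.exp_pos _
  have h9 : 8 / 3 * (n : ℝ) ^ n ≤ Real.exp n * (n ! : ℝ) := by
    have := mul_le_mul_of_nonneg_right hAexp hfac.le
    rw [mul_assoc, div_mul_cancel₀ _ (ne_of_gt hfac)] at this
    linarith
  rw [mul_inv_le_iff₀ hEpos]
  nlinarith [h9]

private lemma moment_bound (p : ℝ) (hp0 : 0 ≤ p) (hp1 : p ≤ 1) (n : ℕ) (hn : 2 ≤ n) :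
    p * ((1 - p) * |Real.log p|) ^ n + (1 - p) * (p * |Real.log p|) ^ n
      ≤ (n ! : ℝ) / 2 := by
  have hfac2 : (2 : ℝ) ≤ (n ! : ℝ) := by
    exact_mod_cast le_trans hn (Nat.self_le_factorial n)
  rcases eq_or_lt_of_le hp0 with h0 | h0
  · simp [← h0, Real.log_zero, zero_pow (by omega : n ≠ 0)]
    linarith
  -- p > 0
  set L : ℝ := -Real.log p with hL
  have hlog : Real.log p ≤ 0 := Real.log_nonpos hp0 hp1
  have hLnn : 0 ≤ L := by simp [hL]; linarith
  have habs : |Real.log p| = L := by rw [abs_of_nonpos hlog]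
  have hpexp : p = Real.exp (-L) := by
    rw [hL, neg_neg, Real.exp_log h0]
  rw [habs]
  have hterm1 : p * ((1 - p) * L) ^ n ≤ 3 / 8 * (n ! : ℝ) := by
    have h1 : ((1 - p) * L) ^ n ≤ L ^ n := by
      apply pow_le_pow_left₀ (mul_nonneg (by linarith) hLnn)
      nlinarith
    calc p * ((1 - p) * L) ^ n ≤ p * L ^ n :=
          mul_le_mul_of_nonneg_left h1 hp0
      _ = Real.exp (-L) * L ^ n := by rw [← hpexp]
      _ ≤ ((n : ℝ) * Real.exp (-1)) ^ n := aux_expL L hLnn n (by omega)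
      _ ≤ 3 / 8 * (n ! : ℝ) := aux_fact n hn
  have hterm2 : (1 - p) * (p * L) ^ n ≤ 1 / 4 := by
    have hpL : p * L ≤ Real.exp (-1) := by
      rw [hpexp]
      simpa using aux_expL L hLnn 1 le_rfl
    have hE2 : Real.exp (-1) ≤ 1 / 2 := by
      rw [Real.exp_neg]
      rw [inv_le_comm₀ (Real.exp_pos 1) (by norm_num)]
      linarith [Real.add_one_le_exp (1 : ℝ)]
    have h2 : (p * L) ^ n ≤ (1 / 2) ^ n :=
      pow_le_pow_left₀ (by positivity) (le_trans hpL hE2) n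
    have h3 : ((1 : ℝ) / 2) ^ n ≤ (1 / 2) ^ 2 :=
      pow_le_pow_of_le_one (by norm_num) (by norm_num) hn
    nlinarith [pow_nonneg (by positivity : (0:ℝ) ≤ p * L) n]
  linarith

/-- For every `p ∈ [0,1]` and every `λ` with `|λ| < 1`,
`G(p, λ) ≤ exp(λ² / (2(1 - |λ|)))`. -/
theorem bernoulli_loglik_mgf_bound (p : ℝ) (hp : p ∈ Set.Icc (0 : ℝ) 1)
    (lam : ℝ) (hlam : |lam| < 1) :
    bernoulliLogLikMGF p lam ≤ Real.exp (lam ^ 2 / (2 * (1 - |lam|))) := by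
  obtain ⟨hp0, hp1⟩ := hp
  set a : ℝ := lam * (1 - p) * Real.log p with ha
  set b : ℝ := -(lam * p * Real.log p) with hb
  set c : ℕ → ℝ := fun n => p * (a ^ n / (n ! : ℝ)) + (1 - p) * (b ^ n / (n ! : ℝ)) with hc
  have sa : Summable fun n : ℕ => a ^ n / (n ! : ℝ) := Real.summable_pow_div_factorial a
  have sb : Summable fun n : ℕ => b ^ n / (n ! : ℝ) := Real.summable_pow_div_factorial b
  have sc : Summable c := (sa.mul_left p).add (sb.mul_left (1 - p))
  have hexp : ∀ x : ℝ, Real.exp x = ∑' n : ℕ, x ^ n / (n ! : ℝ) := by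
    intro x
    rw [Real.exp_eq_exp_ℝ, NormedSpace.exp_eq_tsum_div]
  have hG : bernoulliLogLikMGF p lam = ∑' n, c n := by
    rw [bernoulliLogLikMGF, hexp a, hexp b, ← tsum_mul_left, ← tsum_mul_left,
      ← Summable.tsum_add (sa.mul_left p) (sb.mul_left (1 - p))]
  have hc0 : c 0 = 1 := by simp [hc]
  have hc1 : c 1 = 0 := by
    simp only [hc, pow_one, Nat.factorial_one, Nat.cast_one, div_one, ha, hb]
    ring
  have stail : Summable fun n : ℕ => c (n + 2) := (summable_nat_add_iff 2).2 sc
  have hsplit : ∑' n, c n = c 0 + c 1 + ∑' n, c (n + 2) := by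
    rw [← Summable.sum_add_tsum_nat_add' stail]
    rw [Finset.sum_range_succ, Finset.sum_range_one]
  -- termwise bound
  have habs_a : |a| = |lam| * ((1 - p) * |Real.log p|) := by
    rw [ha, abs_mul, abs_mul, abs_of_nonneg (by linarith : (0:ℝ) ≤ 1 - p), mul_assoc]
  have habs_b : |b| = |lam| * (p * |Real.log p|) := by
    rw [hb, abs_neg, abs_mul, abs_mul, abs_of_nonneg hp0, mul_assoc]
  have hterm : ∀ n : ℕ, c (n + 2) ≤ |lam| ^ 2 / 2 * |lam| ^ n := by
    intro n
    have hfacpos : (0 : ℝ) < ((n + 2)! : ℝ) := by exact_mod_cast Nat.factorial_pos _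
    have hmom := moment_bound p hp0 hp1 (n + 2) (by omega)
    have h1 : c (n + 2) ≤ p * (|a| ^ (n + 2) / ((n + 2)! : ℝ)) +
        (1 - p) * (|b| ^ (n + 2) / ((n + 2)! : ℝ)) := by
      have ha1 : a ^ (n + 2) ≤ |a| ^ (n + 2) := by
        rw [← abs_pow]; exact le_abs_self _
      have hb1 : b ^ (n + 2) ≤ |b| ^ (n + 2) := by
        rw [← abs_pow]; exact le_abs_self _
      show p * (a ^ (n + 2) / ((n + 2)! : ℝ)) + (1 - p) * (b ^ (n + 2) / ((n + 2)! : ℝ)) ≤ _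
      gcongr <;> linarith
    have h2 : p * |a| ^ (n + 2) + (1 - p) * |b| ^ (n + 2)
        ≤ |lam| ^ (n + 2) * (((n + 2)! : ℝ) / 2) := by
      rw [habs_a, habs_b]
      calc p * (|lam| * ((1 - p) * |Real.log p|)) ^ (n+2) +
            (1 - p) * (|lam| * (p * |Real.log p|)) ^ (n+2)
          = |lam| ^ (n+2) * (p * ((1 - p) * |Real.log p|) ^ (n+2) +
              (1 - p) * (p * |Real.log p|) ^ (n+2)) := by
            rw [mul_pow, mul_pow]; ring
        _ ≤ |lam| ^ (n+2) * (((n + 2)! : ℝ) / 2) :=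
            mul_le_mul_of_nonneg_left hmom (by positivity)
    calc c (n + 2) ≤ (p * |a| ^ (n + 2) + (1 - p) * |b| ^ (n + 2)) / ((n + 2)! : ℝ) := by
          rw [add_div, mul_div_assoc, mul_div_assoc]; exact h1
      _ ≤ |lam| ^ (n + 2) * (((n + 2)! : ℝ) / 2) / ((n + 2)! : ℝ) := by
          gcongr
      _ = |lam| ^ 2 / 2 * |lam| ^ n := by
          field_simp
          ring
  have sgeo : Summable fun n : ℕ => |lam| ^ n :=
    summable_geometric_of_lt_one (abs_nonneg lam) hlam
  have htail : ∑' n, c (n + 2) ≤ |lam| ^ 2 / 2 * (1 - |lam|)⁻¹ := by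
    calc ∑' n, c (n + 2) ≤ ∑' n : ℕ, |lam| ^ 2 / 2 * |lam| ^ n :=
          Summable.tsum_le_tsum hterm stail (sgeo.mul_left _)
      _ = |lam| ^ 2 / 2 * (1 - |lam|)⁻¹ := by
          rw [tsum_mul_left, tsum_geometric_of_lt_one (abs_nonneg lam) hlam]
  have hfinal : |lam| ^ 2 / 2 * (1 - |lam|)⁻¹ = lam ^ 2 / (2 * (1 - |lam|)) := by
    rw [sq_abs]
    field_simp
  calc bernoulliLogLikMGF p lam = 1 + 0 + ∑' n, c (n + 2) := by
        rw [hG, hsplit, hc0, hc1]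
    _ ≤ 1 + lam ^ 2 / (2 * (1 - |lam|)) := by
        rw [← hfinal]; linarith [htail]
    _ ≤ Real.exp (lam ^ 2 / (2 * (1 - |lam|))) := by
        linarith [Real.add_one_le_exp (lam ^ 2 / (2 * (1 - |lam|)))]
end

section
/- Let X_1, …, X_n be independent Bernoulli random variables with parameters p_1, …, p_n ∈ [0,1], and set Y_i = (X_i − p_i)·log p_i (with the convention 0·log 0 = 0). Then for all t > 0, P( | Σ_{i=1}^n Y_i | ≥ t ) ≤ 2·exp( − t² / (2(n + t)) ). -/
open MeasureTheory ProbabilityTheory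


open Real

section AuxLemmas

lemma sq_le_exp' {s : ℝ} (hs : 0 ≤ s) : s ^ 2 ≤ exp s := by
  have h4 := add_one_le_exp (s/4)
  have h2 : s ≤ exp (s/2) := by
    have : exp (s/2) = exp (s/4) * exp (s/4) := by rw [← exp_add]; ring_nf
    nlinarith [exp_pos (s/4), sq_nonneg (s/4 - 1), sq_nonneg (s/4+1)]
  have : exp s = exp (s/2) * exp (s/2) := by rw [← exp_add]; ring_nf
  nlinarith [exp_pos (s/2), sq_nonneg (exp (s/2) - s)]

lemma exp_neg_le_quad {u : ℝ} (hu : 0 ≤ u) : exp (-u) ≤ 1 - u + u ^ 2 / 2 := by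
  have hmono : Monotone (fun x : ℝ => 1 - x + x ^ 2 / 2 - exp (-x)) := by
    apply monotone_of_deriv_nonneg
    · fun_prop
    · intro x
      have hd : HasDerivAt (fun x : ℝ => 1 - x + x ^ 2 / 2 - exp (-x))
          (-1 + x + exp (-x)) x := by
        have h1 : HasDerivAt (fun x : ℝ => exp (-x)) (-exp (-x)) x := by
          simpa [Function.comp_def] using (Real.hasDerivAt_exp (-x)).comp x (hasDerivAt_neg x)
        have h2 : HasDerivAt (fun x : ℝ => 1 - x + x ^ 2 / 2) (-1 + x) x := by
          have := ((hasDerivAt_pow 2 x).div_const 2)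
          have h3 : HasDerivAt (fun x : ℝ => 1 - x) (-1) x := by
            simpa using (hasDerivAt_id x).const_sub 1
          simpa [Pi.add_def] using h3.add ((hasDerivAt_pow 2 x).div_const 2)
        simpa [Pi.sub_def] using h2.sub h1
      rw [hd.deriv]
      nlinarith [add_one_le_exp (-x)]
  have h0 : (fun x : ℝ => 1 - x + x ^ 2 / 2 - exp (-x)) 0 = 0 := by simp
  have := hmono hu
  simp only [h0] at this
  linarith [this]

-- K : exp (l*s) ≤ l * exp s / (2*(1-l)) + 1
lemma K_bound {l : ℝ} (hl0 : 0 < l) (hl1 : l < 1) (s : ℝ) :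
    exp (l * s) ≤ l * exp s / (2 * (1 - l)) + 1 := by
  have h1l : (0:ℝ) < 1 - l := by linarith
  have h2l : (0:ℝ) < 2 * (1 - l) := by linarith
  set c : ℝ := Real.log (2 * (1 - l)) with hc
  have hconv := convexOn_exp.2 (Set.mem_univ (s - c)) (Set.mem_univ (l * c / (1 - l)))
    hl0.le (by linarith : (0:ℝ) ≤ 1 - l) (by ring)
  simp only [smul_eq_mul] at hconv
  have harg : l * (s - c) + (1 - l) * (l * c / (1 - l)) = l * s := by
    field_simp
    ring
  rw [harg] at hconv
  have he1 : exp (s - c) = exp s / (2 * (1 - l)) := by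
    rw [exp_sub, hc, exp_log h2l]
  have he2 : (1 - l) * exp (l * c / (1 - l)) ≤ 1 := by
    have : (1 - l) * exp (l * c / (1 - l)) = exp (Real.log (1 - l) + l * c / (1 - l)) := by
      rw [exp_add, exp_log h1l]
    rw [this]
    rw [Real.exp_le_one_iff]
    have hlog1 : Real.log (1 - l) ≤ -l := by
      have := log_le_sub_one_of_pos h1l
      linarith
    have hlogc : c = Real.log 2 + Real.log (1 - l) := by
      rw [hc, Real.log_mul (by norm_num) h1l.ne']
    have hlog2 : Real.log 2 ≤ 1 := by
      have := log_le_sub_one_of_pos (by norm_num : (0:ℝ) < 2)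
      linarith
    have hlog1' : Real.log (1 - l) ≤ 0 := log_nonpos (by linarith) (by linarith)
    rw [hlogc]
    have hdiv : l * (Real.log 2 + Real.log (1 - l)) / (1 - l) ≤ -Real.log (1 - l) := by
      rw [div_le_iff₀ h1l]
      nlinarith [mul_le_mul_of_nonneg_left hlog2 hl0.le,
        mul_le_mul_of_nonneg_left hlog1 hl0.le,
        mul_le_mul_of_nonneg_left hlog1 h1l.le]
    linarith
  rw [he1] at hconv
  have hr : l * (exp s / (2 * (1 - l))) = l * exp s / (2 * (1 - l)) := by ring
  linarith [hconv, he2, hr.ge, hr.le]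

-- H : exp (l*s) - 1 - l*s ≤ l^2/(2*(1-l)) * exp s  for s ≥ 0
lemma H_bound {l : ℝ} (hl0 : 0 < l) (hl1 : l < 1) {s : ℝ} (hs : 0 ≤ s) :
    exp (l * s) - 1 - l * s ≤ l ^ 2 / (2 * (1 - l)) * exp s := by
  have h1l : (0:ℝ) < 1 - l := by linarith
  set C : ℝ := l ^ 2 / (2 * (1 - l)) with hC
  have hCpos : 0 < C := by positivity
  have hmono : Monotone (fun x : ℝ => C * exp x - exp (l * x) + 1 + l * x) := by
    apply monotone_of_deriv_nonneg
    · fun_prop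
    · intro x
      have hd : HasDerivAt (fun x : ℝ => C * exp x - exp (l * x) + 1 + l * x)
          (C * exp x - l * exp (l * x) + l) x := by
        have h1 : HasDerivAt (fun x : ℝ => exp (l * x)) (l * exp (l * x)) x := by
          have := (Real.hasDerivAt_exp (l * x)).comp x ((hasDerivAt_id x).const_mul l)
          simpa [mul_comm, Function.comp_def] using this
        have h2 : HasDerivAt (fun x : ℝ => C * exp x) (C * exp x) x :=
          (Real.hasDerivAt_exp x).const_mul C
        have h3 := ((h2.sub h1).add_const 1).add ((hasDerivAt_id x).const_mul l)
        simpa [Pi.add_def] using h3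
      rw [hd.deriv]
      have hK := K_bound hl0 hl1 x
      have : l * exp (l * x) ≤ l * (l * exp x / (2 * (1 - l)) + 1) :=
        mul_le_mul_of_nonneg_left hK hl0.le
      have hCe : C * exp x = l * (l * exp x / (2 * (1 - l))) := by
        rw [hC]; field_simp
      linarith [this, hCe.ge]
  have h0 : (fun x : ℝ => C * exp x - exp (l * x) + 1 + l * x) 0 = C := by simp
  have := hmono hs
  simp only [h0] at this
  linarith
lemma bern_mgf_plus {l p : ℝ} (hl0 : 0 < l) (hl1 : l < 1) (hp0 : 0 ≤ p) (hp1 : p ≤ 1) :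
    (1 - p) * exp (l * ((0 - p) * Real.log p)) + p * exp (l * ((1 - p) * Real.log p))
      ≤ exp (l ^ 2 / (2 * (1 - l))) := by
  have h1l : (0:ℝ) < 1 - l := by linarith
  have hexp1 : (1:ℝ) ≤ exp (l ^ 2 / (2 * (1 - l))) := by
    apply one_le_exp; positivity
  rcases eq_or_lt_of_le hp0 with h0 | hp0'
  · simp [← h0]; positivity
  rcases eq_or_lt_of_le hp1 with h1 | hp1'
  · simp [h1]; positivity
  -- 0 < p < 1
  obtain ⟨s, hs_def⟩ : ∃ s : ℝ, s = -Real.log p := ⟨-Real.log p, rfl⟩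
  have hlogp : Real.log p < 0 := Real.log_neg hp0' hp1'
  have hs : 0 < s := by rw [hs_def]; linarith
  have hps : p = exp (-s) := by rw [hs_def, neg_neg, exp_log hp0']
  have hlp : Real.log p = -s := by rw [hs_def]; ring
  have key : (1 - p) * exp (l * ((0 - p) * Real.log p)) + p * exp (l * ((1 - p) * Real.log p))
      = exp (l * p * s) * ((1 - p) + p * exp (-(l * s))) := by
    have e1 : l * ((0 - p) * (-s)) = l * p * s := by ring
    have e2 : l * ((1 - p) * (-s)) = l * p * s + -(l * s) := by ring
    rw [hlp, e1, e2, exp_add]; ring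
  rw [key]
  have hB : (1 - p) + p * exp (-(l * s)) ≤ exp (p * exp (-(l*s)) - p) := by
    have := add_one_le_exp (p * exp (-(l*s)) - p)
    linarith
  have hstep : exp (l * p * s) * ((1 - p) + p * exp (-(l * s)))
      ≤ exp (l * p * s + (p * exp (-(l*s)) - p)) := by
    rw [exp_add]
    apply mul_le_mul_of_nonneg_left hB (exp_pos _).le
  refine hstep.trans (exp_le_exp.2 ?_)
  have hquad : exp (-(l*s)) ≤ 1 - l*s + (l*s)^2/2 := exp_neg_le_quad (by positivity)
  have h1 : l * p * s + (p * exp (-(l*s)) - p) ≤ p * (l*s)^2/2 := by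
    nlinarith [hquad, hp0'.le]
  have h2 : p * (l*s)^2/2 ≤ l^2/2 := by
    have hse : s^2 ≤ exp s := sq_le_exp' hs.le
    have : p * s^2 ≤ 1 := by
      rw [hps]
      calc exp (-s) * s^2 ≤ exp (-s) * exp s := by
            apply mul_le_mul_of_nonneg_left hse (exp_pos _).le
        _ = 1 := by rw [← exp_add]; simp
    have hscale : l^2*(p*s^2) ≤ l^2*1 := mul_le_mul_of_nonneg_left this (sq_nonneg l)
    nlinarith [hscale]
  have h3 : l^2/2 ≤ l ^ 2 / (2 * (1 - l)) := by
    apply div_le_div_of_nonneg_left (by positivity) (by positivity)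
    nlinarith
  linarith

lemma bern_mgf_minus {l p : ℝ} (hl0 : 0 < l) (hl1 : l < 1) (hp0 : 0 ≤ p) (hp1 : p ≤ 1) :
    (1 - p) * exp (l * (-((0 - p) * Real.log p))) + p * exp (l * (-((1 - p) * Real.log p)))
      ≤ exp (l ^ 2 / (2 * (1 - l))) := by
  have h1l : (0:ℝ) < 1 - l := by linarith
  have hexp1 : (1:ℝ) ≤ exp (l ^ 2 / (2 * (1 - l))) := by
    apply one_le_exp; positivity
  rcases eq_or_lt_of_le hp0 with h0 | hp0'
  · simp [← h0]; positivity
  rcases eq_or_lt_of_le hp1 with h1 | hp1'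
  · simp [h1]; positivity
  obtain ⟨s, hs_def⟩ : ∃ s : ℝ, s = -Real.log p := ⟨-Real.log p, rfl⟩
  have hlogp : Real.log p < 0 := Real.log_neg hp0' hp1'
  have hs : 0 < s := by rw [hs_def]; linarith
  have hps : p = exp (-s) := by rw [hs_def, neg_neg, exp_log hp0']
  have hlp : Real.log p = -s := by rw [hs_def]; ring
  have key : (1 - p) * exp (l * (-((0 - p) * Real.log p))) + p * exp (l * (-((1 - p) * Real.log p)))
      = exp (-(l * p * s)) * ((1 - p) + p * exp (l * s)) := by
    have e1 : l * (-((0 - p) * (-s))) = -(l * p * s) := by ring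
    have e2 : l * (-((1 - p) * (-s))) = -(l * p * s) + l * s := by ring
    rw [hlp, e1, e2, exp_add]; ring
  rw [key]
  have hB : (1 - p) + p * exp (l * s) ≤ exp (p * exp (l*s) - p) := by
    have := add_one_le_exp (p * exp (l*s) - p)
    linarith
  have hstep : exp (-(l * p * s)) * ((1 - p) + p * exp (l * s))
      ≤ exp (-(l * p * s) + (p * exp (l*s) - p)) := by
    rw [exp_add]
    apply mul_le_mul_of_nonneg_left hB (exp_pos _).le
  refine hstep.trans (exp_le_exp.2 ?_)
  have hH := H_bound hl0 hl1 hs.le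
  have hfin : -(l * p * s) + (p * exp (l*s) - p) = p * (exp (l*s) - 1 - l*s) := by ring
  rw [hfin]
  have : p * (exp (l*s) - 1 - l*s) ≤ p * (l ^ 2 / (2 * (1 - l)) * exp s) :=
    mul_le_mul_of_nonneg_left hH hp0'.le
  refine this.trans ?_
  rw [hps]
  have hcalc : exp (-s) * (l ^ 2 / (2 * (1 - l)) * exp s) = l ^ 2 / (2 * (1 - l)) := by
    rw [show exp (-s) * (l ^ 2 / (2 * (1 - l)) * exp s)
        = l ^ 2 / (2 * (1 - l)) * (exp (-s) * exp s) from by ring, ← exp_add]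
    simp
  linarith [hcalc.le]

lemma bern_comp_integrable {Ω : Type*} [MeasurableSpace Ω] (μ : Measure Ω)
    [IsProbabilityMeasure μ] (X : Ω → ℝ) (hm : Measurable X)
    (hv : ∀ ω, X ω = 0 ∨ X ω = 1) (g : ℝ → ℝ) (hg : Measurable g) :
    Integrable (fun ω => g (X ω)) μ := by
  refine Integrable.mono' (integrable_const (max |g 0| |g 1|))
    ((hg.comp hm).aestronglyMeasurable) (ae_of_all _ fun ω => ?_)
  rcases hv ω with h | h <;> rw [Real.norm_eq_abs, h]
  · exact le_max_left _ _
  · exact le_max_right _ _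

lemma bern_integral {Ω : Type*} [MeasurableSpace Ω] (μ : Measure Ω)
    [IsProbabilityMeasure μ] (X : Ω → ℝ) (p : ℝ) (hp0 : 0 ≤ p) (hp1 : p ≤ 1)
    (hm : Measurable X) (hv : ∀ ω, X ω = 0 ∨ X ω = 1)
    (hd : μ {ω | X ω = 1} = ENNReal.ofReal p) (g : ℝ → ℝ) (hg : Measurable g) :
    ∫ ω, g (X ω) ∂μ = (1 - p) * g 0 + p * g 1 := by
  have hA : MeasurableSet {ω | X ω = 1} := hm (measurableSet_singleton 1)
  have hInt := bern_comp_integrable μ X hm hv g hg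
  rw [← integral_add_compl hA hInt]
  have h1 : ∫ ω in {ω | X ω = 1}, g (X ω) ∂μ = p * g 1 := by
    rw [setIntegral_congr_fun hA (g := fun _ => g 1) (fun ω hω => by rw [hω]),
      setIntegral_const, measureReal_def, hd, ENNReal.toReal_ofReal hp0, smul_eq_mul]
  have h0 : ∫ ω in {ω | X ω = 1}ᶜ, g (X ω) ∂μ = (1 - p) * g 0 := by
    have hc : ∀ ω ∈ {ω | X ω = 1}ᶜ, g (X ω) = g 0 := by
      intro ω hω
      rcases hv ω with h | h
      · rw [h]
      · exact absurd h hω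
    rw [setIntegral_congr_fun hA.compl (g := fun _ => g 0) hc, setIntegral_const, measureReal_def,
      prob_compl_eq_one_sub hA, hd, smul_eq_mul]
    congr 1
    rw [ENNReal.toReal_sub_of_le (ENNReal.ofReal_le_one.2 hp1) (by simp),
      ENNReal.toReal_ofReal hp0, ENNReal.toReal_one]
  rw [h1, h0]; ring

end AuxLemmas

/-- Two-sided Bernstein-type tail bound for the log-likelihood of independent
Bernoulli variables: if `X i ~ Ber(p i)` independently with `p i ∈ [0,1]` and
`Y i = (X i - p i) * log (p i)` (Lean's `Real.log 0 = 0` encodes `0 * log 0 = 0`),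
then for all `t > 0`,
`P(|∑ i, Y i| ≥ t) ≤ 2 * exp(-t² / (2(n + t)))`. -/
theorem bernoulli_loglik_two_sided_tail
    {Ω : Type*} [MeasurableSpace Ω] (μ : Measure Ω) [IsProbabilityMeasure μ]
    (n : ℕ) (X : Fin n → Ω → ℝ) (p : Fin n → ℝ)
    (hp : ∀ i, p i ∈ Set.Icc (0 : ℝ) 1)
    (hmeas : ∀ i, Measurable (X i))
    (hval : ∀ i, ∀ ω, X i ω = 0 ∨ X i ω = 1)
    (hdist : ∀ i, μ {ω | X i ω = 1} = ENNReal.ofReal (p i))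
    (hindep : iIndepFun X μ)
    (t : ℝ) (ht : 0 < t) :
    μ {ω | t ≤ |∑ i, (X i ω - p i) * Real.log (p i)|}
      ≤ ENNReal.ofReal (2 * Real.exp (-t ^ 2 / (2 * ((n : ℝ) + t)))) := by
  classical
  rcases Nat.eq_zero_or_pos n with hn | hn
  · subst hn
    have hempty : {ω : Ω | t ≤ |∑ i : Fin 0, (X i ω - p i) * Real.log (p i)|} = ∅ := by
      ext ω
      simp only [Finset.univ_eq_empty, Finset.sum_empty, abs_zero, Set.mem_setOf_eq,
        Set.mem_empty_iff_false, iff_false, not_le]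
      exact ht
    rw [hempty, measure_empty]
    positivity
  -- main case
  have hn1 : (1:ℝ) ≤ (n:ℝ) := by exact_mod_cast hn
  have hnt : (0:ℝ) < (n:ℝ) + t := by linarith
  set l : ℝ := t / ((n:ℝ) + t) with hl_def
  have hl0 : 0 < l := div_pos ht hnt
  have hl1 : l < 1 := (div_lt_one hnt).2 (by linarith)
  have h1l : (0:ℝ) < 1 - l := by linarith
  set C : ℝ := l ^ 2 / (2 * (1 - l)) with hC_def
  set Y : Fin n → Ω → ℝ := fun i ω => (X i ω - p i) * Real.log (p i) with hY_def
  set Z : Fin n → Ω → ℝ := fun i ω => -((X i ω - p i) * Real.log (p i)) with hZ_def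
  have hYmeas : ∀ i, Measurable (Y i) := fun i => ((hmeas i).sub_const _).mul_const _
  have hZmeas : ∀ i, Measurable (Z i) := fun i => (hYmeas i).neg
  have hindepY : iIndepFun Y μ :=
    hindep.comp (fun i x => (x - p i) * Real.log (p i))
      (fun i => (measurable_id.sub_const _).mul_const _)
  have hindepZ : iIndepFun Z μ :=
    hindep.comp (fun i x => -((x - p i) * Real.log (p i)))
      (fun i => ((measurable_id.sub_const _).mul_const _).neg)
  -- integrability
  have hYint : ∀ i ∈ Finset.univ, Integrable (fun ω => exp (l * Y i ω)) μ := fun i _ =>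
    bern_comp_integrable μ (X i) (hmeas i) (hval i)
      (fun x => exp (l * ((x - p i) * Real.log (p i)))) (by fun_prop)
  have hZint : ∀ i ∈ Finset.univ, Integrable (fun ω => exp (l * Z i ω)) μ := fun i _ =>
    bern_comp_integrable μ (X i) (hmeas i) (hval i)
      (fun x => exp (l * (-((x - p i) * Real.log (p i))))) (by fun_prop)
  -- per-variable mgf bounds
  have hmgfY : ∀ i, mgf (Y i) μ l ≤ exp C := by
    intro i
    have heq : mgf (Y i) μ l
        = (1 - p i) * exp (l * ((0 - p i) * Real.log (p i)))
          + p i * exp (l * ((1 - p i) * Real.log (p i))) :=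
      bern_integral μ (X i) (p i) (hp i).1 (hp i).2 (hmeas i) (hval i) (hdist i)
        (fun x => exp (l * ((x - p i) * Real.log (p i)))) (by fun_prop)
    rw [heq, hC_def]
    exact bern_mgf_plus hl0 hl1 (hp i).1 (hp i).2
  have hmgfZ : ∀ i, mgf (Z i) μ l ≤ exp C := by
    intro i
    have heq : mgf (Z i) μ l
        = (1 - p i) * exp (l * (-((0 - p i) * Real.log (p i))))
          + p i * exp (l * (-((1 - p i) * Real.log (p i)))) :=
      bern_integral μ (X i) (p i) (hp i).1 (hp i).2 (hmeas i) (hval i) (hdist i)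
        (fun x => exp (l * (-((x - p i) * Real.log (p i))))) (by fun_prop)
    rw [heq, hC_def]
    exact bern_mgf_minus hl0 hl1 (hp i).1 (hp i).2
  -- mgf of sums
  have hmgfsumY : mgf (∑ i, Y i) μ l ≤ exp ((n:ℝ) * C) := by
    rw [hindepY.mgf_sum hYmeas]
    calc ∏ i, mgf (Y i) μ l ≤ ∏ _i : Fin n, exp C :=
          Finset.prod_le_prod (fun i _ => mgf_nonneg) (fun i _ => hmgfY i)
      _ = exp ((n:ℝ) * C) := by
          rw [Finset.prod_const, ← Real.exp_nat_mul]
          simp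
  have hmgfsumZ : mgf (∑ i, Z i) μ l ≤ exp ((n:ℝ) * C) := by
    rw [hindepZ.mgf_sum hZmeas]
    calc ∏ i, mgf (Z i) μ l ≤ ∏ _i : Fin n, exp C :=
          Finset.prod_le_prod (fun i _ => mgf_nonneg) (fun i _ => hmgfZ i)
      _ = exp ((n:ℝ) * C) := by
          rw [Finset.prod_const, ← Real.exp_nat_mul]
          simp
  -- algebra
  have hn0 : (n:ℝ) ≠ 0 := by positivity
  have halg : -l * t + (n:ℝ) * C = -t ^ 2 / (2 * ((n:ℝ) + t)) := by
    rw [hC_def, hl_def]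
    have h1l' : 1 - t / ((n:ℝ) + t) = (n:ℝ) / ((n:ℝ) + t) := by
      field_simp
      ring
    rw [h1l']
    field_simp
    ring
  -- Chernoff for Y
  have hchernY : (μ {ω | t ≤ (∑ i, Y i) ω}).toReal ≤ exp (-t ^ 2 / (2 * ((n:ℝ) + t))) := by
    calc (μ {ω | t ≤ (∑ i, Y i) ω}).toReal
        ≤ exp (-l * t) * mgf (∑ i, Y i) μ l :=
          measure_ge_le_exp_mul_mgf t hl0.le (hindepY.integrable_exp_mul_sum hYmeas hYint)
      _ ≤ exp (-l * t) * exp ((n:ℝ) * C) := by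
          exact mul_le_mul_of_nonneg_left hmgfsumY (exp_pos _).le
      _ = exp (-t ^ 2 / (2 * ((n:ℝ) + t))) := by rw [← exp_add, halg]
  have hchernZ : (μ {ω | t ≤ (∑ i, Z i) ω}).toReal ≤ exp (-t ^ 2 / (2 * ((n:ℝ) + t))) := by
    calc (μ {ω | t ≤ (∑ i, Z i) ω}).toReal
        ≤ exp (-l * t) * mgf (∑ i, Z i) μ l :=
          measure_ge_le_exp_mul_mgf t hl0.le (hindepZ.integrable_exp_mul_sum hZmeas hZint)
      _ ≤ exp (-l * t) * exp ((n:ℝ) * C) := by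
          exact mul_le_mul_of_nonneg_left hmgfsumZ (exp_pos _).le
      _ = exp (-t ^ 2 / (2 * ((n:ℝ) + t))) := by rw [← exp_add, halg]
  -- combine
  have hsub : {ω | t ≤ |∑ i, (X i ω - p i) * Real.log (p i)|}
      ⊆ {ω | t ≤ (∑ i, Y i) ω} ∪ {ω | t ≤ (∑ i, Z i) ω} := by
    intro ω hω
    simp only [Set.mem_setOf_eq] at hω
    have hYω : (∑ i, Y i) ω = ∑ i, (X i ω - p i) * Real.log (p i) := by
      rw [Finset.sum_apply]
    have hZω : (∑ i, Z i) ω = -∑ i, (X i ω - p i) * Real.log (p i) := by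
      rw [Finset.sum_apply, ← Finset.sum_neg_distrib]
    rcases le_abs.mp hω with h | h
    · left; simp only [Set.mem_setOf_eq]; rw [hYω]; exact h
    · right; simp only [Set.mem_setOf_eq]; rw [hZω]; exact h
  have hE : (0:ℝ) ≤ exp (-t ^ 2 / (2 * ((n:ℝ) + t))) := (exp_pos _).le
  calc μ {ω | t ≤ |∑ i, (X i ω - p i) * Real.log (p i)|}
      ≤ μ ({ω | t ≤ (∑ i, Y i) ω} ∪ {ω | t ≤ (∑ i, Z i) ω}) := measure_mono hsub
    _ ≤ μ {ω | t ≤ (∑ i, Y i) ω} + μ {ω | t ≤ (∑ i, Z i) ω} := measure_union_le _ _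
    _ ≤ ENNReal.ofReal (exp (-t ^ 2 / (2 * ((n:ℝ) + t))))
        + ENNReal.ofReal (exp (-t ^ 2 / (2 * ((n:ℝ) + t)))) := by
        gcongr
        · rw [← ENNReal.ofReal_toReal (measure_ne_top μ _)]
          exact ENNReal.ofReal_le_ofReal hchernY
        · rw [← ENNReal.ofReal_toReal (measure_ne_top μ _)]
          exact ENNReal.ofReal_le_ofReal hchernZ
    _ = ENNReal.ofReal (2 * exp (-t ^ 2 / (2 * ((n:ℝ) + t)))) := by
        rw [← ENNReal.ofReal_add hE hE]
        congr 1
        ring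
end

section
/- Let X_1, …, X_n be independent Bernoulli random variables with parameters p_1, …, p_n ∈ [0,1], and set Y_i = (X_i − p_i)·log p_i (with the convention 0·log 0 = 0). Then for all t > 0, P( Σ_{i=1}^n Y_i ≤ −t ) ≤ exp( − t² / (2(n + t)) ). -/
open MeasureTheory ProbabilityTheory

open Real

/-- `L^k e^{-L} ≤ k^k e^{-k}` for `L ≥ 0`, `k ≥ 1`. -/
lemma aux_pow_exp (L : ℝ) (hL : 0 ≤ L) (k : ℕ) (hk : 1 ≤ k) :
    L ^ k * Real.exp (-L) ≤ (k : ℝ) ^ k * Real.exp (-(k : ℝ)) := by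
  rcases eq_or_lt_of_le hL with h0 | hL
  · rw [← h0, zero_pow (by omega), zero_mul]
    positivity
  · have hkpos : (0 : ℝ) < k := by exact_mod_cast (by omega : 0 < k)
    have hlog := Real.log_le_sub_one_of_pos (show (0:ℝ) < L / k by positivity)
    rw [Real.log_div hL.ne' hkpos.ne'] at hlog
    have hk' : (k:ℝ) * (L / k) = L := by field_simp
    have key : (k : ℝ) * Real.log L - L ≤ (k : ℝ) * Real.log k - k := by
      nlinarith [mul_le_mul_of_nonneg_left hlog hkpos.le]
    calc L ^ k * Real.exp (-L) = Real.exp ((k : ℝ) * Real.log L - L) := by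
          rw [Real.exp_sub, Real.exp_nat_mul, Real.exp_log hL, Real.exp_neg, div_eq_mul_inv]
      _ ≤ Real.exp ((k : ℝ) * Real.log k - k) := Real.exp_le_exp.2 key
      _ = (k : ℝ) ^ k * Real.exp (-(k : ℝ)) := by
          rw [Real.exp_sub, Real.exp_nat_mul, Real.exp_log hkpos, Real.exp_neg, div_eq_mul_inv]

/-- `(k^k + 1) e^{-k} ≤ k!/2` for `k ≥ 2`. -/
lemma aux_factorial (k : ℕ) (hk : 2 ≤ k) :
    ((k : ℝ) ^ k + 1) * Real.exp (-(k : ℝ)) ≤ (k.factorial : ℝ) / 2 := by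
  induction k, hk using Nat.le_induction with
  | base =>
    have h := Real.exp_one_gt_d9
    have h2 : Real.exp (-(2:ℝ)) * (Real.exp 1 * Real.exp 1) = 1 := by
      rw [← Real.exp_add, ← Real.exp_add]; norm_num
    have hpos : 0 < Real.exp (-(2:ℝ)) := Real.exp_pos _
    have he : (7.29 : ℝ) < Real.exp 1 * Real.exp 1 := by nlinarith
    have := mul_lt_mul_of_pos_left he hpos
    norm_num
    nlinarith
  | succ k hk ih =>
    have hkpos : (0 : ℝ) < k := by exact_mod_cast (by omega : 0 < k)
    have h1 : ((k : ℝ) + 1) ≤ k * Real.exp (1 / k) := by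
      have := Real.add_one_le_exp (1 / (k : ℝ))
      calc (k : ℝ) + 1 = k * (1 + 1/k) := by field_simp
        _ ≤ k * Real.exp (1/k) := by nlinarith
    have h2 : ((k : ℝ) + 1) ^ k ≤ (k : ℝ) ^ k * Real.exp 1 := by
      calc ((k : ℝ) + 1) ^ k ≤ (k * Real.exp (1/k)) ^ k :=
            pow_le_pow_left₀ (by positivity) h1 k
        _ = (k : ℝ) ^ k * Real.exp (1/k) ^ k := mul_pow _ _ _
        _ = (k : ℝ) ^ k * Real.exp 1 := by
            rw [← Real.exp_nat_mul]; congr 1; field_simp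
    have h3 : ((k : ℝ) + 1) ^ (k + 1) ≤ ((k:ℝ) + 1) * ((k : ℝ) ^ k * Real.exp 1) := by
      rw [pow_succ]
      calc ((k:ℝ)+1)^k * ((k:ℝ)+1) ≤ ((k : ℝ) ^ k * Real.exp 1) * ((k:ℝ)+1) :=
            mul_le_mul_of_nonneg_right h2 (by positivity)
        _ = ((k:ℝ) + 1) * ((k : ℝ) ^ k * Real.exp 1) := by ring
    have hfact : ((k+1).factorial : ℝ) = ((k:ℝ) + 1) * k.factorial := by
      rw [Nat.factorial_succ]; push_cast; ring
    have hexp : Real.exp (-((k:ℝ)+1)) = Real.exp (-(k:ℝ)) * Real.exp (-(1:ℝ)) := by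
      rw [← Real.exp_add]; ring_nf
    have hee : Real.exp (-(1:ℝ)) * Real.exp 1 = 1 := by rw [← Real.exp_add]; norm_num
    have he1 : Real.exp (-(1:ℝ)) ≤ 1 := by rw [Real.exp_le_one_iff]; norm_num
    have hepos : (0:ℝ) < Real.exp (-(k:ℝ)) := Real.exp_pos _
    have he1pos : (0:ℝ) < Real.exp (-(1:ℝ)) := Real.exp_pos _
    have h4 : ((k:ℝ)+1)^(k+1) * Real.exp (-(1:ℝ)) ≤ ((k:ℝ)+1) * (k:ℝ)^k := by
      calc ((k:ℝ)+1)^(k+1) * Real.exp (-(1:ℝ))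
          ≤ (((k:ℝ)+1) * ((k:ℝ)^k * Real.exp 1)) * Real.exp (-(1:ℝ)) :=
            mul_le_mul_of_nonneg_right h3 he1pos.le
        _ = ((k:ℝ)+1) * (k:ℝ)^k * (Real.exp (-(1:ℝ)) * Real.exp 1) := by ring
        _ = ((k:ℝ)+1) * (k:ℝ)^k := by rw [hee, mul_one]
    have hkey : (((k:ℝ)+1) ^ (k+1) + 1) * Real.exp (-(1:ℝ)) ≤ ((k:ℝ)+1) * ((k:ℝ)^k + 1) := by
      nlinarith [h4, he1, hkpos]
    have hcast : ((k + 1 : ℕ) : ℝ) = (k : ℝ) + 1 := by push_cast; ring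
    rw [hfact, hcast, hexp]
    calc (((k:ℝ)+1) ^ (k+1) + 1) * (Real.exp (-(k:ℝ)) * Real.exp (-(1:ℝ)))
        = ((((k:ℝ)+1) ^ (k+1) + 1) * Real.exp (-(1:ℝ))) * Real.exp (-(k:ℝ)) := by ring
      _ ≤ (((k:ℝ)+1) * ((k:ℝ)^k + 1)) * Real.exp (-(k:ℝ)) :=
          mul_le_mul_of_nonneg_right hkey hepos.le
      _ = ((k:ℝ)+1) * (((k:ℝ)^k + 1) * Real.exp (-(k:ℝ))) := by ring
      _ ≤ ((k:ℝ)+1) * ((k.factorial : ℝ) / 2) :=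
          mul_le_mul_of_nonneg_left ih (by positivity)
      _ = ((k:ℝ)+1) * (k.factorial : ℝ) / 2 := by ring

/-- Single Bernoulli MGF bound. -/
lemma aux_mgf_bound (p l : ℝ) (hp0 : 0 ≤ p) (hp1 : p ≤ 1) (hl0 : 0 ≤ l) (hl1 : l < 1) :
    p * Real.exp (-l * ((1 - p) * Real.log p))
      + (1 - p) * Real.exp (-l * ((0 - p) * Real.log p))
      ≤ Real.exp (l ^ 2 / (2 * (1 - l))) := by
  have hl1' : (0:ℝ) < 1 - l := by linarith
  have hrhs0 : (0:ℝ) ≤ l ^ 2 / (2 * (1 - l)) := by positivity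
  have hone : (1:ℝ) ≤ Real.exp (l ^ 2 / (2 * (1 - l))) := by
    nlinarith [Real.add_one_le_exp (l ^ 2 / (2 * (1 - l)))]
  rcases eq_or_lt_of_le hp0 with h0 | hp0'
  · rw [← h0]
    simpa using hone
  rcases eq_or_lt_of_le hp1 with h1 | hp1'
  · rw [h1]
    simpa [Real.log_one] using hone
  -- main case 0 < p < 1
  set L : ℝ := -Real.log p with hL_def
  have hlogp : Real.log p = -L := by rw [hL_def, neg_neg]
  have hL0 : 0 ≤ L := by
    rw [hL_def, neg_nonneg]
    exact Real.log_nonpos hp0 hp1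
  have hpL : p = Real.exp (-L) := by rw [← hlogp, Real.exp_log hp0']
  have h1p : (0:ℝ) ≤ 1 - p := by linarith
  set a : ℝ := (1 - p) * L with ha_def
  set b : ℝ := p * L with hb_def
  have ha0 : 0 ≤ a := by rw [ha_def]; exact mul_nonneg h1p hL0
  have hb0 : 0 ≤ b := by rw [hb_def]; exact mul_nonneg hp0 hL0
  have haL : a ≤ L := by nlinarith
  have hbe : b ≤ Real.exp (-(1:ℝ)) := by
    have := aux_pow_exp L hL0 1 le_rfl
    simpa [hpL, hb_def, mul_comm] using this
  have e1 : -l * ((1 - p) * Real.log p) = l * a := by rw [hlogp]; ring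
  have e2 : -l * ((0 - p) * Real.log p) = -(l * b) := by rw [hlogp]; ring
  rw [e1, e2]
  have expt : ∀ x : ℝ, Real.exp x = ∑' n : ℕ, x ^ n / n.factorial := by
    intro x
    rw [Real.exp_eq_exp_ℝ, NormedSpace.exp_eq_tsum_div]
  set f : ℕ → ℝ := fun m =>
    p * ((l*a)^m / m.factorial) + (1-p) * ((-(l*b))^m / m.factorial) with hf_def
  have hsum1 : Summable (fun m : ℕ => (l*a)^m / (m.factorial : ℝ)) :=
    Real.summable_pow_div_factorial _
  have hsum2 : Summable (fun m : ℕ => (-(l*b))^m / (m.factorial : ℝ)) :=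
    Real.summable_pow_div_factorial _
  have hfs : Summable f := (hsum1.mul_left p).add (hsum2.mul_left (1-p))
  have hLHS : p * Real.exp (l * a) + (1 - p) * Real.exp (-(l * b)) = ∑' m, f m := by
    rw [hf_def, Summable.tsum_add (hsum1.mul_left p) (hsum2.mul_left (1-p)),
      tsum_mul_left, tsum_mul_left, ← expt, ← expt]
  rw [hLHS]
  have hfs1 : Summable (fun m => f (m + 1)) := (summable_nat_add_iff 1).2 hfs
  have hfs2 : Summable (fun m => f (m + 2)) := (summable_nat_add_iff 2).2 hfs
  have hsplit : ∑' m, f m = f 0 + (f 1 + ∑' m, f (m + 2)) := by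
    rw [Summable.tsum_eq_zero_add hfs]
    congr 1
    rw [Summable.tsum_eq_zero_add hfs1]
  have hf0 : f 0 = 1 := by simp [hf_def]
  have hf1 : f 1 = 0 := by
    simp only [hf_def, pow_one, Nat.factorial_one, Nat.cast_one, div_one]
    rw [ha_def, hb_def]; ring
  have htail : ∀ m : ℕ, f (m + 2) ≤ l ^ (m + 2) / 2 := by
    intro m
    set j := m + 2 with hj_def
    have hj2 : 2 ≤ j := by omega
    have hj1 : 1 ≤ j := by omega
    have hfac : (0:ℝ) < j.factorial := by exact_mod_cast j.factorial_pos
    have hlb : (0:ℝ) ≤ l * b := mul_nonneg hl0 hb0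
    have h1 : p * a ^ j ≤ (j:ℝ)^j * Real.exp (-(j:ℝ)) := by
      calc p * a ^ j ≤ p * L ^ j :=
            mul_le_mul_of_nonneg_left (pow_le_pow_left₀ ha0 haL j) hp0
        _ = L ^ j * Real.exp (-L) := by rw [hpL]; ring
        _ ≤ (j:ℝ)^j * Real.exp (-(j:ℝ)) := aux_pow_exp L hL0 j hj1
    have hbj : b ^ j ≤ Real.exp (-(j:ℝ)) := by
      calc b ^ j ≤ (Real.exp (-(1:ℝ)))^j := pow_le_pow_left₀ hb0 hbe j
        _ = Real.exp (-(j:ℝ)) := by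
            rw [← Real.exp_nat_mul]; congr 1; push_cast; ring
    have h2 : (1-p) * (-(l*b))^j ≤ l^j * Real.exp (-(j:ℝ)) := by
      have habs : (1-p) * (-(l*b))^j ≤ (l*b)^j := by
        calc (1-p) * (-(l*b))^j ≤ |(1-p) * (-(l*b))^j| := le_abs_self _
          _ = |1-p| * |(-(l*b))|^j := by rw [abs_mul, abs_pow]
          _ = (1-p) * (l*b)^j := by rw [abs_neg, abs_of_nonneg hlb, abs_of_nonneg h1p]
          _ ≤ 1 * (l*b)^j := mul_le_mul_of_nonneg_right (by linarith) (pow_nonneg hlb j)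
          _ = (l*b)^j := one_mul _
      calc (1-p) * (-(l*b))^j ≤ (l*b)^j := habs
        _ = l^j * b^j := mul_pow _ _ _
        _ ≤ l^j * Real.exp (-(j:ℝ)) := mul_le_mul_of_nonneg_left hbj (pow_nonneg hl0 j)
    have hnum : p * (l*a)^j + (1-p) * (-(l*b))^j ≤ l^j * ((j.factorial:ℝ)/2) := by
      calc p * (l*a)^j + (1-p) * (-(l*b))^j
          = l^j * (p * a^j) + (1-p) * (-(l*b))^j := by rw [mul_pow]; ring
        _ ≤ l^j * ((j:ℝ)^j * Real.exp (-(j:ℝ))) + l^j * Real.exp (-(j:ℝ)) := by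
            have := mul_le_mul_of_nonneg_left h1 (pow_nonneg hl0 j)
            linarith [h2]
        _ = l^j * (((j:ℝ)^j + 1) * Real.exp (-(j:ℝ))) := by ring
        _ ≤ l^j * ((j.factorial:ℝ)/2) :=
            mul_le_mul_of_nonneg_left (aux_factorial j hj2) (pow_nonneg hl0 j)
    have hfj : f j = (p * (l*a)^j + (1-p) * (-(l*b))^j) / j.factorial := by
      show p * ((l*a)^j / j.factorial) + (1-p) * ((-(l*b))^j / j.factorial) = _
      ring
    rw [hfj, div_le_iff₀ hfac]
    calc p * (l*a)^j + (1-p) * (-(l*b))^j ≤ l^j * ((j.factorial:ℝ)/2) := hnum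
      _ = l ^ j / 2 * j.factorial := by ring
  have hgs : Summable (fun m : ℕ => l^(m+2)/2) := by
    have heq : (fun m : ℕ => l^(m+2)/2) = fun m : ℕ => l^m * (l^2/2) := by
      funext m; ring
    rw [heq]
    exact (summable_geometric_of_lt_one hl0 hl1).mul_right _
  have htsum_le : ∑' m, f (m+2) ≤ l^2/(2*(1-l)) := by
    calc ∑' m, f (m+2) ≤ ∑' m : ℕ, l^(m+2)/2 := Summable.tsum_le_tsum htail hfs2 hgs
      _ = ∑' m : ℕ, l^m * (l^2/2) := tsum_congr (fun m => by ring)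
      _ = (∑' m : ℕ, l^m) * (l^2/2) := tsum_mul_right
      _ = (1-l)⁻¹ * (l^2/2) := by rw [tsum_geometric_of_lt_one hl0 hl1]
      _ = l^2/(2*(1-l)) := by rw [inv_mul_eq_div, div_div]
  rw [hsplit, hf0, hf1]
  linarith [Real.add_one_le_exp (l^2/(2*(1-l))), htsum_le]

open MeasureTheory ProbabilityTheory

section Bern
variable {Ω : Type*} [MeasurableSpace Ω] {μ : Measure Ω} [IsProbabilityMeasure μ]

lemma aux_indicator_rep (X : Ω → ℝ) (q s : ℝ)
    (hval : ∀ ω, X ω = 0 ∨ X ω = 1) :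
    (fun ω => Real.exp (s * ((X ω - q) * Real.log q)))
      = fun ω => ({ω | X ω = 1}.indicator (fun _ => Real.exp (s * ((1 - q) * Real.log q))) ω
        + {ω | X ω = 1}ᶜ.indicator (fun _ => Real.exp (s * ((0 - q) * Real.log q))) ω) := by
  funext ω
  rcases hval ω with h | h
  · have hω : ω ∉ {ω | X ω = 1} := by simp [Set.mem_setOf_eq, h]
    simp [Set.indicator_of_notMem hω, Set.indicator_of_mem (Set.mem_compl hω), h]
  · have hω : ω ∈ {ω | X ω = 1} := h
    simp [Set.indicator_of_mem hω, Set.indicator_of_notMem (by simp [hω] : ω ∉ {ω | X ω = 1}ᶜ), h]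

lemma aux_integrable (X : Ω → ℝ) (q s : ℝ) (hX : Measurable X)
    (hval : ∀ ω, X ω = 0 ∨ X ω = 1) :
    Integrable (fun ω => Real.exp (s * ((X ω - q) * Real.log q))) μ := by
  rw [aux_indicator_rep X q s hval]
  have hA : MeasurableSet {ω | X ω = 1} := hX (measurableSet_singleton 1)
  exact ((integrable_const _).indicator hA).add ((integrable_const _).indicator hA.compl)

lemma aux_mgf_eval (X : Ω → ℝ) (q s : ℝ) (hq0 : 0 ≤ q) (hq1 : q ≤ 1) (hX : Measurable X)
    (hval : ∀ ω, X ω = 0 ∨ X ω = 1) (hdist : μ {ω | X ω = 1} = ENNReal.ofReal q) :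
    mgf (fun ω => (X ω - q) * Real.log q) μ s
      = q * Real.exp (s * ((1 - q) * Real.log q))
        + (1 - q) * Real.exp (s * ((0 - q) * Real.log q)) := by
  have hA : MeasurableSet {ω | X ω = 1} := hX (measurableSet_singleton 1)
  have hcompl : μ {ω | X ω = 1}ᶜ = ENNReal.ofReal (1 - q) := by
    rw [prob_compl_eq_one_sub hA, hdist, ← ENNReal.ofReal_one,
      ← ENNReal.ofReal_sub 1 hq0]
  rw [mgf]
  show ∫ ω, Real.exp (s * ((X ω - q) * Real.log q)) ∂μ = _
  rw [aux_indicator_rep X q s hval]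
  rw [integral_add ((integrable_const _).indicator hA) ((integrable_const _).indicator hA.compl)]
  rw [integral_indicator_const _ hA, integral_indicator_const _ hA.compl, measureReal_def, measureReal_def, hdist, hcompl,
    ENNReal.toReal_ofReal hq0, ENNReal.toReal_ofReal (by linarith)]
  simp [smul_eq_mul]

end Bern

/-- Lower-tail Bernstein-type bound for the log-likelihood of independent
Bernoulli variables: if `X i ~ Ber(p i)` independently with `p i ∈ [0,1]` and
`Y i = (X i - p i) * log (p i)` (Lean's `Real.log 0 = 0` encodes `0 * log 0 = 0`),
then for all `t > 0`, `P(∑ i, Y i ≤ -t) ≤ exp(-t² / (2(n + t)))`. -/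
theorem bernoulli_loglik_lower_tail
    {Ω : Type*} [MeasurableSpace Ω] (μ : Measure Ω) [IsProbabilityMeasure μ]
    (n : ℕ) (X : Fin n → Ω → ℝ) (p : Fin n → ℝ)
    (hp : ∀ i, p i ∈ Set.Icc (0 : ℝ) 1)
    (hmeas : ∀ i, Measurable (X i))
    (hval : ∀ i, ∀ ω, X i ω = 0 ∨ X i ω = 1)
    (hdist : ∀ i, μ {ω | X i ω = 1} = ENNReal.ofReal (p i))
    (hindep : iIndepFun X μ)
    (t : ℝ) (ht : 0 < t) :
    μ {ω | ∑ i, (X i ω - p i) * Real.log (p i) ≤ -t}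
      ≤ ENNReal.ofReal (Real.exp (-t ^ 2 / (2 * ((n : ℝ) + t)))) := by
  rcases Nat.eq_zero_or_pos n with hn | hn
  · subst hn
    have : {ω : Ω | ∑ i : Fin 0, (X i ω - p i) * Real.log (p i) ≤ -t} = ∅ := by
      ext ω
      simp only [Finset.univ_eq_empty, Finset.sum_empty, Set.mem_setOf_eq,
        Set.mem_empty_iff_false, iff_false, not_le]
      linarith
    rw [this]
    simp
  -- setup
  set l : ℝ := t / (n + t) with hl_def
  have hnt : (0:ℝ) < (n:ℝ) + t := by
    have : (0:ℝ) < (n:ℝ) := by exact_mod_cast hn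
    linarith
  have hl0 : 0 ≤ l := by positivity
  have hl1 : l < 1 := by
    rw [hl_def, div_lt_one hnt]
    have : (0:ℝ) < (n:ℝ) := by exact_mod_cast hn
    linarith
  set Y : Fin n → Ω → ℝ := fun i ω => (X i ω - p i) * Real.log (p i) with hY_def
  have hYmeas : ∀ i, Measurable (Y i) := fun i =>
    ((hmeas i).sub_const (p i)).mul_const _
  have hYindep : iIndepFun Y μ :=
    hindep.comp (fun i x => (x - p i) * Real.log (p i))
      (fun i => (measurable_id.sub_const (p i)).mul_const _)
  have hYint : ∀ i, Integrable (fun ω => Real.exp ((-l) * Y i ω)) μ := by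
    intro i
    exact aux_integrable (μ := μ) (X i) (p i) (-l) (hmeas i) (hval i)
  have h_int_sum : Integrable (fun ω => Real.exp ((-l) * (∑ i, Y i) ω)) μ :=
    hYindep.integrable_exp_mul_sum hYmeas (fun i _ => hYint i)
  have hchernoff := measure_le_le_exp_mul_mgf (μ := μ) (X := ∑ i, Y i) (-t)
    (neg_nonpos.mpr hl0) h_int_sum
  have hmgf_sum : mgf (∑ i, Y i) μ (-l) = ∏ i, mgf (Y i) μ (-l) :=
    hYindep.mgf_sum hYmeas Finset.univ
  have hmgf_le : ∀ i, mgf (Y i) μ (-l) ≤ Real.exp (l ^ 2 / (2 * (1 - l))) := by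
    intro i
    have heval := aux_mgf_eval (μ := μ) (X i) (p i) (-l) (hp i).1 (hp i).2 (hmeas i)
      (hval i) (hdist i)
    have hbound := aux_mgf_bound (p i) l (hp i).1 (hp i).2 hl0 hl1
    show mgf (fun ω => (X i ω - p i) * Real.log (p i)) μ (-l) ≤ _
    calc mgf (fun ω => (X i ω - p i) * Real.log (p i)) μ (-l)
        = p i * Real.exp (-l * ((1 - p i) * Real.log (p i)))
          + (1 - p i) * Real.exp (-l * ((0 - p i) * Real.log (p i))) := heval
      _ ≤ Real.exp (l ^ 2 / (2 * (1 - l))) := hbound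
  have hprod_le : ∏ i, mgf (Y i) μ (-l) ≤ Real.exp ((n:ℝ) * (l ^ 2 / (2 * (1 - l)))) := by
    calc ∏ i, mgf (Y i) μ (-l) ≤ ∏ _i : Fin n, Real.exp (l ^ 2 / (2 * (1 - l))) :=
          Finset.prod_le_prod (fun i _ => mgf_nonneg) (fun i _ => hmgf_le i)
      _ = Real.exp (l ^ 2 / (2 * (1 - l))) ^ n := by
          rw [Finset.prod_const, Finset.card_univ, Fintype.card_fin]
      _ = Real.exp ((n:ℝ) * (l ^ 2 / (2 * (1 - l)))) := by
          rw [← Real.exp_nat_mul]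
  have harith : -(-l) * (-t) + (n:ℝ) * (l ^ 2 / (2 * (1 - l))) = -t ^ 2 / (2 * ((n : ℝ) + t)) := by
    rw [hl_def]
    have h1l : 1 - t / ((n:ℝ) + t) = (n:ℝ) / ((n:ℝ) + t) := by field_simp; ring
    rw [h1l]
    have hnpos : (0:ℝ) < (n:ℝ) := by exact_mod_cast hn
    field_simp
    ring
  have hfinal : (μ {ω | (∑ i, Y i) ω ≤ -t}).toReal
      ≤ Real.exp (-t ^ 2 / (2 * ((n : ℝ) + t))) := by
    calc (μ {ω | (∑ i, Y i) ω ≤ -t}).toReal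
        ≤ Real.exp (-(-l) * (-t)) * mgf (∑ i, Y i) μ (-l) := hchernoff
      _ ≤ Real.exp (-(-l) * (-t)) * Real.exp ((n:ℝ) * (l ^ 2 / (2 * (1 - l)))) := by
          rw [hmgf_sum]
          exact mul_le_mul_of_nonneg_left hprod_le (Real.exp_pos _).le
      _ = Real.exp (-(-l) * (-t) + (n:ℝ) * (l ^ 2 / (2 * (1 - l)))) := (Real.exp_add _ _).symm
      _ = Real.exp (-t ^ 2 / (2 * ((n : ℝ) + t))) := by rw [harith]
  have hset : {ω | ∑ i, (X i ω - p i) * Real.log (p i) ≤ -t}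
      = {ω | (∑ i, Y i) ω ≤ -t} := by
    ext ω
    simp [hY_def, Finset.sum_apply]
  rw [hset]
  calc μ {ω | (∑ i, Y i) ω ≤ -t}
      = ENNReal.ofReal ((μ {ω | (∑ i, Y i) ω ≤ -t}).toReal) :=
        (ENNReal.ofReal_toReal (measure_ne_top μ _)).symm
    _ ≤ ENNReal.ofReal (Real.exp (-t ^ 2 / (2 * ((n : ℝ) + t)))) :=
        ENNReal.ofReal_le_ofReal hfinal
end

section
/- Let X_1, …, X_n be independent Bernoulli random variables with parameters p_1, …, p_n ∈ [0,1], and set Y_i = (X_i − p_i)·log p_i (with the convention 0·log 0 = 0). Then for all t > 0, P( Σ_{i=1}^n Y_i ≥ t ) ≤ exp( − t² / (2(n + t)) ). -/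
open MeasureTheory ProbabilityTheory



lemma aux_exp_le_quad {x : ℝ} (hx : x ≤ 0) : Real.exp x ≤ 1 + x + x ^ 2 / 2 := by
  set y := -x with hy
  have hy0 : 0 ≤ y := by linarith
  have h1 : 1 + y + y ^ 2 / 2 ≤ Real.exp y := by
    have h := Real.sum_le_exp_of_nonneg hy0 3
    have : ∑ i ∈ Finset.range 3, y ^ i / i.factorial = 1 + y + y ^ 2 / 2 := by
      simp [Finset.sum_range_succ, Nat.factorial]
    linarith [this ▸ h]
  have h2 : Real.exp x * Real.exp y = 1 := by
    rw [← Real.exp_add]; simp [hy]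
  have h3 := Real.exp_pos x
  have h4 := Real.exp_pos y
  have hq : (0:ℝ) ≤ 1 - y + y ^ 2 / 2 := by nlinarith [sq_nonneg (y - 1)]
  have key : (1 - y + y ^ 2 / 2) * Real.exp y ≥ (1 - y + y ^ 2 / 2) * (1 + y + y ^ 2 / 2) :=
    mul_le_mul_of_nonneg_left h1 hq
  have hx' : x = -y := by rw [hy]; ring
  have goal' : Real.exp x ≤ 1 - y + y ^ 2 / 2 := by nlinarith [sq_nonneg (y * y)]
  calc Real.exp x ≤ 1 - y + y ^ 2 / 2 := goal'
    _ = 1 + x + x ^ 2 / 2 := by rw [hx']; ring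


lemma aux_log_le_div_e {u : ℝ} (hu : 0 < u) : Real.log u ≤ u / Real.exp 1 := by
  have h1 : 0 < u / Real.exp 1 := div_pos hu (Real.exp_pos 1)
  have h2 := Real.log_le_sub_one_of_pos h1
  rw [Real.log_div hu.ne' (Real.exp_ne_zero 1), Real.log_exp] at h2
  linarith

lemma aux_neg_mul_log {x : ℝ} (hx : 0 < x) : x * (-Real.log x) ≤ (Real.exp 1)⁻¹ := by
  have h1 : -Real.log x = Real.log x⁻¹ := (Real.log_inv x).symm
  have h2 : Real.log x⁻¹ ≤ x⁻¹ / Real.exp 1 := aux_log_le_div_e (inv_pos.mpr hx)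
  calc x * (-Real.log x) ≤ x * (x⁻¹ / Real.exp 1) := by
        rw [h1]; exact mul_le_mul_of_nonneg_left h2 hx.le
    _ = (Real.exp 1)⁻¹ := by field_simp

lemma aux_var_bound {x : ℝ} (hx0 : 0 < x) (hx1 : x ≤ 1) :
    x * Real.log x ^ 2 ≤ 4 / Real.exp 1 ^ 2 := by
  set s := Real.sqrt x with hs
  have hs0 : 0 < s := Real.sqrt_pos.mpr hx0
  have hs1 : s ≤ 1 := by
    rw [hs, show (1:ℝ) = Real.sqrt 1 by simp]; exact Real.sqrt_le_sqrt hx1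
  have hsq : s ^ 2 = x := Real.sq_sqrt hx0.le
  have hlog : Real.log x = 2 * Real.log s := by
    rw [← hsq, Real.log_pow]; push_cast; ring
  have h1 : 0 ≤ s * (-Real.log s) := by
    have : Real.log s ≤ 0 := Real.log_nonpos hs0.le hs1
    nlinarith
  have h2 : s * (-Real.log s) ≤ (Real.exp 1)⁻¹ := aux_neg_mul_log hs0
  have h3 : (s * (-Real.log s)) ^ 2 ≤ ((Real.exp 1)⁻¹) ^ 2 := by
    apply pow_le_pow_left₀ h1 h2
  have he : (0:ℝ) < Real.exp 1 := Real.exp_pos 1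
  calc x * Real.log x ^ 2 = 4 * (s * (-Real.log s)) ^ 2 := by
        rw [hlog, ← hsq]; ring
    _ ≤ 4 * ((Real.exp 1)⁻¹) ^ 2 := by linarith
    _ = 4 / Real.exp 1 ^ 2 := by field_simp

set_option maxHeartbeats 1000000 in
lemma aux_two_point {p l : ℝ} (hp0 : 0 ≤ p) (hp1 : p ≤ 1) (hl0 : 0 ≤ l) (hl1 : l < 1) :
    p * Real.exp (l * ((1 - p) * Real.log p)) + (1 - p) * Real.exp (l * (-p * Real.log p))
      ≤ Real.exp (l ^ 2 / (2 * (1 - l))) := by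
  have hrhs : (1:ℝ) ≤ Real.exp (l ^ 2 / (2 * (1 - l))) := by
    apply Real.one_le_exp
    have h : (0:ℝ) < 1 - l := by linarith
    positivity
  rcases eq_or_lt_of_le hp0 with h0 | h0
  · rw [← h0]; simpa using hrhs
  rcases eq_or_lt_of_le hp1 with h1 | h1
  · rw [h1]; simpa using hrhs
  have hL : Real.log p < 0 := Real.log_neg h0 h1
  set L := Real.log p with hLdef
  set a := l * ((1 - p) * L) with ha
  set b := l * (-p * L) with hb
  have hane : a ≤ 0 := by
    have h : (1 - p) * L ≤ 0 := mul_nonpos_of_nonneg_of_nonpos (by linarith) hL.le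
    exact mul_nonpos_of_nonneg_of_nonpos hl0 h
  have hpnl : p * (-L) ≤ (Real.exp 1)⁻¹ := aux_neg_mul_log h0
  have hie : (Real.exp 1)⁻¹ ≤ 1 := by
    rw [inv_le_one_iff₀]; right; exact Real.one_le_exp zero_le_one
  have hb0 : 0 ≤ b := by nlinarith
  have hb1 : b ≤ 1 := by nlinarith
  have hexp_a : Real.exp a ≤ 1 + a + a ^ 2 / 2 := aux_exp_le_quad hane
  have hexp_b : Real.exp b ≤ 1 + b + b ^ 2 * (3 / 4) := by
    have h := Real.exp_bound' hb0 hb1 (n := 2) (by norm_num)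
    have hs : ∑ m ∈ Finset.range 2, b ^ m / m.factorial = 1 + b := by
      simp [Finset.sum_range_succ, Nat.factorial]
    rw [hs] at h
    have : b ^ 2 * (2 + 1) / ((2:ℕ).factorial * 2) = b ^ 2 * (3 / 4) := by
      norm_num [Nat.factorial]; ring
    push_cast at h
    nlinarith [sq_nonneg b]
  have hvb : p * L ^ 2 ≤ 4 / Real.exp 1 ^ 2 := aux_var_bound h0 hp1
  have he2 : (6:ℝ) < Real.exp 1 ^ 2 := by
    have := Real.exp_one_gt_d9; nlinarith
  have hepos : (0:ℝ) < Real.exp 1 ^ 2 := by positivity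
  have hcoeff : p * (a ^ 2 / 2) + (1 - p) * (b ^ 2 * (3 / 4)) ≤ l ^ 2 / 2 := by
    have hA : p * (a ^ 2 / 2) + (1 - p) * (b ^ 2 * (3 / 4))
        ≤ (3 / 4) * (p * a ^ 2 + (1 - p) * b ^ 2) := by
      nlinarith [sq_nonneg a, sq_nonneg b]
    have hB : p * a ^ 2 + (1 - p) * b ^ 2 = l ^ 2 * (p * (1 - p) * L ^ 2) := by
      rw [ha, hb]; ring
    have hC : p * (1 - p) * L ^ 2 ≤ p * L ^ 2 := by nlinarith [sq_nonneg (p * L)]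
    have hE : (3 / 4 : ℝ) * (l ^ 2 * (4 / Real.exp 1 ^ 2)) ≤ l ^ 2 / 2 := by
      have heq : (3 / 4 : ℝ) * (l ^ 2 * (4 / Real.exp 1 ^ 2)) = 3 * l ^ 2 / Real.exp 1 ^ 2 := by
        ring
      rw [heq, div_le_div_iff₀ hepos (by norm_num : (0:ℝ) < 2)]
      nlinarith [sq_nonneg l]
    have hG : (3 / 4 : ℝ) * (l ^ 2 * (p * (1 - p) * L ^ 2))
        ≤ (3 / 4 : ℝ) * (l ^ 2 * (4 / Real.exp 1 ^ 2)) := by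
      gcongr
      exact hC.trans hvb
    rw [hB] at hA
    linarith
  have hmean : p * a + (1 - p) * b = 0 := by rw [ha, hb]; ring
  have hstep : p * Real.exp a + (1 - p) * Real.exp b ≤ 1 + l ^ 2 / 2 := by
    have h1 : p * Real.exp a ≤ p * (1 + a + a ^ 2 / 2) :=
      mul_le_mul_of_nonneg_left hexp_a hp0
    have h2 : (1 - p) * Real.exp b ≤ (1 - p) * (1 + b + b ^ 2 * (3 / 4)) :=
      mul_le_mul_of_nonneg_left hexp_b (by linarith)
    nlinarith
  have hmono : 1 + l ^ 2 / 2 ≤ Real.exp (l ^ 2 / (2 * (1 - l))) := by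
    have h1 : l ^ 2 / 2 ≤ l ^ 2 / (2 * (1 - l)) := by
      apply div_le_div_of_nonneg_left (sq_nonneg l) (by linarith) (by nlinarith)
    have h2 := Real.add_one_le_exp (l ^ 2 / (2 * (1 - l)))
    linarith
  linarith


lemma aux_mgf_eq {Ω : Type*} [MeasurableSpace Ω] (μ : Measure Ω) [IsProbabilityMeasure μ]
    (Xi : Ω → ℝ) (q lam : ℝ) (hq0 : 0 ≤ q)
    (hm : Measurable Xi) (hv : ∀ ω, Xi ω = 0 ∨ Xi ω = 1)
    (hd : μ {ω | Xi ω = 1} = ENNReal.ofReal q) :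
    mgf (fun ω => (Xi ω - q) * Real.log q) μ lam
      = q * Real.exp (lam * ((1 - q) * Real.log q))
        + (1 - q) * Real.exp (lam * (-q * Real.log q)) := by
  set c1 := Real.exp (lam * ((1 - q) * Real.log q)) with hc1
  set c2 := Real.exp (lam * (-q * Real.log q)) with hc2
  have hA : MeasurableSet {ω | Xi ω = 1} := hm (measurableSet_singleton 1)
  have hfun : (fun ω => Real.exp (lam * ((Xi ω - q) * Real.log q)))
      = fun ω => Set.indicator {ω | Xi ω = 1} (fun _ => c1 - c2) ω + c2 := by
    funext ω
    rcases hv ω with h | h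
    · have hnot : ω ∉ {ω | Xi ω = 1} := by simp [h]
      rw [Set.indicator_of_notMem hnot, h]
      rw [show lam * ((0 - q) * Real.log q) = lam * (-q * Real.log q) by ring]
      rw [← hc2, zero_add]
    · have hmem : ω ∈ {ω | Xi ω = 1} := h
      rw [Set.indicator_of_mem hmem, h]
      rw [show lam * ((1 - q) * Real.log q) = lam * ((1 - q) * Real.log q) from rfl]
      simp only [hc1, hc2]; ring_nf
  rw [mgf, hfun, integral_add ((integrable_const (c1 - c2)).indicator hA) (integrable_const c2),
    integral_indicator_const _ hA, integral_const, measureReal_def, hd,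
    ENNReal.toReal_ofReal hq0]
  simp [smul_eq_mul]
  ring


set_option maxHeartbeats 1000000 in
/-- Upper-tail Bernstein-type bound for the log-likelihood of independent
Bernoulli variables: if `X i ~ Ber(p i)` independently with `p i ∈ [0,1]` and
`Y i = (X i - p i) * log (p i)` (Lean's `Real.log 0 = 0` encodes `0 * log 0 = 0`),
then for all `t > 0`, `P(∑ i, Y i ≥ t) ≤ exp(-t² / (2(n + t)))`. -/
theorem bernoulli_loglik_upper_tail
    {Ω : Type*} [MeasurableSpace Ω] (μ : Measure Ω) [IsProbabilityMeasure μ]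
    (n : ℕ) (X : Fin n → Ω → ℝ) (p : Fin n → ℝ)
    (hp : ∀ i, p i ∈ Set.Icc (0 : ℝ) 1)
    (hmeas : ∀ i, Measurable (X i))
    (hval : ∀ i, ∀ ω, X i ω = 0 ∨ X i ω = 1)
    (hdist : ∀ i, μ {ω | X i ω = 1} = ENNReal.ofReal (p i))
    (hindep : iIndepFun X μ)
    (t : ℝ) (ht : 0 < t) :
    μ {ω | t ≤ ∑ i, (X i ω - p i) * Real.log (p i)}
      ≤ ENNReal.ofReal (Real.exp (-t ^ 2 / (2 * ((n : ℝ) + t)))) := by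
  rcases Nat.eq_zero_or_pos n with hn | hn
  · subst hn
    have hset : {ω | t ≤ ∑ i : Fin 0, (X i ω - p i) * Real.log (p i)} = (∅ : Set Ω) := by
      ext ω; simp; linarith
    rw [hset]
    simp
  · set Y : Fin n → Ω → ℝ := fun i ω => (X i ω - p i) * Real.log (p i) with hYdef
    set lam := t / ((n : ℝ) + t) with hlam
    have hnt : (0:ℝ) < (n:ℝ) + t := by positivity
    have hn1 : (1:ℝ) ≤ (n:ℝ) := by exact_mod_cast hn
    have hlam0 : 0 < lam := div_pos ht hnt
    have hlam1 : lam < 1 := by rw [hlam, div_lt_one hnt]; linarith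
    have hYmeas : ∀ i, Measurable (Y i) := fun i =>
      ((hmeas i).sub measurable_const).mul_const _
    have hYindep : iIndepFun Y μ :=
      hindep.comp (fun i x => (x - p i) * Real.log (p i))
        (fun i => (measurable_id.sub measurable_const).mul measurable_const)
    have hYbdd : ∀ i ω, Y i ω ≤ |Real.log (p i)| := by
      intro i ω
      have h1 : |X i ω - p i| ≤ 1 := by
        rw [abs_le]
        rcases hval i ω with h | h <;> rw [h] <;>
          exact ⟨by linarith [(hp i).2], by linarith [(hp i).1]⟩
      calc Y i ω ≤ |Y i ω| := le_abs_self _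
        _ = |X i ω - p i| * |Real.log (p i)| := abs_mul _ _
        _ ≤ 1 * |Real.log (p i)| := mul_le_mul_of_nonneg_right h1 (abs_nonneg _)
        _ = |Real.log (p i)| := one_mul _
    set M := ∑ i, |Real.log (p i)| with hM
    have hSfun : (∑ i, Y i) = fun ω => ∑ i, Y i ω := by
      funext ω; simp [Finset.sum_apply]
    have h_int : Integrable (fun ω => Real.exp (lam * ∑ i, Y i ω)) μ := by
      apply Integrable.mono' (integrable_const (Real.exp (lam * M)))
      · exact ((Finset.univ.measurable_sum fun i _ =>
          hYmeas i).const_mul lam).exp.aestronglyMeasurable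
      · apply Filter.Eventually.of_forall
        intro ω
        rw [Real.norm_eq_abs, abs_of_pos (Real.exp_pos _), Real.exp_le_exp]
        apply mul_le_mul_of_nonneg_left _ hlam0.le
        exact Finset.sum_le_sum fun i _ => hYbdd i ω
    have hcher := measure_ge_le_exp_mul_mgf (μ := μ) (X := fun ω => ∑ i, Y i ω)
      (t := lam) t hlam0.le h_int
    have hprod : mgf (fun ω => ∑ i, Y i ω) μ lam = ∏ i, mgf (Y i) μ lam := by
      rw [← hSfun]; exact hYindep.mgf_sum hYmeas Finset.univ
    have hper : ∀ i, mgf (Y i) μ lam ≤ Real.exp (lam ^ 2 / (2 * (1 - lam))) := by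
      intro i
      rw [show Y i = fun ω => (X i ω - p i) * Real.log (p i) from rfl,
        aux_mgf_eq μ (X i) (p i) lam (hp i).1 (hmeas i) (hval i) (hdist i)]
      exact aux_two_point (hp i).1 (hp i).2 hlam0.le hlam1
    have hprodle : ∏ i, mgf (Y i) μ lam ≤ Real.exp (lam ^ 2 / (2 * (1 - lam))) ^ n :=
      calc ∏ i, mgf (Y i) μ lam
          ≤ ∏ _i : Fin n, Real.exp (lam ^ 2 / (2 * (1 - lam))) :=
            Finset.prod_le_prod (fun i _ => mgf_nonneg) (fun i _ => hper i)
        _ = Real.exp (lam ^ 2 / (2 * (1 - lam))) ^ n := by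
            rw [Finset.prod_const, Finset.card_univ, Fintype.card_fin]
    have hfinal : Real.exp (-lam * t) * Real.exp (lam ^ 2 / (2 * (1 - lam))) ^ n
        = Real.exp (-t ^ 2 / (2 * ((n:ℝ) + t))) := by
      rw [← Real.exp_nat_mul, ← Real.exp_add]
      congr 1
      have h1 : 1 - lam = (n:ℝ) / ((n:ℝ) + t) := by
        rw [hlam]; field_simp; ring
      rw [hlam, h1]
      have hnpos : (0:ℝ) < (n:ℝ) := by linarith
      field_simp
      ring
    rw [ENNReal.le_ofReal_iff_toReal_le (measure_ne_top μ _) (Real.exp_nonneg _)]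
    have hsetEq : {ω | t ≤ ∑ i, (X i ω - p i) * Real.log (p i)}
        = {ω | t ≤ ∑ i, Y i ω} := by
      ext ω; simp only [Set.mem_setOf_eq, hYdef]
    rw [hsetEq]
    calc (μ {ω | t ≤ ∑ i, Y i ω}).toReal
        ≤ Real.exp (-lam * t) * mgf (fun ω => ∑ i, Y i ω) μ lam := hcher
      _ ≤ Real.exp (-lam * t) * Real.exp (lam ^ 2 / (2 * (1 - lam))) ^ n := by
          rw [hprod]; exact mul_le_mul_of_nonneg_left hprodle (Real.exp_nonneg _)
      _ = Real.exp (-t ^ 2 / (2 * ((n:ℝ) + t))) := hfinal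
end

section
/- Let X be a Bernoulli random variable with parameter p ∈ (0,1) and set Y = (X − p)·log p. Then for every integer m ≥ 3, | E[ Y^m ] | ≤ m! / 2. (Equivalently, Y satisfies Bernstein's moment condition |E[Y^m]| ≤ (1/2)·m!·σ²·b^{m−2} with σ² = 1 and b = 1, uniformly in p.) -/
open MeasureTheory

lemma aux_te (t : ℝ) (ht : 0 ≤ t) (m : ℕ) (hm : 1 ≤ m) :
    t ^ m * Real.exp (-t) ≤ ((m : ℝ) / Real.exp 1) ^ m := by
  have hm0 : (0:ℝ) < m := by exact_mod_cast Nat.pos_of_ne_zero (by omega)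
  have he : (0:ℝ) < Real.exp 1 := Real.exp_pos 1
  have hexp : (0:ℝ) < Real.exp (t / m) := Real.exp_pos _
  have h2 : t / m ≤ Real.exp (t / m - 1) := by
    have := Real.add_one_le_exp (t / m - 1); linarith
  have h1 : t * Real.exp (-(t / m)) ≤ (m : ℝ) / Real.exp 1 := by
    have h3 : t * Real.exp 1 ≤ Real.exp (t / m) * m := by
      rw [Real.exp_sub, div_le_div_iff₀ hm0 he] at h2
      linarith
    have heq : t * Real.exp (-(t / m)) = t / Real.exp (t / m) := by
      rw [Real.exp_neg]; ring
    rw [heq, div_le_div_iff₀ hexp he]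
    linarith
  have hb : 0 ≤ t * Real.exp (-(t / m)) := by positivity
  calc t ^ m * Real.exp (-t) = (t * Real.exp (-(t / m))) ^ m := by
        rw [mul_pow, ← Real.exp_nat_mul]
        congr 2
        field_simp
      _ ≤ ((m : ℝ) / Real.exp 1) ^ m := pow_le_pow_left₀ hb h1 m

lemma aux_fact_s4 (m : ℕ) (hm : 3 ≤ m) :
    4 * ((m : ℝ) / Real.exp 1) ^ m ≤ (m.factorial : ℝ) := by
  induction m, hm using Nat.le_induction with
  | base =>
      have h : (2.7182818283:ℝ) ≤ Real.exp 1 := Real.exp_one_gt_d9.le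
      have he : (0:ℝ) < Real.exp 1 := Real.exp_pos 1
      have h3 : (18:ℝ) ≤ Real.exp 1 ^ 3 := by
        have h2 : (2.7182818283:ℝ) ^ 3 ≤ Real.exp 1 ^ 3 := pow_le_pow_left₀ (by norm_num) h 3
        have h4 : (18:ℝ) ≤ (2.7182818283:ℝ) ^ 3 := by norm_num
        linarith
      norm_num [Nat.factorial]
      rw [div_pow, show ((3:ℝ)) ^ 3 = 27 by norm_num,
        show (4:ℝ) * (27 / Real.exp 1 ^ 3) = 108 / Real.exp 1 ^ 3 by ring,
        div_le_iff₀ (by positivity)]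
      linarith
  | succ n hn ih =>
      have he : (0:ℝ) < Real.exp 1 := Real.exp_pos 1
      have hn0 : (0:ℝ) < n := by exact_mod_cast Nat.pos_of_ne_zero (by omega)
      have hkey : ((n:ℝ) + 1) ^ (n+1) / Real.exp 1 ≤ ((n:ℝ)+1) * (n:ℝ)^n := by
        have h1 : (1 + 1/(n:ℝ)) ^ n ≤ Real.exp 1 := by
          have := Real.add_one_le_exp (1/(n:ℝ))
          calc (1 + 1/(n:ℝ)) ^ n ≤ (Real.exp (1/(n:ℝ))) ^ n := by
                apply pow_le_pow_left₀ (by positivity) (by linarith)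
            _ = Real.exp 1 := by
                rw [← Real.exp_nat_mul]; congr 1; field_simp
        have h2 : ((n:ℝ)+1)^n ≤ Real.exp 1 * (n:ℝ)^n := by
          have heq : ((n:ℝ)+1)^n = (1 + 1/(n:ℝ))^n * (n:ℝ)^n := by
            rw [← mul_pow]; congr 1; field_simp
          rw [heq]
          exact mul_le_mul_of_nonneg_right h1 (by positivity)
        rw [div_le_iff₀ he, pow_succ]
        calc ((n:ℝ)+1)^n * ((n:ℝ)+1) ≤ Real.exp 1 * (n:ℝ)^n * ((n:ℝ)+1) :=
              mul_le_mul_of_nonneg_right h2 (by linarith)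
          _ = ((n:ℝ)+1) * (n:ℝ)^n * Real.exp 1 := by ring
      have hmain : 4 * (((n:ℝ)+1) / Real.exp 1) ^ (n+1) ≤ ((n:ℝ)+1) * (4 * ((n:ℝ)/Real.exp 1)^n) := by
        have h4 : ((n:ℝ)+1)^(n+1) / (Real.exp 1 ^ n * Real.exp 1) ≤ ((n:ℝ)+1) * ((n:ℝ)^n / Real.exp 1 ^ n) := by
          rw [div_le_iff₀ (by positivity)]
          rw [div_le_iff₀ he] at hkey
          calc ((n:ℝ)+1)^(n+1) ≤ ((n:ℝ)+1) * (n:ℝ)^n * Real.exp 1 := hkey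
            _ = ((n:ℝ)+1) * ((n:ℝ)^n / Real.exp 1 ^ n) * (Real.exp 1 ^ n * Real.exp 1) := by
                field_simp
        rw [div_pow, div_pow, pow_succ (Real.exp 1)]
        nlinarith [h4]
      push_cast [Nat.factorial_succ]
      calc 4 * (((n:ℝ)+1) / Real.exp 1) ^ (n+1)
          ≤ ((n:ℝ)+1) * (4 * ((n:ℝ)/Real.exp 1)^n) := hmain
        _ ≤ ((n:ℝ)+1) * (n.factorial : ℝ) :=
            mul_le_mul_of_nonneg_left ih (by positivity)

/-- Bernstein's moment condition, uniformly in `p`: for `X ~ Ber(p)` with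
`p ∈ (0,1)` and `Y = (X - p) * log p`, every moment of order `m ≥ 3` satisfies
`|E[Y^m]| ≤ m! / 2` (i.e. `|E[Y^m]| ≤ (1/2) m! σ² b^{m-2}` with `σ² = 1`, `b = 1`). -/
theorem bernoulli_loglik_bernstein_moment_condition
    {Ω : Type*} [MeasurableSpace Ω] (μ : Measure Ω) [IsProbabilityMeasure μ]
    (X : Ω → ℝ) (p : ℝ) (hp : p ∈ Set.Ioo (0 : ℝ) 1)
    (hmeas : Measurable X)
    (hval : ∀ ω, X ω = 0 ∨ X ω = 1)
    (hdist : μ {ω | X ω = 1} = ENNReal.ofReal p)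
    (m : ℕ) (hm : 3 ≤ m) :
    |∫ ω, ((X ω - p) * Real.log p) ^ m ∂μ| ≤ (m.factorial : ℝ) / 2 := by
  obtain ⟨hp0, hp1⟩ := hp
  set c₁ : ℝ := ((1 - p) * Real.log p) ^ m with hc₁
  set c₀ : ℝ := ((0 - p) * Real.log p) ^ m with hc₀
  set A : Set Ω := X ⁻¹' {1} with hA
  have hAm : MeasurableSet A := hmeas (measurableSet_singleton 1)
  have hμA : μ A = ENNReal.ofReal p := by
    have : A = {ω | X ω = 1} := rfl
    rw [this, hdist]
  have hμAc : μ Aᶜ = ENNReal.ofReal (1 - p) := by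
    rw [measure_compl hAm (measure_ne_top μ A), hμA, measure_univ]
    rw [ENNReal.ofReal_sub _ hp0.le, ENNReal.ofReal_one]
  have hfun : ∀ ω, ((X ω - p) * Real.log p) ^ m
      = A.indicator (fun _ => c₁) ω + Aᶜ.indicator (fun _ => c₀) ω := by
    intro ω
    rcases hval ω with h | h
    · have hnA : ω ∉ A := by simp [hA, h]
      simp [Set.indicator_of_notMem hnA,
        Set.indicator_of_mem (by simpa using hnA : ω ∈ Aᶜ), h, hc₀]
    · have hmA : ω ∈ A := by simp [hA, h]
      have hnc : ω ∉ Aᶜ := by simpa using hmA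
      simp [Set.indicator_of_mem hmA, Set.indicator_of_notMem hnc, h, hc₁]
  have hint : ∫ ω, ((X ω - p) * Real.log p) ^ m ∂μ = p * c₁ + (1 - p) * c₀ := by
    rw [show (fun ω => ((X ω - p) * Real.log p) ^ m)
        = fun ω => A.indicator (fun _ => c₁) ω + Aᶜ.indicator (fun _ => c₀) ω
      from funext hfun]
    rw [integral_add ((integrable_const c₁).indicator hAm)
        ((integrable_const c₀).indicator hAm.compl)]
    rw [integral_indicator_const _ hAm, integral_indicator_const _ hAm.compl,
        measureReal_def, measureReal_def, hμA, hμAc, ENNReal.toReal_ofReal hp0.le, ENNReal.toReal_ofReal (by linarith)]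
    simp [smul_eq_mul]
  rw [hint]
  set L : ℝ := -Real.log p with hL
  have hlog : Real.log p < 0 := Real.log_neg hp0 hp1
  have hL0 : 0 < L := by simp [hL]; linarith
  have hpe : p = Real.exp (-L) := by rw [hL, neg_neg, Real.exp_log hp0]
  have habs1 : |c₁| = (1 - p) ^ m * L ^ m := by
    rw [hc₁, abs_pow, abs_mul, abs_of_nonneg (by linarith : (0:ℝ) ≤ 1 - p),
        abs_of_neg hlog, mul_pow, hL]
  have habs0 : |c₀| = p ^ m * L ^ m := by
    rw [hc₀, abs_pow, abs_mul, zero_sub, abs_neg, abs_of_pos hp0,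
        abs_of_neg hlog, mul_pow, hL]
  have hte : L ^ m * p ≤ ((m : ℝ) / Real.exp 1) ^ m := by
    have h := aux_te L hL0.le m (by omega)
    rwa [← hpe] at h
  have hfac := aux_fact_s4 m hm
  have hLm : (0:ℝ) ≤ L ^ m := by positivity
  have hpow1 : (1 - p) ^ m ≤ 1 := pow_le_one₀ (by linarith) (by linarith)
  have hterm1 : p * |c₁| ≤ (m.factorial : ℝ) / 4 := by
    rw [habs1]
    calc p * ((1 - p) ^ m * L ^ m) ≤ p * (1 * L ^ m) :=
          mul_le_mul_of_nonneg_left (mul_le_mul_of_nonneg_right hpow1 hLm) hp0.le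
      _ = L ^ m * p := by ring
      _ ≤ ((m : ℝ) / Real.exp 1) ^ m := hte
      _ ≤ (m.factorial : ℝ) / 4 := by linarith
  have hterm0 : (1 - p) * |c₀| ≤ (m.factorial : ℝ) / 4 := by
    have hpl : p * L ≤ 1 / Real.exp 1 := by
      have h := aux_te L hL0.le 1 le_rfl
      rw [← hpe] at h
      simpa [mul_comm] using h
    have h1 : (1 - p) * |c₀| ≤ (p * L) ^ m := by
      rw [habs0, ← mul_pow]
      calc (1 - p) * (p * L) ^ m ≤ 1 * (p * L) ^ m :=
            mul_le_mul_of_nonneg_right (by linarith) (by positivity)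
        _ = (p * L) ^ m := one_mul _
    have h2 : (p * L) ^ m ≤ 1 := by
      apply pow_le_one₀ (by positivity)
      calc p * L ≤ 1 / Real.exp 1 := hpl
        _ ≤ 1 := by
          rw [div_le_one (Real.exp_pos 1)]
          have := Real.add_one_le_exp (1:ℝ); linarith
    have h3 : (6:ℝ) ≤ (m.factorial : ℝ) := by
      have h4 : Nat.factorial 3 ≤ m.factorial := Nat.factorial_le hm
      exact_mod_cast Nat.le_trans (by norm_num [Nat.factorial]) h4
    linarith
  calc |p * c₁ + (1 - p) * c₀| ≤ |p * c₁| + |(1 - p) * c₀| := abs_add_le _ _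
    _ = p * |c₁| + (1 - p) * |c₀| := by
        rw [abs_mul, abs_mul, abs_of_pos hp0, abs_of_pos (by linarith : (0:ℝ) < 1 - p)]
    _ ≤ (m.factorial : ℝ) / 2 := by linarith
end

section
/- Let X_1, …, X_n be independent random vectors where X_i = (X_{i1}, …, X_{iK}) is a multinoulli (categorical) variable: each X_{ik} ∈ {0,1}, Σ_{k=1}^K X_{ik} = 1, and P(X_{ik} = 1) = p_{ik} with p_{ik} ∈ [0,1]. Then, with the convention 0·log 0 = 0, for all ε > 0: P( | Σ_{i=1}^n Σ_{k=1}^K (X_{ik} − p_{ik})·log p_{ik} | ≥ nε ) ≤ 2K·exp( − n ε² / (2K(K + ε)) ). -/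
open MeasureTheory ProbabilityTheory
open Real


lemma exp_as_tsum (x : ℝ) : Real.exp x = ∑' m : ℕ, x ^ m / m.factorial := by
  rw [Real.exp_eq_exp_ℝ, NormedSpace.exp_eq_tsum_div]

lemma pow_mul_exp_neg_le (m : ℕ) (hm : 2 ≤ m) :
    (m : ℝ) ^ m * Real.exp (-(m : ℝ)) ≤ (m.factorial : ℝ) / 2 := by
  induction m, hm using Nat.le_induction with
  | base =>
    have he : (2 : ℝ) ≤ Real.exp 1 := by
      have := Real.add_one_le_exp 1; linarith
    have h2 : Real.exp (-(2:ℝ)) ≤ 1 / 4 := by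
      rw [Real.exp_neg]
      rw [div_eq_inv_mul, mul_one]
      apply inv_anti₀ (by norm_num)
      calc (4:ℝ) = 2 * 2 := by norm_num
        _ ≤ Real.exp 1 * Real.exp 1 := by
            apply mul_le_mul he he (by norm_num) (Real.exp_pos 1).le
        _ = Real.exp 2 := by rw [← Real.exp_add]; norm_num
    norm_num
    nlinarith [Real.exp_pos (-(2:ℝ))]
  | succ m hm ih =>
    have hm0 : (0:ℝ) < m := by positivity
    have key : ((m:ℝ) + 1) ^ m ≤ (m:ℝ) ^ m * Real.exp 1 := by
      have h1 : (1 : ℝ) + 1 / m ≤ Real.exp (1 / m) := Real.add_one_le_exp _ |>.trans_eq' (by ring_nf)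
      have h2 : ((1 : ℝ) + 1 / m) ^ m ≤ Real.exp (1 / m) ^ m :=
        pow_le_pow_left₀ (by positivity) h1 m
      have h3 : Real.exp (1 / m) ^ m = Real.exp 1 := by
        rw [← Real.exp_nat_mul]
        congr 1
        field_simp
      calc ((m:ℝ) + 1) ^ m = ((m:ℝ) * (1 + 1/m)) ^ m := by
            congr 1; field_simp
        _ = (m:ℝ) ^ m * (1 + 1/m) ^ m := mul_pow _ _ _
        _ ≤ (m:ℝ) ^ m * Real.exp 1 := by
            rw [← h3]; exact mul_le_mul_of_nonneg_left h2 (by positivity)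
    have hfact : ((m + 1).factorial : ℝ) = ((m:ℝ) + 1) * m.factorial := by
      rw [Nat.factorial_succ]; push_cast; ring
    have hexp : Real.exp (-((m:ℝ) + 1)) = Real.exp (-(m:ℝ)) * (Real.exp 1)⁻¹ := by
      rw [← Real.exp_neg, ← Real.exp_add]; ring_nf
    push_cast
    calc ((m:ℝ) + 1) ^ (m + 1) * Real.exp (-((m:ℝ) + 1))
        = ((m:ℝ) + 1) * (((m:ℝ)+1) ^ m * Real.exp (-(m:ℝ)) * (Real.exp 1)⁻¹) := by
          rw [hexp, pow_succ]; ring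
      _ ≤ ((m:ℝ) + 1) * ((m:ℝ) ^ m * Real.exp 1 * Real.exp (-(m:ℝ)) * (Real.exp 1)⁻¹) := by
          apply mul_le_mul_of_nonneg_left _ (by positivity)
          have := mul_le_mul_of_nonneg_right key (Real.exp_pos (-(m:ℝ))).le
          apply mul_le_mul_of_nonneg_right _ (by positivity)
          exact this
      _ = ((m:ℝ) + 1) * ((m:ℝ) ^ m * Real.exp (-(m:ℝ))) := by
          field_simp
      _ ≤ ((m:ℝ) + 1) * ((m.factorial : ℝ) / 2) := by
          apply mul_le_mul_of_nonneg_left ih (by positivity)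
      _ = ((m+1).factorial : ℝ) / 2 := by rw [hfact]; push_cast; ring

lemma mul_neg_log_pow_le (u : ℝ) (hu0 : 0 ≤ u) (hu1 : u ≤ 1) (m : ℕ) (hm : 1 ≤ m) :
    u * (-Real.log u) ^ m ≤ (m : ℝ) ^ m * Real.exp (-(m : ℝ)) := by
  rcases eq_or_lt_of_le hu0 with h0 | h0
  · simp [← h0]
    positivity
  · set t : ℝ := -Real.log u with ht
    have htnn : 0 ≤ t := by
      simp only [ht, neg_nonneg]
      exact Real.log_nonpos hu0 hu1
    have hu : u = Real.exp (-t) := by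
      simp [ht, Real.exp_log h0]
    have hmpos : (0:ℝ) < m := by
      have : (1:ℝ) ≤ m := by exact_mod_cast hm
      linarith
    have key : (t / m) ^ m ≤ Real.exp (t - m) := by
      have h1 : t / m ≤ Real.exp (t / m - 1) := by
        have := Real.add_one_le_exp (t / m - 1)
        linarith
      have h2 : (t / m) ^ m ≤ Real.exp (t / m - 1) ^ m :=
        pow_le_pow_left₀ (by positivity) h1 m
      have h3 : Real.exp (t / m - 1) ^ m = Real.exp (t - m) := by
        rw [← Real.exp_nat_mul]
        congr 1
        field_simp
      rwa [h3] at h2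
    have : t ^ m ≤ (m:ℝ) ^ m * Real.exp (t - m) := by
      have := mul_le_mul_of_nonneg_left key (le_of_lt (by positivity : (0:ℝ) < (m:ℝ)^m))
      calc t ^ m = (m:ℝ) ^ m * (t / m) ^ m := by
            rw [← mul_pow]; congr 1; field_simp
        _ ≤ (m:ℝ) ^ m * Real.exp (t - m) := this
    calc u * t ^ m = Real.exp (-t) * t ^ m := by rw [hu]
      _ ≤ Real.exp (-t) * ((m:ℝ) ^ m * Real.exp (t - m)) := by
          exact mul_le_mul_of_nonneg_left this (Real.exp_pos _).le
      _ = (m:ℝ) ^ m * (Real.exp (-t) * Real.exp (t - m)) := by ring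
      _ = (m:ℝ) ^ m * Real.exp (-(m:ℝ)) := by rw [← Real.exp_add]; ring_nf

lemma entropy_le_log (K : ℕ) (hK : 0 < K) (p : Fin K → ℝ) (hp : ∀ k, 0 ≤ p k)
    (hs : ∑ k, p k = 1) : -∑ k, p k * Real.log (p k) ≤ Real.log K := by
  have hKpos : (0:ℝ) < K := by exact_mod_cast hK
  have hterm : ∀ k, p k * (-Real.log (p k) - Real.log K) ≤ 1 / K - p k := by
    intro k
    rcases eq_or_lt_of_le (hp k) with h0 | h0
    · rw [← h0]
      norm_num
    · have hx : (0:ℝ) < (p k * K)⁻¹ := by positivity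
      have hlog : Real.log ((p k * K)⁻¹) ≤ (p k * K)⁻¹ - 1 :=
        Real.log_le_sub_one_of_pos hx
      have heq : Real.log ((p k * K)⁻¹) = -Real.log (p k) - Real.log K := by
        rw [Real.log_inv, Real.log_mul (ne_of_gt h0) (ne_of_gt hKpos)]
        ring
      have := mul_le_mul_of_nonneg_left (heq ▸ hlog) (hp k)
      calc p k * (-Real.log (p k) - Real.log K) ≤ p k * ((p k * K)⁻¹ - 1) := this
        _ = 1 / K - p k := by field_simp
  have hsum := Finset.sum_le_sum (fun k (_ : k ∈ Finset.univ) => hterm k)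
  have h1 : ∑ k : Fin K, (p k * (-Real.log (p k) - Real.log K))
      = (-∑ k, p k * Real.log (p k)) - Real.log K := by
    have he : ∀ k : Fin K, p k * (-Real.log (p k) - Real.log K)
        = -(p k * Real.log (p k)) - p k * Real.log K := fun k => by ring
    simp_rw [he]
    rw [Finset.sum_sub_distrib, Finset.sum_neg_distrib, ← Finset.sum_mul, hs, one_mul]
  have h2 : ∑ k : Fin K, (1/(K:ℝ) - p k) = 0 := by
    rw [Finset.sum_sub_distrib, Finset.sum_const, hs]
    simp
    field_simp
    norm_num
  rw [h1, h2] at hsum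
  linarith

lemma mgf_series_bound (K : ℕ) (p c : Fin K → ℝ)
    (hp : ∀ k, 0 ≤ p k) (hs : ∑ k, p k = 1)
    (hc1 : ∑ k, p k * c k = 0)
    (hcm : ∀ m : ℕ, 2 ≤ m → ∑ k, p k * |c k| ^ m ≤ (m.factorial : ℝ) / 2 * (K:ℝ) ^ m)
    (l : ℝ) (hl0 : 0 ≤ l) (hl1 : (K:ℝ) * l < 1) :
    ∑ k, p k * Real.exp (l * c k)
      ≤ Real.exp ((K:ℝ)^2 * l^2 / (2 * (1 - (K:ℝ) * l))) := by
  set q : ℝ := (K:ℝ) * l with hq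
  have hq0 : 0 ≤ q := by positivity
  -- the coefficient sequence
  set a : ℕ → ℝ := fun m => ∑ k, p k * ((l * c k) ^ m / m.factorial) with ha
  have hsumm_g : ∀ k : Fin K, Summable (fun m : ℕ => p k * ((l * c k) ^ m / m.factorial)) :=
    fun k => (Real.summable_pow_div_factorial (l * c k)).mul_left (p k)
  have hsumm_a : Summable a := summable_sum (fun k _ => hsumm_g k)
  have hstep1 : ∑ k, p k * Real.exp (l * c k) = ∑' m, a m := by
    have : ∀ k : Fin K, p k * Real.exp (l * c k)
        = ∑' m : ℕ, p k * ((l * c k) ^ m / m.factorial) := by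
      intro k
      rw [exp_as_tsum (l * c k), ← tsum_mul_left]
    rw [Finset.sum_congr rfl (fun k _ => this k)]
    rw [ha]
    exact (Summable.tsum_finsetSum (fun k _ => hsumm_g k)).symm
  have ha0 : a 0 = 1 := by simp [ha, hs]
  have ha1 : a 1 = 0 := by
    simp only [ha, pow_one, Nat.factorial_one, Nat.cast_one, div_one]
    have : ∀ k : Fin K, p k * (l * c k) = l * (p k * c k) := fun k => by ring
    rw [Finset.sum_congr rfl (fun k _ => this k), ← Finset.mul_sum, hc1, mul_zero]
  have hbound : ∀ m : ℕ, a (m + 2) ≤ q ^ (m + 2) / 2 := by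
    intro m
    have h2m : 2 ≤ m + 2 := by omega
    calc a (m + 2) ≤ ∑ k, p k * (l ^ (m+2) * |c k| ^ (m+2) / (m+2).factorial) := by
          apply Finset.sum_le_sum
          intro k _
          apply mul_le_mul_of_nonneg_left _ (hp k)
          apply div_le_div_of_nonneg_right _ (by positivity)
          · calc (l * c k) ^ (m+2) ≤ |(l * c k) ^ (m+2)| := le_abs_self _
              _ = |l * c k| ^ (m+2) := by rw [abs_pow]
              _ = l ^ (m+2) * |c k| ^ (m+2) := by
                  rw [abs_mul, mul_pow, abs_of_nonneg hl0]
      _ = l ^ (m+2) / (m+2).factorial * ∑ k, p k * |c k| ^ (m+2) := by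
          rw [Finset.mul_sum]
          apply Finset.sum_congr rfl
          intro k _
          ring
      _ ≤ l ^ (m+2) / (m+2).factorial * (((m+2).factorial : ℝ) / 2 * (K:ℝ) ^ (m+2)) := by
          apply mul_le_mul_of_nonneg_left (hcm _ h2m) (by positivity)
      _ = q ^ (m + 2) / 2 := by
          have hfac : ((m+2).factorial : ℝ) ≠ 0 := by positivity
          field_simp [hq]
          ring
  have hgeo : Summable (fun m : ℕ => q ^ (m + 2) / 2) := by
    apply Summable.div_const
    exact ((summable_geometric_of_lt_one hq0 (by linarith)).mul_left (q^2)).congr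
      (fun m => by rw [pow_add]; ring)
  have htail : ∑' m : ℕ, a (m + 2) ≤ q ^ 2 / (2 * (1 - q)) := by
    calc ∑' m : ℕ, a (m + 2) ≤ ∑' m : ℕ, q ^ (m + 2) / 2 := by
          apply Summable.tsum_le_tsum hbound _ hgeo
          exact (summable_nat_add_iff 2).mpr hsumm_a
      _ = q ^ 2 / 2 * ∑' m : ℕ, q ^ m := by
          rw [← tsum_mul_left]
          congr 1
          funext m
          rw [pow_add]
          ring
      _ = q ^ 2 / (2 * (1 - q)) := by
          rw [tsum_geometric_of_lt_one hq0 (by linarith)]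
          field_simp
  have hsplit : ∑' m, a m = a 0 + a 1 + ∑' m, a (m + 2) := by
    rw [← Summable.sum_add_tsum_nat_add 2 hsumm_a]
    congr 1
    rw [Finset.sum_range_succ, Finset.sum_range_one]
  have hfinal : ∑' m, a m ≤ 1 + q ^ 2 / (2 * (1 - q)) := by
    rw [hsplit, ha0, ha1, add_zero]
    linarith
  rw [hstep1]
  have : (K:ℝ)^2 * l^2 / (2 * (1 - (K:ℝ) * l)) = q ^ 2 / (2 * (1 - q)) := by
    rw [hq]; ring
  rw [this]
  calc ∑' m, a m ≤ 1 + q ^ 2 / (2 * (1 - q)) := hfinal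
    _ ≤ Real.exp (q ^ 2 / (2 * (1 - q))) := by
        have := Real.add_one_le_exp (q ^ 2 / (2 * (1 - q)))
        linarith

lemma moment_bound_s10 (K : ℕ) (hK : 0 < K) (p : Fin K → ℝ)
    (hp0 : ∀ k, 0 ≤ p k) (hp1 : ∀ k, p k ≤ 1) (hs : ∑ k, p k = 1)
    (m : ℕ) (hm : 2 ≤ m) :
    ∑ k, p k * |Real.log (p k) + -∑ j, p j * Real.log (p j)| ^ m
      ≤ (m.factorial : ℝ) / 2 * (K:ℝ) ^ m := by
  have hKpos : (0:ℝ) < K := by exact_mod_cast hK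
  have hK1 : (1:ℝ) ≤ K := by exact_mod_cast hK
  set h : ℝ := -∑ j, p j * Real.log (p j) with hh
  have hh0 : 0 ≤ h := by
    rw [hh, neg_nonneg]
    apply Finset.sum_nonpos
    intro j _
    apply mul_nonpos_of_nonneg_of_nonpos (hp0 j)
    exact Real.log_nonpos (hp0 j) (hp1 j)
  have hhK : h ≤ Real.log K := entropy_le_log K hK p hp0 hs
  have hterm : ∀ k, p k * |Real.log (p k) + h| ^ m
      ≤ (K:ℝ) * ((m:ℝ) ^ m * Real.exp (-(m:ℝ))) := by
    intro k
    rcases eq_or_lt_of_le (hp0 k) with h0 | h0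
    · rw [← h0, zero_mul]
      positivity
    · have hlogk : Real.log (p k) ≤ 0 := Real.log_nonpos (hp0 k) (hp1 k)
      have habs : |Real.log (p k) + h| ≤ Real.log K - Real.log (p k) := by
        rw [abs_le]
        have hlK : (0:ℝ) ≤ Real.log K := Real.log_nonneg hK1
        constructor <;> linarith
      have habs' : |Real.log (p k) + h| ≤ -Real.log (p k / K) := by
        rw [Real.log_div (ne_of_gt h0) (ne_of_gt hKpos)]
        linarith
      have hu0 : 0 ≤ p k / K := by positivity
      have hu1 : p k / K ≤ 1 := by
        rw [div_le_one hKpos]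
        linarith [hp1 k]
      have hmono : |Real.log (p k) + h| ^ m ≤ (-Real.log (p k / K)) ^ m :=
        pow_le_pow_left₀ (abs_nonneg _) habs' m
      calc p k * |Real.log (p k) + h| ^ m
          ≤ p k * (-Real.log (p k / K)) ^ m :=
            mul_le_mul_of_nonneg_left hmono (hp0 k)
        _ = (K:ℝ) * (p k / K * (-Real.log (p k / K)) ^ m) := by
            field_simp
        _ ≤ (K:ℝ) * ((m:ℝ) ^ m * Real.exp (-(m:ℝ))) := by
            apply mul_le_mul_of_nonneg_left _ (le_of_lt hKpos)
            exact mul_neg_log_pow_le _ hu0 hu1 m (by omega)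
  calc ∑ k, p k * |Real.log (p k) + h| ^ m
      ≤ ∑ _k : Fin K, (K:ℝ) * ((m:ℝ) ^ m * Real.exp (-(m:ℝ))) :=
        Finset.sum_le_sum (fun k _ => hterm k)
    _ = (K:ℝ) * ((K:ℝ) * ((m:ℝ) ^ m * Real.exp (-(m:ℝ)))) := by
        rw [Finset.sum_const]
        simp [Finset.card_univ]
    _ ≤ (K:ℝ) * ((K:ℝ) * ((m.factorial:ℝ) / 2)) := by
        apply mul_le_mul_of_nonneg_left _ (le_of_lt hKpos)
        apply mul_le_mul_of_nonneg_left (pow_mul_exp_neg_le m hm) (le_of_lt hKpos)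
    _ = ((m.factorial:ℝ) / 2) * (K:ℝ) ^ 2 := by ring
    _ ≤ (m.factorial : ℝ) / 2 * (K:ℝ) ^ m := by
        apply mul_le_mul_of_nonneg_left _ (by positivity)
        exact pow_le_pow_right₀ hK1 hm

open MeasureTheory ProbabilityTheory

lemma multinoulli_exists_one (K : ℕ) (v : Fin K → ℝ)
    (hval : ∀ k, v k = 0 ∨ v k = 1) (hsumv : ∑ k, v k = 1) :
    ∃ k : Fin K, v k = 1 ∧ ∀ j, j ≠ k → v j = 0 := by
  have hnn : ∀ k, 0 ≤ v k := by
    intro k; rcases hval k with h | h <;> rw [h] <;> norm_num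
  have hex : ∃ k, v k = 1 := by
    by_contra hc
    push_neg at hc
    have : ∀ k, v k = 0 := by
      intro k; rcases hval k with h | h
      · exact h
      · exact absurd h (hc k)
    rw [Finset.sum_congr rfl (fun k _ => this k)] at hsumv
    simp at hsumv
  obtain ⟨k, hk⟩ := hex
  refine ⟨k, hk, ?_⟩
  intro j hj
  have hrest : ∑ j ∈ Finset.univ.erase k, v j = 0 := by
    have := Finset.add_sum_erase Finset.univ v (Finset.mem_univ k)
    rw [hsumv, hk] at this
    linarith
  have := (Finset.sum_eq_zero_iff_of_nonneg (fun j _ => hnn j)).mp hrest j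
    (Finset.mem_erase.mpr ⟨hj, Finset.mem_univ j⟩)
  exact this

lemma row_facts {Ω : Type*} [MeasurableSpace Ω] (μ : Measure Ω) [IsProbabilityMeasure μ]
    (K : ℕ) (Y : Ω → Fin K → ℝ) (P : Fin K → ℝ)
    (hP : ∀ k, 0 ≤ P k) (hmeasY : Measurable Y)
    (hvalY : ∀ ω k, Y ω k = 0 ∨ Y ω k = 1) (hsumY : ∀ ω, ∑ k, Y ω k = 1)
    (hdistY : ∀ k, μ {ω | Y ω k = 1} = ENNReal.ofReal (P k)) (t : ℝ) :
    Integrable (fun ω => Real.exp (t * ∑ k, (Y ω k - P k) * Real.log (P k))) μ ∧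
    mgf (fun ω => ∑ k, (Y ω k - P k) * Real.log (P k)) μ t
      = ∑ k, P k * Real.exp (t * (Real.log (P k) + -∑ j, P j * Real.log (P j))) ∧
    ∑ k, P k = 1 := by
  classical
  set c : Fin K → ℝ := fun k => Real.log (P k) + -∑ j, P j * Real.log (P j) with hc
  set A : Fin K → Set Ω := fun k => {ω | Y ω k = 1} with hA
  have hAmeas : ∀ k, MeasurableSet (A k) := by
    intro k
    have : A k = Y ⁻¹' {v | v k = 1} := rfl
    rw [this]
    exact hmeasY ((measurable_pi_apply k) (measurableSet_singleton 1))
  -- pointwise identity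
  have hpt : ∀ ω, Real.exp (t * ∑ k, (Y ω k - P k) * Real.log (P k))
      = ∑ k, (A k).indicator (fun _ => Real.exp (t * c k)) ω := by
    intro ω
    obtain ⟨k₀, hk₀, huniq⟩ := multinoulli_exists_one K (Y ω) (hvalY ω) (hsumY ω)
    have hZ : ∑ k, (Y ω k - P k) * Real.log (P k) = c k₀ := by
      have hsplit : ∀ k, (Y ω k - P k) * Real.log (P k)
          = Y ω k * Real.log (P k) - P k * Real.log (P k) := fun k => by ring
      rw [Finset.sum_congr rfl (fun k _ => hsplit k), Finset.sum_sub_distrib]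
      have h1 : ∑ k, Y ω k * Real.log (P k) = Real.log (P k₀) := by
        rw [Finset.sum_eq_single_of_mem k₀ (Finset.mem_univ k₀)]
        · rw [hk₀, one_mul]
        · intro j _ hj
          rw [huniq j hj, zero_mul]
      rw [h1, hc]
      ring
    rw [hZ, Finset.sum_eq_single_of_mem k₀ (Finset.mem_univ k₀)]
    · exact (Set.indicator_of_mem (show ω ∈ A k₀ from hk₀) (fun _ => Real.exp (t * c k₀))).symm
    · intro j _ hj
      apply Set.indicator_of_notMem
      intro hmem
      have := huniq j hj
      rw [Set.mem_setOf_eq.mp hmem] at this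
      norm_num at this
  have hint_term : ∀ k, Integrable ((A k).indicator
      (fun _ => Real.exp (t * c k)) : Ω → ℝ) μ :=
    fun k => (integrable_const _).indicator (hAmeas k)
  have hint : Integrable (fun ω => Real.exp (t * ∑ k, (Y ω k - P k) * Real.log (P k))) μ := by
    have : (fun ω => Real.exp (t * ∑ k, (Y ω k - P k) * Real.log (P k)))
        = fun ω => ∑ k, (A k).indicator (fun _ => Real.exp (t * c k)) ω := funext hpt
    rw [this]
    exact integrable_finset_sum _ (fun k _ => hint_term k)
  have hmgf : mgf (fun ω => ∑ k, (Y ω k - P k) * Real.log (P k)) μ t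
      = ∑ k, P k * Real.exp (t * c k) := by
    unfold mgf
    rw [integral_congr_ae (Filter.Eventually.of_forall hpt)]
    rw [integral_finset_sum _ (fun k _ => hint_term k)]
    apply Finset.sum_congr rfl
    intro k _
    rw [integral_indicator_const _ (hAmeas k), measureReal_def, hdistY k, smul_eq_mul,
      ENNReal.toReal_ofReal (hP k)]
  have hPsum : ∑ k, P k = 1 := by
    have hdisj : Pairwise (Function.onFun Disjoint A) := by
      intro j k hjk
      rw [Function.onFun, Set.disjoint_left]
      intro ω hj hk
      obtain ⟨k₀, hk₀, huniq⟩ := multinoulli_exists_one K (Y ω) (hvalY ω) (hsumY ω)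
      have h1 : j = k₀ := by
        by_contra hne
        have := huniq j hne
        rw [Set.mem_setOf_eq.mp hj] at this; norm_num at this
      have h2 : k = k₀ := by
        by_contra hne
        have := huniq k hne
        rw [Set.mem_setOf_eq.mp hk] at this; norm_num at this
      exact hjk (h1.trans h2.symm)
    have hcover : (⋃ k, A k) = Set.univ := by
      apply Set.eq_univ_of_forall
      intro ω
      obtain ⟨k₀, hk₀, _⟩ := multinoulli_exists_one K (Y ω) (hvalY ω) (hsumY ω)
      exact Set.mem_iUnion.mpr ⟨k₀, hk₀⟩
    have h1 : μ (⋃ k, A k) = ∑' k, μ (A k) := measure_iUnion hdisj hAmeas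
    rw [hcover, measure_univ, tsum_fintype] at h1
    have h2 : ∑ k, μ (A k) = ENNReal.ofReal (∑ k, P k) := by
      rw [ENNReal.ofReal_sum_of_nonneg (fun k _ => hP k)]
      exact Finset.sum_congr rfl (fun k _ => hdistY k)
    rw [h2] at h1
    have h3 := congrArg ENNReal.toReal h1
    rw [ENNReal.toReal_ofReal (Finset.sum_nonneg (fun k _ => hP k))] at h3
    simpa using h3.symm
  exact ⟨hint, hmgf, hPsum⟩

/-- Bernstein-type bound for the log-likelihood of independent multinoulli
(categorical) variables: if `X i : Ω → (Fin K → ℝ)` are independent random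
vectors with `0/1` coordinates summing to `1` and `P(X i k = 1) = p i k`, then
for all `ε > 0` (with the convention `0 * log 0 = 0`, via `Real.log 0 = 0`),
`P(|∑ i ∑ k (X_{ik} - p_{ik}) log p_{ik}| ≥ nε) ≤ 2K exp(-nε² / (2K(K + ε)))`. -/
theorem multinoulli_loglik_two_sided_tail
    {Ω : Type*} [MeasurableSpace Ω] (μ : Measure Ω) [IsProbabilityMeasure μ]
    (n K : ℕ) (hK : 0 < K)
    (X : Fin n → Ω → (Fin K → ℝ)) (p : Fin n → Fin K → ℝ)
    (hp : ∀ i k, p i k ∈ Set.Icc (0 : ℝ) 1)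
    (hmeas : ∀ i, Measurable (X i))
    (hval : ∀ i ω k, X i ω k = 0 ∨ X i ω k = 1)
    (hsum : ∀ i ω, ∑ k, X i ω k = 1)
    (hdist : ∀ i k, μ {ω | X i ω k = 1} = ENNReal.ofReal (p i k))
    (hindep : iIndepFun X μ)
    (ε : ℝ) (hε : 0 < ε) :
    μ {ω | (n : ℝ) * ε ≤ |∑ i, ∑ k, (X i ω k - p i k) * Real.log (p i k)|}
      ≤ ENNReal.ofReal
          (2 * (K : ℝ) * Real.exp (-(n : ℝ) * ε ^ 2 / (2 * (K : ℝ) * ((K : ℝ) + ε)))) := by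
  classical
  have hKr : (0:ℝ) < K := by exact_mod_cast hK
  have hK1 : (1:ℝ) ≤ K := by exact_mod_cast hK
  set l : ℝ := ε / ((K:ℝ) * ((K:ℝ) + ε)) with hl
  have hl0 : 0 < l := by positivity
  have hKl : (K:ℝ) * l < 1 := by
    rw [hl]
    rw [mul_div_assoc']
    rw [div_lt_one (by positivity)]
    nlinarith
  -- the summand random variables
  set Z : Fin n → Ω → ℝ := fun i ω => ∑ k, (X i ω k - p i k) * Real.log (p i k) with hZ
  have hZmeas : ∀ i, Measurable (Z i) := by
    intro i
    apply Finset.measurable_sum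
    intro k _
    exact (((measurable_pi_apply k).comp (hmeas i)).sub_const _).mul_const _
  have hindepZ : iIndepFun Z μ := by
    have := hindep.comp (fun i (v : Fin K → ℝ) => ∑ k, (v k - p i k) * Real.log (p i k))
      (fun i => by
        apply Finset.measurable_sum
        intro k _
        exact ((measurable_pi_apply k).sub_const _).mul_const _)
    exact this
  -- per-row facts
  set c : Fin n → Fin K → ℝ :=
    fun i k => Real.log (p i k) + -∑ j, p i j * Real.log (p i j) with hcdef
  have hrow : ∀ (i : Fin n) (t : ℝ),
      Integrable (fun ω => Real.exp (t * Z i ω)) μ ∧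
      mgf (Z i) μ t = ∑ k, p i k * Real.exp (t * c i k) ∧
      ∑ k, p i k = 1 :=
    fun i t => row_facts μ K (X i) (p i) (fun k => (hp i k).1) (hmeas i)
      (hval i) (hsum i) (hdist i) t
  have hc1 : ∀ i, ∑ k, p i k * c i k = 0 := by
    intro i
    have hs := (hrow i 0).2.2
    have : ∀ k : Fin K, p i k * c i k
        = p i k * Real.log (p i k) + p i k * (-∑ j, p i j * Real.log (p i j)) := by
      intro k; rw [hcdef]; ring
    rw [Finset.sum_congr rfl (fun k _ => this k), Finset.sum_add_distrib,
      ← Finset.sum_mul, hs, one_mul]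
    ring
  have hcm : ∀ i, ∀ m : ℕ, 2 ≤ m →
      ∑ k, p i k * |c i k| ^ m ≤ (m.factorial : ℝ) / 2 * (K:ℝ) ^ m := by
    intro i m hm
    exact moment_bound_s10 K hK (p i) (fun k => (hp i k).1) (fun k => (hp i k).2)
      (hrow i 0).2.2 m hm
  set B : ℝ := (K:ℝ)^2 * l^2 / (2 * (1 - (K:ℝ) * l)) with hB
  -- mgf bounds for each i, at l and -l
  have hmgf_pos : ∀ i, mgf (Z i) μ l ≤ Real.exp B := by
    intro i
    rw [(hrow i l).2.1]
    exact mgf_series_bound K (p i) (c i) (fun k => (hp i k).1) (hrow i 0).2.2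
      (hc1 i) (hcm i) l hl0.le hKl
  have hmgf_neg : ∀ i, mgf (Z i) μ (-l) ≤ Real.exp B := by
    intro i
    rw [(hrow i (-l)).2.1]
    have : ∀ k : Fin K, p i k * Real.exp (-l * c i k)
        = p i k * Real.exp (l * (-(c i k))) := by
      intro k; congr 2; ring
    rw [Finset.sum_congr rfl (fun k _ => this k)]
    exact mgf_series_bound K (p i) (fun k => -(c i k)) (fun k => (hp i k).1)
      (hrow i 0).2.2
      (by rw [← neg_eq_zero, ← Finset.sum_neg_distrib]
          rw [← hc1 i]
          apply Finset.sum_congr rfl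
          intro k _; ring)
      (fun m hm => by
        have : ∀ k : Fin K, p i k * |-(c i k)| ^ m = p i k * |c i k| ^ m := by
          intro k; rw [abs_neg]
        rw [Finset.sum_congr rfl (fun k _ => this k)]
        exact hcm i m hm)
      l hl0.le hKl
  -- mgf of the sum
  have hmgf_sum_pos : mgf (∑ i, Z i) μ l ≤ Real.exp ((n:ℝ) * B) := by
    rw [hindepZ.mgf_sum hZmeas Finset.univ]
    calc ∏ i, mgf (Z i) μ l ≤ ∏ _i : Fin n, Real.exp B :=
          Finset.prod_le_prod (fun i _ => mgf_nonneg) (fun i _ => hmgf_pos i)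
      _ = Real.exp ((n:ℝ) * B) := by
          rw [Finset.prod_const, Finset.card_univ, Fintype.card_fin, ← Real.exp_nat_mul]
  have hmgf_sum_neg : mgf (∑ i, Z i) μ (-l) ≤ Real.exp ((n:ℝ) * B) := by
    rw [hindepZ.mgf_sum hZmeas Finset.univ]
    calc ∏ i, mgf (Z i) μ (-l) ≤ ∏ _i : Fin n, Real.exp B :=
          Finset.prod_le_prod (fun i _ => mgf_nonneg) (fun i _ => hmgf_neg i)
      _ = Real.exp ((n:ℝ) * B) := by
          rw [Finset.prod_const, Finset.card_univ, Fintype.card_fin, ← Real.exp_nat_mul]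
  -- integrability of exp of sums
  have hint_pos : Integrable (fun ω => Real.exp (l * (∑ i, Z i) ω)) μ :=
    hindepZ.integrable_exp_mul_sum hZmeas (fun i _ => (hrow i l).1)
  have hint_neg : Integrable (fun ω => Real.exp (-l * (∑ i, Z i) ω)) μ :=
    hindepZ.integrable_exp_mul_sum hZmeas (fun i _ => (hrow i (-l)).1)
  -- Chernoff bounds
  set E : ℝ := Real.exp (-(n : ℝ) * ε ^ 2 / (2 * (K : ℝ) * ((K : ℝ) + ε))) with hE
  have hexponent : -l * ((n:ℝ) * ε) + (n:ℝ) * B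
      = -(n : ℝ) * ε ^ 2 / (2 * (K : ℝ) * ((K : ℝ) + ε)) := by
    have hBval : B = ε ^ 2 / (2 * (K:ℝ) * ((K:ℝ) + ε)) := by
      rw [hB, hl]
      have h1 : (K:ℝ) * ((K:ℝ) + ε) ≠ 0 := by positivity
      have h2 : (K:ℝ) + ε ≠ 0 := by positivity
      have h3 : 1 - (K:ℝ) * (ε / ((K:ℝ) * ((K:ℝ) + ε))) = (K:ℝ) / ((K:ℝ) + ε) := by
        field_simp
        ring
      rw [h3]
      field_simp
    rw [hBval, hl]
    field_simp
    ring
  have htail_pos : (μ {ω | (n:ℝ) * ε ≤ (∑ i, Z i) ω}).toReal ≤ E := by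
    calc (μ {ω | (n:ℝ) * ε ≤ (∑ i, Z i) ω}).toReal
        ≤ Real.exp (-l * ((n:ℝ) * ε)) * mgf (∑ i, Z i) μ l :=
          measure_ge_le_exp_mul_mgf ((n:ℝ) * ε) hl0.le hint_pos
      _ ≤ Real.exp (-l * ((n:ℝ) * ε)) * Real.exp ((n:ℝ) * B) := by
          apply mul_le_mul_of_nonneg_left hmgf_sum_pos (Real.exp_pos _).le
      _ = E := by rw [← Real.exp_add, hE, hexponent]
  have htail_neg : (μ {ω | (∑ i, Z i) ω ≤ -((n:ℝ) * ε)}).toReal ≤ E := by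
    calc (μ {ω | (∑ i, Z i) ω ≤ -((n:ℝ) * ε)}).toReal
        ≤ Real.exp (-(-l) * (-((n:ℝ) * ε))) * mgf (∑ i, Z i) μ (-l) :=
          measure_le_le_exp_mul_mgf (-((n:ℝ) * ε)) (by linarith) hint_neg
      _ ≤ Real.exp (-l * ((n:ℝ) * ε)) * Real.exp ((n:ℝ) * B) := by
          rw [show -(-l) * (-((n:ℝ) * ε)) = -l * ((n:ℝ) * ε) by ring]
          apply mul_le_mul_of_nonneg_left hmgf_sum_neg (Real.exp_pos _).le
      _ = E := by rw [← Real.exp_add, hE, hexponent]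
  -- combine
  have hsubset : {ω | (n : ℝ) * ε ≤ |∑ i, ∑ k, (X i ω k - p i k) * Real.log (p i k)|}
      ⊆ {ω | (n:ℝ) * ε ≤ (∑ i, Z i) ω} ∪ {ω | (∑ i, Z i) ω ≤ -((n:ℝ) * ε)} := by
    intro ω hω
    simp only [Set.mem_setOf_eq] at hω
    have hval' : (∑ i, Z i) ω = ∑ i, ∑ k, (X i ω k - p i k) * Real.log (p i k) := by
      rw [Finset.sum_apply]
    rcases le_abs.mp hω with h | h
    · left
      simp only [Set.mem_setOf_eq]
      rw [hval']
      exact h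
    · right
      simp only [Set.mem_setOf_eq]
      rw [hval']
      linarith
  have hplus : μ {ω | (n:ℝ) * ε ≤ (∑ i, Z i) ω} ≤ ENNReal.ofReal E := by
    rw [← ENNReal.ofReal_toReal (measure_ne_top μ _)]
    exact ENNReal.ofReal_le_ofReal htail_pos
  have hminus : μ {ω | (∑ i, Z i) ω ≤ -((n:ℝ) * ε)} ≤ ENNReal.ofReal E := by
    rw [← ENNReal.ofReal_toReal (measure_ne_top μ _)]
    exact ENNReal.ofReal_le_ofReal htail_neg
  calc μ {ω | (n : ℝ) * ε ≤ |∑ i, ∑ k, (X i ω k - p i k) * Real.log (p i k)|}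
      ≤ μ ({ω | (n:ℝ) * ε ≤ (∑ i, Z i) ω} ∪ {ω | (∑ i, Z i) ω ≤ -((n:ℝ) * ε)}) :=
        measure_mono hsubset
    _ ≤ μ {ω | (n:ℝ) * ε ≤ (∑ i, Z i) ω} + μ {ω | (∑ i, Z i) ω ≤ -((n:ℝ) * ε)} :=
        measure_union_le _ _
    _ ≤ ENNReal.ofReal E + ENNReal.ofReal E := add_le_add hplus hminus
    _ = ENNReal.ofReal (2 * E) := by
        rw [← ENNReal.ofReal_add (Real.exp_pos _).le (Real.exp_pos _).le]
        congr 1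
        ring
    _ ≤ ENNReal.ofReal (2 * (K : ℝ) * E) := by
        apply ENNReal.ofReal_le_ofReal
        nlinarith [Real.exp_pos (-(n : ℝ) * ε ^ 2 / (2 * (K : ℝ) * ((K : ℝ) + ε)))]
end

section
/- Let X_j^{(i)}, for i = 1,…,I and j = 1,…,n_i, be mutually independent Bernoulli random variables with parameters p_j^{(i)} ∈ [0,1]. Let n = Σ_{i=1}^I n_i and let p̄^{(i)} = (1/n_i)·Σ_{j=1}^{n_i} p_j^{(i)} be the within-group mean parameters. Then, with the convention 0·log 0 = 0, for all t > 0: P( | Σ_{i=1}^I Σ_{j=1}^{n_i} ( X_j^{(i)} − p_j^{(i)} )·log p̄^{(i)} | ≥ t ) ≤ 2·exp( − t² / (2(n + t)) ). -/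
open MeasureTheory ProbabilityTheory

section Scalar
open Real

private lemma aux_mono {f f' : ℝ → ℝ} (hd : ∀ x, HasDerivAt f (f' x) x)
    (h' : ∀ x, 0 ≤ x → 0 ≤ f' x) {v : ℝ} (hv : 0 ≤ v) : f 0 ≤ f v := by
  have hdiff : Differentiable ℝ f := fun x => (hd x).differentiableAt
  have hmono : MonotoneOn f (Set.Ici (0:ℝ)) := by
    apply monotoneOn_of_deriv_nonneg (convex_Ici 0) hdiff.continuous.continuousOn
      (fun x _ => (hdiff x).differentiableWithinAt)
    intro x hx
    rw [interior_Ici] at hx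
    rw [(hd x).deriv]
    exact h' x (le_of_lt hx)
  exact hmono Set.self_mem_Ici hv hv

private lemma B1 {l v : ℝ} (hl0 : 0 ≤ l) (hl1 : l ≤ 1) (hv : 0 ≤ v) :
    exp (l * v) - 1 - l * v ≤ l ^ 2 * (exp v - 1 - v) := by
  have key := aux_mono
    (f := fun x => l ^ 2 * (exp x - 1 - x) - (exp (l * x) - 1 - l * x))
    (f' := fun x => l ^ 2 * (exp x - 1) - (exp (l * x) * l - l))
    (fun x => by
      have h1 : HasDerivAt (fun x => exp x - 1 - x) (exp x - 1) x := by
        exact ((Real.hasDerivAt_exp x).sub_const 1).sub (hasDerivAt_id x)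
      have h2 : HasDerivAt (fun x : ℝ => exp (l * x)) (exp (l * x) * l) x := by
        simpa using (((hasDerivAt_id x).const_mul l).exp)
      have h3 : HasDerivAt (fun x : ℝ => exp (l * x) - 1 - l * x) (exp (l * x) * l - l) x := by
        exact ((h2.sub_const 1).sub ((hasDerivAt_id x).const_mul l)).congr_deriv (by ring)
      exact (h1.const_mul (l ^ 2)).sub h3)
    (fun x hx => by
      have hconv : exp (l * x) ≤ (1 - l) * exp 0 + l * exp x := by
        have := convexOn_exp.2 (Set.mem_univ (0:ℝ)) (Set.mem_univ x)
          (by linarith : (0:ℝ) ≤ 1 - l) hl0 (by ring)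
        simpa [smul_eq_mul] using this
      rw [Real.exp_zero] at hconv
      nlinarith [mul_le_mul_of_nonneg_left hconv hl0])
    hv
  simp only [mul_zero, Real.exp_zero] at key
  linarith

private lemma B2 {x : ℝ} (hx : 0 ≤ x) : exp (-x) ≤ 1 - x + x ^ 2 / 2 := by
  have key := aux_mono
    (f := fun y => 1 - y + y ^ 2 / 2 - exp (-y))
    (f' := fun y => -1 + y + exp (-y))
    (fun y => by
      have h1 : HasDerivAt (fun y : ℝ => exp (-y)) (-exp (-y)) y := by
        simpa using ((hasDerivAt_id y).neg.exp)
      have h2 : HasDerivAt (fun y : ℝ => 1 - y + y ^ 2 / 2) (-1 + y) y := by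
        have hp : HasDerivAt (fun y : ℝ => y ^ 2 / 2) y y := by
          simpa using (hasDerivAt_pow 2 y).div_const 2
        exact (((hasDerivAt_const y (1:ℝ)).sub (hasDerivAt_id y)).add hp).congr_deriv (by ring)
      exact (h2.sub h1).congr_deriv (by ring))
    (fun y _ => by
      have := Real.add_one_le_exp (-y)
      linarith)
    hx
  simp only [neg_zero, Real.exp_zero] at key
  linarith

private lemma B4 {x : ℝ} (hx : 0 ≤ x) : exp x - 1 - x ≤ x ^ 2 * exp x / 2 := by
  have hf' : ∀ y : ℝ, 0 ≤ y → 0 ≤ y * exp y + y ^ 2 * exp y / 2 - exp y + 1 := by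
    intro y hy
    have key := aux_mono
      (f := fun z => z * exp z + z ^ 2 * exp z / 2 - exp z + 1)
      (f' := fun z => (1 * exp z + z * exp z) + (2 * z ^ 1 * exp z + z ^ 2 * exp z) / 2 - exp z)
      (fun z => by
        have he : HasDerivAt (fun z : ℝ => exp z) (exp z) z := Real.hasDerivAt_exp z
        have h1 : HasDerivAt (fun z : ℝ => z * exp z) (1 * exp z + z * exp z) z :=
          (hasDerivAt_id z).mul he
        have h2 : HasDerivAt (fun z : ℝ => z ^ 2 * exp z)
            ((2 * z ^ 1) * exp z + z ^ 2 * exp z) z := (hasDerivAt_pow 2 z).mul he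
        exact ((h1.add (h2.div_const 2)).sub he).add_const 1)
      (fun z hz => by
        have h := Real.exp_pos z
        nlinarith)
      hy
    simp only [zero_mul, Real.exp_zero, zero_pow, mul_zero] at key
    norm_num at key
    linarith
  have key := aux_mono
    (f := fun y => y ^ 2 * exp y / 2 - exp y + 1 + y)
    (f' := fun y => (2 * y ^ 1 * exp y + y ^ 2 * exp y) / 2 - exp y + 1)
    (fun y => by
      have he : HasDerivAt (fun y : ℝ => exp y) (exp y) y := Real.hasDerivAt_exp y
      have h2 : HasDerivAt (fun y : ℝ => y ^ 2 * exp y)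
          ((2 * y ^ 1) * exp y + y ^ 2 * exp y) y := (hasDerivAt_pow 2 y).mul he
      exact ((((h2.div_const 2).sub he).add_const 1).add (hasDerivAt_id y)).congr_deriv (by ring))
    (fun y hy => by
      have := hf' y hy
      nlinarith)
    hx
  norm_num at key
  linarith

private lemma B5 {s : ℝ} (hs : 0 ≤ s) : s ^ 2 * exp (-s) ≤ 542 / 1000 := by
  have h1 : s / 2 ≤ exp (s / 2 - 1) := by
    have := Real.add_one_le_exp (s / 2 - 1)
    linarith
  have h2 : s ^ 2 / 4 ≤ exp (s - 2) := by
    have hm := mul_le_mul h1 h1 (by linarith) (Real.exp_pos _).le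
    calc s ^ 2 / 4 = (s / 2) * (s / 2) := by ring
      _ ≤ exp (s / 2 - 1) * exp (s / 2 - 1) := hm
      _ = exp (s - 2) := by rw [← Real.exp_add]; ring_nf
  have he : (7389 : ℝ) / 1000 ≤ exp 2 := by
    have h := Real.exp_one_gt_d9
    have h2 : exp 2 = exp 1 * exp 1 := by rw [← Real.exp_add]; norm_num
    nlinarith
  have h3 : exp (-s) * exp s = 1 := by rw [← Real.exp_add]; simp
  have h4 : exp (-2) * exp 2 = 1 := by rw [← Real.exp_add]; simp
  have h5 : exp (s - 2) = exp s * exp (-2) := by rw [← Real.exp_add]; ring_nf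
  have hes : 0 < exp s := Real.exp_pos s
  have hens : 0 < exp (-s) := Real.exp_pos _
  have hen2 : 0 < exp (-2) := Real.exp_pos _
  -- s^2 * exp(-s) ≤ 4 * exp(-2) ≤ 542/1000
  have key : s ^ 2 * exp (-s) ≤ 4 * exp (-2) := by
    have := mul_le_mul_of_nonneg_left h2 hens.le
    calc s ^ 2 * exp (-s) = exp (-s) * (s ^ 2 / 4) * 4 := by ring
      _ ≤ exp (-s) * exp (s - 2) * 4 := by nlinarith
      _ = 4 * exp (-2) := by rw [h5]; nlinarith [h3]
  have last : 4 * exp (-2) ≤ 542 / 1000 := by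
    nlinarith [mul_le_mul_of_nonneg_left he hen2.le]
  linarith

private lemma scalarI {q l r : ℝ} (hq0 : 0 ≤ q) (hq1 : q ≤ 1) (hl0 : 0 ≤ l) (hl1 : l ≤ 1)
    (hr : r = l ∨ r = -l) :
    q * (exp (r * Real.log q) - 1 - r * Real.log q) ≤ l ^ 2 := by
  rcases eq_or_lt_of_le hq0 with h0 | hqpos
  · rw [← h0]; simp [Real.log_zero]; positivity
  set v : ℝ := -Real.log q with hvdef
  have hv : 0 ≤ v := by
    simp only [hvdef, le_neg, neg_zero]
    exact Real.log_nonpos hq0 hq1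
  have hqv : q = exp (-v) := by rw [hvdef, neg_neg, Real.exp_log hqpos]
  have hlogq : Real.log q = -v := by rw [hvdef, neg_neg]
  rcases hr with h | h
  · -- easy sign: r = l, x = l * log q = -(l*v) ≤ 0
    rw [h, hlogq]
    have hB2 := B2 (mul_nonneg hl0 hv)
    have hB5 := B5 hv
    have : exp (l * -v) = exp (-(l * v)) := by ring_nf
    rw [this]
    have hq' : q * (exp (-(l * v)) - 1 - l * -v) ≤ q * ((l * v) ^ 2 / 2) := by
      apply mul_le_mul_of_nonneg_left _ hq0
      nlinarith
    have heq : q * ((l * v) ^ 2 / 2) = (l ^ 2 / 2) * (v ^ 2 * exp (-v)) := by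
      rw [hqv]; ring
    calc q * (exp (-(l * v)) - 1 - l * -v) ≤ q * ((l * v) ^ 2 / 2) := hq'
      _ = (l ^ 2 / 2) * (v ^ 2 * exp (-v)) := heq
      _ ≤ (l ^ 2 / 2) * (542 / 1000) := by
          apply mul_le_mul_of_nonneg_left hB5 (by positivity)
      _ ≤ l ^ 2 := by nlinarith [sq_nonneg l]
  · -- hard sign: r = -l, x = l * v
    rw [h, hlogq]
    have hB1 := B1 hl0 hl1 hv
    have harg : -l * -v = l * v := by ring
    rw [harg]
    have hq' : q * (exp (l * v) - 1 - l * v) ≤ q * (l ^ 2 * (exp v - 1 - v)) :=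
      mul_le_mul_of_nonneg_left hB1 hq0
    have hqe : q * exp v = 1 := by rw [hqv, ← Real.exp_add]; simp
    have h1v : 0 ≤ q * (1 + v) := by positivity
    calc q * (exp (l * v) - 1 - l * v) ≤ q * (l ^ 2 * (exp v - 1 - v)) := hq'
      _ = l ^ 2 * (q * exp v) - l ^ 2 * (q * (1 + v)) := by ring
      _ = l ^ 2 - l ^ 2 * (q * (1 + v)) := by rw [hqe]; ring
      _ ≤ l ^ 2 := by nlinarith [sq_nonneg l]

private lemma scalarII {q l r : ℝ} (hq0 : 0 ≤ q) (hq1 : q ≤ 1) (hl0 : 0 < l) (hl1 : l < 1)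
    (hr : r = l ∨ r = -l) :
    q * (exp (r * Real.log q) - 1 - r * Real.log q) ≤ (271 / 1000) * (l / (1 - l)) ^ 2 := by
  have hb : 0 < 1 - l := by linarith
  rcases eq_or_lt_of_le hq0 with h0 | hqpos
  · rw [← h0]; simp [Real.log_zero]; positivity
  set v : ℝ := -Real.log q with hvdef
  have hv : 0 ≤ v := by
    simp only [hvdef, le_neg, neg_zero]
    exact Real.log_nonpos hq0 hq1
  have hqv : q = exp (-v) := by rw [hvdef, neg_neg, Real.exp_log hqpos]
  have hlogq : Real.log q = -v := by rw [hvdef, neg_neg]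
  have hll : l ≤ l / (1 - l) := by
    rw [le_div_iff₀ hb]; nlinarith
  have hsq : l ^ 2 ≤ (l / (1 - l)) ^ 2 := by
    apply pow_le_pow_left₀ hl0.le hll
  rcases hr with h | h
  · -- easy sign
    rw [h, hlogq]
    have hB2 := B2 (mul_nonneg hl0.le hv)
    have hB5 := B5 hv
    have harg : exp (l * -v) = exp (-(l * v)) := by ring_nf
    rw [harg]
    have hq' : q * (exp (-(l * v)) - 1 - l * -v) ≤ q * ((l * v) ^ 2 / 2) := by
      apply mul_le_mul_of_nonneg_left _ hq0
      nlinarith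
    have heq : q * ((l * v) ^ 2 / 2) = (l ^ 2 / 2) * (v ^ 2 * exp (-v)) := by
      rw [hqv]; ring
    calc q * (exp (-(l * v)) - 1 - l * -v) ≤ q * ((l * v) ^ 2 / 2) := hq'
      _ = (l ^ 2 / 2) * (v ^ 2 * exp (-v)) := heq
      _ ≤ (l ^ 2 / 2) * (542 / 1000) := by
          apply mul_le_mul_of_nonneg_left hB5 (by positivity)
      _ = (271/1000) * l ^ 2 := by ring
      _ ≤ (271/1000) * (l / (1 - l)) ^ 2 := by nlinarith
  · -- hard sign
    rw [h, hlogq]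
    have harg : -l * -v = l * v := by ring
    rw [harg]
    have hB4 := B4 (mul_nonneg hl0.le hv)
    have hB5 := B5 (mul_nonneg hb.le hv)
    -- q * (exp(lv)-1-lv) ≤ q * ((lv)^2 exp(lv) / 2) = (l^2/2) v^2 exp(-(1-l)v)
    have hq' : q * (exp (l * v) - 1 - l * v) ≤ q * ((l * v) ^ 2 * exp (l * v) / 2) :=
      mul_le_mul_of_nonneg_left hB4 hq0
    have hexp : exp (-v) * exp (l * v) = exp (-((1 - l) * v)) := by
      rw [← Real.exp_add]; congr 1; ring
    have heq : q * ((l * v) ^ 2 * exp (l * v) / 2) = (l ^ 2 / 2) * (v ^ 2 * exp (-((1 - l) * v))) := by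
      rw [hqv, ← hexp]; ring
    -- v^2 exp(-(bv)) = (1/b^2) * ((bv)^2 exp(-(bv))) ≤ (1/b^2)(542/1000)
    have hs : v ^ 2 * exp (-((1 - l) * v)) ≤ (542/1000) / (1 - l) ^ 2 := by
      rw [le_div_iff₀ (by positivity)]
      calc v ^ 2 * exp (-((1 - l) * v)) * (1 - l) ^ 2
          = ((1 - l) * v) ^ 2 * exp (-((1 - l) * v)) := by ring
        _ ≤ 542/1000 := hB5
    calc q * (exp (l * v) - 1 - l * v) ≤ (l ^ 2 / 2) * (v ^ 2 * exp (-((1 - l) * v))) := by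
          rw [← heq]; exact hq'
      _ ≤ (l ^ 2 / 2) * ((542/1000) / (1 - l) ^ 2) := by
          apply mul_le_mul_of_nonneg_left hs (by positivity)
      _ = (271/1000) * (l / (1 - l)) ^ 2 := by
          field_simp; ring

end Scalar

/-- Bernstein-type bound for grouped Bernoulli observations: the variables
`X i j ~ Ber(p i j)` (group `i = 1,…,I`, member `j = 1,…,nGrp i`) are mutually
independent, `n = ∑ i, nGrp i`, and `p̄ i = (1/nGrp i) ∑ j, p i j` is the
within-group mean. Then for all `t > 0` (with `0 * log 0 = 0` via `Real.log 0 = 0`),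
`P(|∑ i ∑ j (X i j - p i j) log p̄ i| ≥ t) ≤ 2 exp(-t² / (2(n + t)))`. -/
theorem grouped_bernoulli_loglik_two_sided_tail
    {Ω : Type*} [MeasurableSpace Ω] (μ : Measure Ω) [IsProbabilityMeasure μ]
    (I : ℕ) (nGrp : Fin I → ℕ)
    (X : (i : Fin I) → Fin (nGrp i) → Ω → ℝ)
    (p : (i : Fin I) → Fin (nGrp i) → ℝ)
    (hp : ∀ i j, p i j ∈ Set.Icc (0 : ℝ) 1)
    (hmeas : ∀ i j, Measurable (X i j))
    (hval : ∀ i j ω, X i j ω = 0 ∨ X i j ω = 1)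
    (hdist : ∀ i j, μ {ω | X i j ω = 1} = ENNReal.ofReal (p i j))
    (hindep : iIndepFun
      (fun q : (Σ i : Fin I, Fin (nGrp i)) => X q.1 q.2) μ)
    (t : ℝ) (ht : 0 < t) :
    μ {ω | t ≤ |∑ i, ∑ j, (X i j ω - p i j) *
          Real.log ((∑ j', p i j') / (nGrp i))|}
      ≤ ENNReal.ofReal
          (2 * Real.exp (-t ^ 2 / (2 * ((∑ i, nGrp i : ℕ) + t)))) := by
  
  classical
  set qb : Fin I → ℝ := fun i => (∑ j', p i j') / (nGrp i) with hqbdef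
  set c : Fin I → ℝ := fun i => Real.log (qb i) with hcdef
  set Y : (Σ i : Fin I, Fin (nGrp i)) → Ω → ℝ :=
    fun q ω => (X q.1 q.2 ω - p q.1 q.2) * c q.1 with hYdef
  set S : Ω → ℝ := fun ω => ∑ q : Σ i : Fin I, Fin (nGrp i), Y q ω with hSdef
  set N : ℝ := ((∑ i, nGrp i : ℕ) : ℝ) with hNdef
  have hN0 : (0:ℝ) ≤ N := Nat.cast_nonneg _
  have hsum_eq : ∀ (f : (Σ i : Fin I, Fin (nGrp i)) → ℝ),
      (∑ q : Σ i : Fin I, Fin (nGrp i), f q) = ∑ i, ∑ j, f ⟨i, j⟩ := by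
    intro f
    rw [← Finset.univ_sigma_univ, Finset.sum_sigma]
  have hkey : ∀ ω, (∑ i, ∑ j, (X i j ω - p i j) *
      Real.log ((∑ j', p i j') / (nGrp i))) = S ω := by
    intro ω
    rw [hSdef]
    dsimp only
    rw [hsum_eq (fun q => (X q.1 q.2 ω - p q.1 q.2) * c q.1)]
  have hgoalset : {ω | t ≤ |∑ i, ∑ j, (X i j ω - p i j) *
      Real.log ((∑ j', p i j') / (nGrp i))|} = {ω | t ≤ |S ω|} := by
    ext ω
    simp only [Set.mem_setOf_eq, hkey ω]
  rw [hgoalset]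
  have hq0 : ∀ i, 0 ≤ qb i := by
    intro i
    exact div_nonneg (Finset.sum_nonneg fun j _ => (hp i j).1) (Nat.cast_nonneg _)
  have hq1 : ∀ i, qb i ≤ 1 := by
    intro i
    apply div_le_one_of_le₀ _ (Nat.cast_nonneg _)
    calc (∑ j', p i j') ≤ ∑ _j' : Fin (nGrp i), (1:ℝ) :=
          Finset.sum_le_sum fun j _ => (hp i j).2
      _ = nGrp i := by simp
  have hsump : ∀ i, (∑ j', p i j') = (nGrp i : ℝ) * qb i := by
    intro i
    rcases Nat.eq_zero_or_pos (nGrp i) with h0 | hpos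
    · simp only [h0, Nat.cast_zero, zero_mul]
      apply Finset.sum_eq_zero
      intro j _
      exact absurd j.2 (by omega)
    · have hn : ((nGrp i : ℝ)) ≠ 0 := by positivity
      rw [hqbdef]
      dsimp only
      field_simp
  have hgroup : ∀ (r Φ : ℝ), (∀ i, qb i * (Real.exp (r * c i) - 1 - r * c i) ≤ Φ) →
      (∑ q : Σ i : Fin I, Fin (nGrp i),
        p q.1 q.2 * (Real.exp (r * c q.1) - 1 - r * c q.1)) ≤ N * Φ := by
    intro r Φ hΦ
    rw [hsum_eq]
    have hgrp : ∀ i, (∑ j, p i j * (Real.exp (r * c i) - 1 - r * c i)) ≤ (nGrp i : ℝ) * Φ := by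
      intro i
      rw [← Finset.sum_mul, hsump i, mul_assoc]
      exact mul_le_mul_of_nonneg_left (hΦ i) (Nat.cast_nonneg _)
    calc (∑ i, ∑ j, p i j * (Real.exp (r * c i) - 1 - r * c i))
        ≤ ∑ i, (nGrp i : ℝ) * Φ := Finset.sum_le_sum fun i _ => hgrp i
      _ = N * Φ := by rw [hNdef]; push_cast; rw [Finset.sum_mul]
  have hmgf1 : ∀ (r : ℝ) (q : Σ i : Fin I, Fin (nGrp i)),
      mgf (Y q) μ r ≤ Real.exp (p q.1 q.2 * (Real.exp (r * c q.1) - 1 - r * c q.1)) := by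
    intro r q
    obtain ⟨i, j⟩ := q
    have hXint : Integrable (X i j) μ := by
      apply Integrable.mono' (integrable_const (1:ℝ)) (hmeas i j).aestronglyMeasurable
      filter_upwards with ω
      rcases hval i j ω with h | h <;> simp [h]
    have hXval : ∫ ω, X i j ω ∂μ = p i j := by
      have hset : MeasurableSet {ω | X i j ω = 1} :=
        (hmeas i j) (measurableSet_singleton (1:ℝ))
      have hind : X i j = Set.indicator {ω | X i j ω = 1} (fun _ => (1:ℝ)) := by
        funext ω
        rcases hval i j ω with h | h
        · rw [h, Set.indicator_of_notMem]
          simp [h]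
        · rw [h, Set.indicator_of_mem]
          exact h
      rw [hind, integral_indicator_const (1:ℝ) hset, measureReal_def, hdist i j,
        ENNReal.toReal_ofReal (hp i j).1, smul_eq_mul, mul_one]
    set A := Real.exp (r * ((0 - p i j) * c i)) with hAdef
    set B := Real.exp (r * ((1 - p i j) * c i)) with hBdef
    have hpt : (fun ω => Real.exp (r * Y ⟨i, j⟩ ω)) = fun ω => A + (B - A) * X i j ω := by
      funext ω
      rcases hval i j ω with h | h
      · simp only [hYdef]
        rw [h]
        simp only [mul_zero, add_zero, hAdef]
      · simp only [hYdef]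
        rw [h]
        simp only [mul_one, hAdef, hBdef]
        ring_nf
    have hmgfval : mgf (Y ⟨i, j⟩) μ r = A + (B - A) * p i j := by
      have h0 : mgf (Y ⟨i, j⟩) μ r = ∫ ω, Real.exp (r * Y ⟨i, j⟩ ω) ∂μ := rfl
      rw [h0, hpt, integral_add (integrable_const _) (hXint.const_mul _),
        integral_const, integral_const_mul, hXval]
      simp [measure_univ]
    rw [hmgfval]
    have hBA : B = A * Real.exp (r * c i) := by
      rw [hAdef, hBdef, ← Real.exp_add]
      congr 1
      ring
    have hApos : 0 < A := Real.exp_pos _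
    have h1 : A + (B - A) * p i j = A * (1 + p i j * (Real.exp (r * c i) - 1)) := by
      rw [hBA]
      ring
    rw [h1]
    have h2 : 1 + p i j * (Real.exp (r * c i) - 1)
        ≤ Real.exp (p i j * (Real.exp (r * c i) - 1)) := by
      have := Real.add_one_le_exp (p i j * (Real.exp (r * c i) - 1))
      linarith
    calc A * (1 + p i j * (Real.exp (r * c i) - 1))
        ≤ A * Real.exp (p i j * (Real.exp (r * c i) - 1)) :=
          mul_le_mul_of_nonneg_left h2 hApos.le
      _ = Real.exp (p i j * (Real.exp (r * c i) - 1 - r * c i)) := by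
          rw [hAdef, ← Real.exp_add]
          congr 1
          ring
  have hYmeas : ∀ q : Σ i : Fin I, Fin (nGrp i), Measurable (Y q) := fun q =>
    ((hmeas q.1 q.2).sub_const _).mul_const _
  have hYindep : iIndepFun Y μ := by
    have h := hindep.comp (fun q x => (x - p q.1 q.2) * c q.1)
      (fun q => (measurable_id.sub_const _).mul_const _)
    exact h
  have hSfun : S = ∑ q : Σ i : Fin I, Fin (nGrp i), Y q := by
    funext ω
    rw [hSdef]
    simp [Finset.sum_apply]
  have hmgfS : ∀ r : ℝ, mgf S μ r = ∏ q : Σ i : Fin I, Fin (nGrp i), mgf (Y q) μ r := by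
    intro r
    rw [hSfun]
    exact hYindep.mgf_sum hYmeas Finset.univ
  have hmgfSle : ∀ (r Φ : ℝ), (∀ i, qb i * (Real.exp (r * c i) - 1 - r * c i) ≤ Φ) →
      mgf S μ r ≤ Real.exp (N * Φ) := by
    intro r Φ hΦ
    rw [hmgfS r]
    calc (∏ q : Σ i : Fin I, Fin (nGrp i), mgf (Y q) μ r)
        ≤ ∏ q : Σ i : Fin I, Fin (nGrp i),
            Real.exp (p q.1 q.2 * (Real.exp (r * c q.1) - 1 - r * c q.1)) :=
          Finset.prod_le_prod (fun q _ => mgf_nonneg) (fun q _ => hmgf1 r q)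
      _ = Real.exp (∑ q : Σ i : Fin I, Fin (nGrp i),
            p q.1 q.2 * (Real.exp (r * c q.1) - 1 - r * c q.1)) := by
          rw [← Real.exp_sum]
      _ ≤ Real.exp (N * Φ) := Real.exp_le_exp.mpr (hgroup r Φ hΦ)
  have hSmeas : Measurable S := by
    apply Finset.measurable_sum
    exact fun q _ => hYmeas q
  have hCbd : ∀ r : ℝ, Integrable (fun ω => Real.exp (r * S ω)) μ := by
    intro r
    set C : ℝ := ∑ q : Σ i : Fin I, Fin (nGrp i), |c q.1| with hCdef
    apply Integrable.mono' (integrable_const (Real.exp (|r| * C)))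
    · exact (Real.measurable_exp.comp (measurable_const.mul hSmeas)).aestronglyMeasurable
    · filter_upwards with ω
      rw [Real.norm_eq_abs, Real.abs_exp]
      apply Real.exp_le_exp.mpr
      have hYbd : ∀ q : Σ i : Fin I, Fin (nGrp i), |Y q ω| ≤ |c q.1| := by
        intro q
        rw [hYdef]
        dsimp only
        rw [abs_mul]
        have hd1 : |X q.1 q.2 ω - p q.1 q.2| ≤ 1 := by
          have h1 := (hp q.1 q.2).1
          have h2 := (hp q.1 q.2).2
          rcases hval q.1 q.2 ω with h | h <;> rw [h] <;> rw [abs_le] <;> constructor <;> linarith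
        nlinarith [abs_nonneg (c q.1), abs_nonneg (X q.1 q.2 ω - p q.1 q.2)]
      have hSbd : |S ω| ≤ C := by
        rw [hSdef]
        dsimp only
        calc |∑ q : Σ i : Fin I, Fin (nGrp i), Y q ω|
            ≤ ∑ q : Σ i : Fin I, Fin (nGrp i), |Y q ω| := Finset.abs_sum_le_sum_abs _ _
          _ ≤ C := Finset.sum_le_sum fun q _ => hYbd q
      calc r * S ω ≤ |r * S ω| := le_abs_self _
        _ = |r| * |S ω| := abs_mul _ _
        _ ≤ |r| * C := mul_le_mul_of_nonneg_left hSbd (abs_nonneg r)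
  have hmain : ∀ (l Φ : ℝ), 0 < l →
      (∀ r : ℝ, r = l ∨ r = -l → ∀ i, qb i * (Real.exp (r * c i) - 1 - r * c i) ≤ Φ) →
      N * Φ - l * t ≤ -t ^ 2 / (2 * (N + t)) →
      μ {ω | t ≤ |S ω|} ≤ ENNReal.ofReal (2 * Real.exp (-t ^ 2 / (2 * (N + t)))) := by
    intro l Φ hl hΦ hnum
    set e : ℝ := Real.exp (-t ^ 2 / (2 * (N + t))) with hedef
    have hepos : 0 < e := Real.exp_pos _
    have hup : (μ {ω | t ≤ S ω}).toReal ≤ e := by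
      calc (μ {ω | t ≤ S ω}).toReal ≤ Real.exp (-l * t) * mgf S μ l :=
          measure_ge_le_exp_mul_mgf t hl.le (hCbd l)
        _ ≤ Real.exp (-l * t) * Real.exp (N * Φ) :=
          mul_le_mul_of_nonneg_left (hmgfSle l Φ (hΦ l (Or.inl rfl))) (Real.exp_pos _).le
        _ = Real.exp (N * Φ - l * t) := by rw [← Real.exp_add]; ring_nf
        _ ≤ e := Real.exp_le_exp.mpr hnum
    have hdn : (μ {ω | t ≤ -S ω}).toReal ≤ e := by
      have hintneg : Integrable (fun ω => Real.exp (l * (-S) ω)) μ := by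
        have heq : (fun ω => Real.exp (l * (-S) ω)) = fun ω => Real.exp ((-l) * S ω) := by
          funext ω
          simp only [Pi.neg_apply]
          ring_nf
        rw [heq]
        exact hCbd (-l)
      have h := measure_ge_le_exp_mul_mgf (X := -S) (μ := μ) t hl.le hintneg
      rw [mgf_neg] at h
      calc (μ {ω | t ≤ -S ω}).toReal ≤ Real.exp (-l * t) * mgf S μ (-l) := h
        _ ≤ Real.exp (-l * t) * Real.exp (N * Φ) :=
          mul_le_mul_of_nonneg_left (hmgfSle (-l) Φ (hΦ (-l) (Or.inr rfl))) (Real.exp_pos _).le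
        _ = Real.exp (N * Φ - l * t) := by rw [← Real.exp_add]; ring_nf
        _ ≤ e := Real.exp_le_exp.mpr hnum
    have hsub : {ω | t ≤ |S ω|} ⊆ {ω | t ≤ S ω} ∪ {ω | t ≤ -S ω} := by
      intro ω hω
      have hω' : t ≤ |S ω| := hω
      rcases le_abs.mp hω' with h | h
      · exact Or.inl h
      · exact Or.inr h
    calc μ {ω | t ≤ |S ω|} ≤ μ ({ω | t ≤ S ω} ∪ {ω | t ≤ -S ω}) := measure_mono hsub
      _ ≤ μ {ω | t ≤ S ω} + μ {ω | t ≤ -S ω} := measure_union_le _ _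
      _ ≤ ENNReal.ofReal e + ENNReal.ofReal e := by
          apply add_le_add
          · rw [← ENNReal.ofReal_toReal (measure_ne_top μ _)]
            exact ENNReal.ofReal_le_ofReal hup
          · rw [← ENNReal.ofReal_toReal (measure_ne_top μ _)]
            exact ENNReal.ofReal_le_ofReal hdn
      _ = ENNReal.ofReal (2 * e) := by
          rw [← ENNReal.ofReal_add hepos.le hepos.le]
          norm_num [two_mul]
  rcases le_or_gt N t with hNt | hNt
  · -- large deviation regime : N ≤ t
    have hd : 0 < N + t := by linarith
    set l : ℝ := t / (N + t) with hldef
    have hl0 : 0 < l := div_pos ht hd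
    have hl1 : l ≤ 1 := by
      rw [hldef, div_le_one hd]
      linarith
    apply hmain l (l ^ 2) hl0
    · intro r hr i
      exact scalarI (hq0 i) (hq1 i) hl0.le hl1 hr
    · have key : N * l ^ 2 ≤ t ^ 2 / (2 * (N + t)) := by
        rw [hldef, div_pow, ← mul_div_assoc,
          div_le_div_iff₀ (by positivity) (by positivity)]
        nlinarith [mul_nonneg (mul_nonneg (sq_nonneg t) hd.le) (sub_nonneg.2 hNt)]
      have hlt : l * t = t ^ 2 / (N + t) := by
        rw [hldef]
        field_simp
      have hid : t ^ 2 / (2 * (N + t)) - t ^ 2 / (N + t) = -t ^ 2 / (2 * (N + t)) := by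
        field_simp
        ring
      rw [hlt]
      linarith
  · -- small deviation regime : t < N
    have hd : 0 < N + t := by linarith
    have hd5 : 0 < 5 * N + t := by linarith
    set l : ℝ := 4 * t / (5 * (N + t)) with hldef
    have hl0 : 0 < l := div_pos (by linarith) (by linarith)
    have hl1 : l < 1 := by
      rw [hldef, div_lt_one (by linarith)]
      linarith
    apply hmain l ((271 / 1000) * (l / (1 - l)) ^ 2) hl0
    · intro r hr i
      exact scalarII (hq0 i) (hq1 i) hl0 hl1 hr
    · have h1l : 1 - l = (5 * N + t) / (5 * (N + t)) := by
        rw [hldef]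
        field_simp
        ring
      have hll : l / (1 - l) = 4 * t / (5 * N + t) := by
        rw [hldef, h1l]
        rw [div_div_div_eq]
        field_simp
      have key : N * ((271 / 1000) * (4 * t / (5 * N + t)) ^ 2)
          ≤ 3 * t ^ 2 / (10 * (N + t)) := by
        rw [div_pow, ← mul_div_assoc, ← mul_div_assoc,
          div_le_div_iff₀ (by positivity) (by positivity)]
        nlinarith [sq_nonneg (3000 * t - 6680 * N), sq_nonneg N, mul_pos ht ht,
          mul_nonneg hN0 ht.le]
      have hlt : l * t = 4 * t ^ 2 / (5 * (N + t)) := by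
        rw [hldef]
        field_simp
      have hid : 3 * t ^ 2 / (10 * (N + t)) - 4 * t ^ 2 / (5 * (N + t))
          = -t ^ 2 / (2 * (N + t)) := by
        field_simp
        ring
      rw [hll, hlt]
      linarith
end

section
/- Let X_j^{(i)} = (X_{j1}^{(i)}, …, X_{jK}^{(i)}), for i = 1,…,I and j = 1,…,n_i, be mutually independent multinoulli (categorical) variables: each X_{jk}^{(i)} ∈ {0,1}, Σ_{k=1}^K X_{jk}^{(i)} = 1, and P(X_{jk}^{(i)} = 1) = p_{jk}^{(i)} ∈ [0,1]. Let n = Σ_{i=1}^I n_i and p̄_k^{(i)} = (1/n_i)·Σ_{j=1}^{n_i} p_{jk}^{(i)}. Then, with the convention 0·log 0 = 0, for all ε > 0: P( | Σ_{i=1}^I Σ_{j=1}^{n_i} Σ_{k=1}^K ( X_{jk}^{(i)} − p_{jk}^{(i)} )·log p̄_k^{(i)} | ≥ nε ) ≤ 2K·exp( − n ε² / (2K(K + ε)) ). -/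
open MeasureTheory ProbabilityTheory Finset

/-- `u^m ≤ (m!/2) exp u` for `u ≥ 0`, `m ≥ 1`. -/
lemma aux_pow_le_factorial_exp (u : ℝ) (hu : 0 ≤ u) (m' : ℕ) :
    u ^ (m' + 1) ≤ ((m' + 1).factorial : ℝ) / 2 * Real.exp u := by
  have hs := Real.sum_le_exp_of_nonneg hu (m' + 3)
  rw [Finset.sum_range_succ, Finset.sum_range_succ, Finset.sum_range_succ] at hs
  have h0 : (0:ℝ) ≤ ∑ i ∈ Finset.range m', u ^ i / i.factorial := by positivity
  set M : ℝ := (m' : ℝ) with hM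
  have hM0 : (0:ℝ) ≤ M := Nat.cast_nonneg _
  have hF : (0:ℝ) < (m'.factorial : ℝ) := by positivity
  set F : ℝ := (m'.factorial : ℝ) with hFdef
  have hfact1 : ((m' + 1).factorial : ℝ) = (M + 1) * F := by
    rw [Nat.factorial_succ]; push_cast; ring
  have hfact2 : ((m' + 2).factorial : ℝ) = (M + 2) * ((M + 1) * F) := by
    show ((m' + 1 + 1).factorial : ℝ) = _
    rw [Nat.factorial_succ, Nat.factorial_succ]; push_cast; ring
  have hterms : u ^ m' / F + u ^ (m' + 1) / ((M + 1) * F)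
      + u ^ (m' + 2) / ((M + 2) * ((M + 1) * F)) ≤ Real.exp u := by
    rw [← hfact2, ← hfact1]; linarith
  have hpm : (0:ℝ) ≤ u ^ m' := pow_nonneg hu _
  have h1 : (0:ℝ) < M + 1 := by linarith
  have h2 : (0:ℝ) < M + 2 := by linarith
  have h' : u ^ m' * ((M + 1) * (M + 2)) + (u ^ m' * u) * (M + 2) + u ^ m' * u ^ 2
      ≤ (F * (M + 1) * (M + 2)) * Real.exp u := by
    have hpos : (0:ℝ) < F * (M + 1) * (M + 2) := by positivity
    have := mul_le_mul_of_nonneg_left hterms (le_of_lt hpos)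
    calc u ^ m' * ((M + 1) * (M + 2)) + (u ^ m' * u) * (M + 2) + u ^ m' * u ^ 2
        = (F * (M + 1) * (M + 2)) * (u ^ m' / F + u ^ (m' + 1) / ((M + 1) * F)
            + u ^ (m' + 2) / ((M + 2) * ((M + 1) * F))) := by
          field_simp
          ring
      _ ≤ _ := this
  rw [hfact1]
  have e1 : u ^ (m' + 1) = u ^ m' * u := by ring
  rw [e1]
  nlinarith [h', mul_nonneg hpm (sq_nonneg (2 * u - (M + 2))), hpm, hM0,
    mul_nonneg hpm hM0, mul_nonneg (mul_nonneg hpm hM0) hM0, hu, mul_nonneg hpm hu,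
    mul_nonneg (mul_nonneg hpm hu) hM0]

lemma aux_exp_le_quadratic (t u : ℝ) (ht0 : 0 ≤ t) (ht1 : t < 1) (hu : 0 ≤ u) :
    Real.exp (t * u) ≤ 1 + t * u + t ^ 2 / (2 * (1 - t)) * Real.exp u := by
  have h1t : (0:ℝ) < 1 - t := by linarith
  have htu : 0 ≤ t * u := mul_nonneg ht0 hu
  have hexp_eq : Real.exp (t * u) = ∑' n : ℕ, (t * u) ^ n / n.factorial := by
    rw [Real.exp_eq_exp_ℝ, NormedSpace.exp_eq_tsum_div]
  rw [hexp_eq]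
  apply Real.tsum_le_of_sum_range_le (fun n => by positivity)
  intro N
  match N with
  | 0 =>
    have h2 : (0:ℝ) ≤ t ^ 2 / (2 * (1 - t)) * Real.exp u := by positivity
    simp only [Finset.range_zero, Finset.sum_empty]
    nlinarith [mul_nonneg ht0 hu]
  | 1 =>
    have h2 : (0:ℝ) ≤ t ^ 2 / (2 * (1 - t)) * Real.exp u := by positivity
    simp only [Finset.sum_range_one, pow_zero, Nat.factorial_zero, Nat.cast_one, div_one]
    nlinarith [mul_nonneg ht0 hu]
  | (n+2) =>
    rw [Finset.sum_range_succ' _ (n+1), Finset.sum_range_succ' _ n]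
    have hgeom : ∑ i ∈ Finset.range n, t ^ i ≤ (1 - t)⁻¹ := by
      have := Summable.sum_le_tsum (Finset.range n) (fun i _ => pow_nonneg ht0 i)
        (summable_geometric_of_lt_one ht0 ht1)
      rwa [tsum_geometric_of_lt_one ht0 ht1] at this
    have hterm : ∀ i ∈ Finset.range n,
        (t * u) ^ (i + 1 + 1) / ((i + 1 + 1).factorial : ℝ)
          ≤ Real.exp u / 2 * t ^ (i + 1 + 1) := by
      intro i _
      have haux := aux_pow_le_factorial_exp u hu (i + 1)
      have hfpos : (0:ℝ) < ((i + 1 + 1).factorial : ℝ) := by positivity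
      rw [mul_pow, div_le_iff₀ hfpos]
      calc t ^ (i+1+1) * u ^ (i+1+1) ≤ t ^ (i+1+1) * (((i+1+1).factorial : ℝ) / 2 * Real.exp u) := by
            exact mul_le_mul_of_nonneg_left haux (pow_nonneg ht0 _)
        _ = Real.exp u / 2 * t ^ (i+1+1) * ((i+1+1).factorial : ℝ) := by ring
    have hsum : ∑ i ∈ Finset.range n, (t * u) ^ (i + 1 + 1) / ((i + 1 + 1).factorial : ℝ)
        ≤ Real.exp u / 2 * (t ^ 2 * (1 - t)⁻¹) := by
      calc ∑ i ∈ Finset.range n, (t * u) ^ (i + 1 + 1) / ((i + 1 + 1).factorial : ℝ)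
          ≤ ∑ i ∈ Finset.range n, Real.exp u / 2 * t ^ (i + 1 + 1) := Finset.sum_le_sum hterm
        _ = Real.exp u / 2 * (t ^ 2 * ∑ i ∈ Finset.range n, t ^ i) := by
            rw [Finset.mul_sum, Finset.mul_sum]
            congr 1; ext i; ring
        _ ≤ Real.exp u / 2 * (t ^ 2 * (1 - t)⁻¹) := by
            have he : (0:ℝ) ≤ Real.exp u / 2 := by positivity
            have ht2 : (0:ℝ) ≤ t ^ 2 := sq_nonneg t
            exact mul_le_mul_of_nonneg_left (mul_le_mul_of_nonneg_left hgeom ht2) he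
    have e0 : (t * u) ^ 0 / ((Nat.factorial 0 : ℕ) : ℝ) = 1 := by norm_num
    have e1 : (t * u) ^ (0 + 1) / (((0 + 1).factorial : ℕ) : ℝ) = t * u := by norm_num
    rw [e0, e1]
    have : Real.exp u / 2 * (t ^ 2 * (1 - t)⁻¹) = t ^ 2 / (2 * (1 - t)) * Real.exp u := by
      field_simp
    linarith [hsum]

lemma aux_exp_neg_mul_phi (t u : ℝ) (ht0 : 0 ≤ t) (ht1 : t < 1) (hu : 0 ≤ u) :
    Real.exp (-u) * (Real.exp (t * u) - 1 - t * u) ≤ t ^ 2 / (2 * (1 - t)) := by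
  have h := aux_exp_le_quadratic t u ht0 ht1 hu
  have hpos : (0:ℝ) < Real.exp (-u) := Real.exp_pos _
  calc Real.exp (-u) * (Real.exp (t * u) - 1 - t * u)
      ≤ Real.exp (-u) * (t ^ 2 / (2 * (1 - t)) * Real.exp u) :=
        mul_le_mul_of_nonneg_left (by linarith) hpos.le
    _ = t ^ 2 / (2 * (1 - t)) * (Real.exp (-u) * Real.exp u) := by ring
    _ = t ^ 2 / (2 * (1 - t)) := by rw [← Real.exp_add]; norm_num

lemma aux_exp_neg_le_quadratic (s : ℝ) (hs : 0 ≤ s) :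
    Real.exp (-s) ≤ 1 - s + s ^ 2 / 2 := by
  have hq := Real.quadratic_le_exp_of_nonneg hs
  have hpos : (0:ℝ) < 1 - s + s ^ 2 / 2 := by nlinarith [sq_nonneg (s - 1)]
  rw [Real.exp_neg, inv_eq_one_div, div_le_iff₀ (Real.exp_pos s)]
  nlinarith [mul_le_mul_of_nonneg_left hq hpos.le, sq_nonneg (s * s), sq_nonneg s]

/-- Key per-group bound: for `x ∈ [0,1]`, `0 ≤ t < 1` and `a = ± t * log x`,
`x (eᵃ - 1 - a) ≤ t²/(2(1-t))`. -/
lemma aux_phi_bound (x t a : ℝ) (hx0 : 0 ≤ x) (hx1 : x ≤ 1) (ht0 : 0 ≤ t) (ht1 : t < 1)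
    (ha : a = t * Real.log x ∨ a = -(t * Real.log x)) :
    x * (Real.exp a - 1 - a) ≤ t ^ 2 / (2 * (1 - t)) := by
  have h1t : (0:ℝ) < 1 - t := by linarith
  have hrhs : (0:ℝ) ≤ t ^ 2 / (2 * (1 - t)) := by positivity
  rcases hx0.eq_or_lt with rfl | hx
  · have ha0 : a = 0 := by rcases ha with rfl | rfl <;> simp [Real.log_zero]
    simp [ha0, hrhs]
  · set u : ℝ := -Real.log x with hudef
    have hu0 : 0 ≤ u := by
      have := Real.log_nonpos hx0 hx1
      simp only [hudef]; linarith
    have hxe : x = Real.exp (-u) := by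
      rw [hudef, neg_neg, Real.exp_log hx]
    rcases ha with rfl | rfl
    · -- a = t log x = -(t u) ≤ 0 : quadratic bound
      have ha' : t * Real.log x = -(t * u) := by simp only [hudef]; ring
      rw [ha', hxe]
      have hq := aux_exp_neg_le_quadratic (t * u) (mul_nonneg ht0 hu0)
      have husq : u ^ 2 * Real.exp (-u) ≤ 1 := by
        have := aux_pow_le_factorial_exp u hu0 1
        have he : (0:ℝ) < Real.exp u := Real.exp_pos u
        rw [show ((1+1 : ℕ).factorial : ℝ) = 2 by norm_num] at this
        rw [Real.exp_neg, mul_inv_le_iff₀ he, one_mul]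
        calc u ^ (1+1) ≤ (2:ℝ)/2 * Real.exp u := this
          _ = Real.exp u := by ring
      calc Real.exp (-u) * (Real.exp (-(t * u)) - 1 - -(t * u))
          ≤ Real.exp (-u) * ((t * u) ^ 2 / 2) := by
            apply mul_le_mul_of_nonneg_left _ (Real.exp_pos (-u)).le
            nlinarith [hq]
        _ = t ^ 2 / 2 * (u ^ 2 * Real.exp (-u)) := by ring
        _ ≤ t ^ 2 / 2 * 1 := by
            exact mul_le_mul_of_nonneg_left husq (by positivity)
        _ = t ^ 2 / 2 := mul_one _
        _ ≤ t ^ 2 / (2 * (1 - t)) := by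
            apply div_le_div_of_nonneg_left (sq_nonneg t) (by linarith) (by linarith)
    · -- a = -t log x = t u ≥ 0 : series bound
      have ha' : -(t * Real.log x) = t * u := by simp only [hudef]; ring
      rw [ha', hxe]
      exact aux_exp_neg_mul_phi t u ht0 ht1 hu0

lemma aux_bernoulli_mgf {Ω : Type*} [MeasurableSpace Ω] (μ : Measure Ω) [IsProbabilityMeasure μ]
    (W : Ω → ℝ) (hW : Measurable W) (hval : ∀ ω, W ω = 0 ∨ W ω = 1)
    (q c t : ℝ) (hq0 : 0 ≤ q) (hdist : μ {ω | W ω = 1} = ENNReal.ofReal q) :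
    Integrable (fun ω => Real.exp (t * ((W ω - q) * c))) μ ∧
      mgf (fun ω => (W ω - q) * c) μ t
        ≤ Real.exp (q * (Real.exp (t * c) - 1 - t * c)) := by
  set a : ℝ := t * c with ha
  set A : Set Ω := {ω | W ω = 1} with hAdef
  have hA : MeasurableSet A := by
    have : A = W ⁻¹' {1} := by ext ω; simp [hAdef]
    rw [this]; exact hW (measurableSet_singleton 1)
  set C1 : ℝ := Real.exp (-(a * q)) with hC1
  set C2 : ℝ := Real.exp (a * (1 - q)) - Real.exp (-(a * q)) with hC2
  have hpoint : ∀ ω, Real.exp (t * ((W ω - q) * c))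
      = C1 + C2 * A.indicator (fun _ => (1:ℝ)) ω := by
    intro ω
    rcases hval ω with h0 | h1
    · have hnot : ω ∉ A := by simp [hAdef, h0]
      rw [Set.indicator_of_notMem hnot]
      rw [h0]; simp [hC1, ha]; ring_nf
    · have hmem : ω ∈ A := by simp [hAdef, h1]
      rw [Set.indicator_of_mem hmem]
      rw [h1]; simp [hC1, hC2, ha]; ring_nf
  have hint : Integrable (fun ω => Real.exp (t * ((W ω - q) * c))) μ := by
    rw [funext hpoint]
    exact (integrable_const C1).add (((integrable_const (1:ℝ)).indicator hA).const_mul C2)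
  refine ⟨hint, ?_⟩
  have hmuA : (μ A).toReal = q := by rw [hdist]; exact ENNReal.toReal_ofReal hq0
  have hmgf_eq : mgf (fun ω => (W ω - q) * c) μ t = C1 + C2 * q := by
    rw [mgf]
    rw [funext hpoint]
    rw [integral_add (integrable_const C1)
      (((integrable_const (1:ℝ)).indicator hA).const_mul C2)]
    rw [MeasureTheory.integral_const_mul]
    rw [MeasureTheory.integral_indicator_const (1:ℝ) hA]
    rw [MeasureTheory.integral_const]
    simp [measureReal_def, hmuA]
  rw [hmgf_eq]
  have hexp1 : Real.exp (a * (1 - q)) = Real.exp a * Real.exp (-(a * q)) := by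
    rw [← Real.exp_add]; ring_nf
  have step1 : C1 + C2 * q = Real.exp (-(a * q)) * (1 + q * (Real.exp a - 1)) := by
    rw [hC1, hC2, hexp1]; ring
  rw [step1]
  have step2 : 1 + q * (Real.exp a - 1) ≤ Real.exp (q * (Real.exp a - 1)) := by
    have := Real.add_one_le_exp (q * (Real.exp a - 1))
    linarith
  calc Real.exp (-(a * q)) * (1 + q * (Real.exp a - 1))
      ≤ Real.exp (-(a * q)) * Real.exp (q * (Real.exp a - 1)) :=
        mul_le_mul_of_nonneg_left step2 (Real.exp_pos _).le
    _ = Real.exp (q * (Real.exp a - 1 - a)) := by rw [← Real.exp_add]; ring_nf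

/-- Bernstein-type bound for grouped multinoulli observations: the random
vectors `X i j : Ω → (Fin K → ℝ)` (group `i = 1,…,I`, member `j = 1,…,nGrp i`)
are mutually independent, have `0/1` coordinates summing to `1`, and satisfy
`P(X i j k = 1) = p i j k`. With `n = ∑ i, nGrp i` and the within-group means
`p̄ i k = (1/nGrp i) ∑ j, p i j k`, for all `ε > 0` (with `0 * log 0 = 0` via
`Real.log 0 = 0`):
`P(|∑ i ∑ j ∑ k (X i j k - p i j k) log p̄ i k| ≥ nε) ≤ 2K exp(-nε²/(2K(K+ε)))`. -/
theorem grouped_multinoulli_loglik_two_sided_tail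
    {Ω : Type*} [MeasurableSpace Ω] (μ : Measure Ω) [IsProbabilityMeasure μ]
    (I K : ℕ) (hK : 0 < K) (nGrp : Fin I → ℕ)
    (X : (i : Fin I) → Fin (nGrp i) → Ω → (Fin K → ℝ))
    (p : (i : Fin I) → Fin (nGrp i) → Fin K → ℝ)
    (hp : ∀ i j k, p i j k ∈ Set.Icc (0 : ℝ) 1)
    (hmeas : ∀ i j, Measurable (X i j))
    (hval : ∀ i j ω k, X i j ω k = 0 ∨ X i j ω k = 1)
    (hsum : ∀ i j ω, ∑ k, X i j ω k = 1)
    (hdist : ∀ i j k, μ {ω | X i j ω k = 1} = ENNReal.ofReal (p i j k))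
    (hindep : iIndepFun
      (fun q : (Σ i : Fin I, Fin (nGrp i)) => X q.1 q.2) μ)
    (ε : ℝ) (hε : 0 < ε) :
    μ {ω | ((∑ i, nGrp i : ℕ) : ℝ) * ε ≤
          |∑ i, ∑ j, ∑ k, (X i j ω k - p i j k) *
            Real.log ((∑ j', p i j' k) / (nGrp i))|}
      ≤ ENNReal.ofReal
          (2 * (K : ℝ) *
            Real.exp (-((∑ i, nGrp i : ℕ) : ℝ) * ε ^ 2 /
              (2 * (K : ℝ) * ((K : ℝ) + ε)))) := by
  classical
  have hKR : (0:ℝ) < K := by exact_mod_cast hK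
  have hKε : (0:ℝ) < (K:ℝ) + ε := by linarith
  set n : ℕ := ∑ i, nGrp i with hn
  set t : ℝ := ε / ((K:ℝ) + ε) with htdef
  have ht0 : 0 ≤ t := le_of_lt (div_pos hε hKε)
  have ht1 : t < 1 := by rw [htdef, div_lt_one hKε]; linarith
  set B : ℝ := Real.exp (-(n:ℝ) * ε ^ 2 / (2 * (K:ℝ) * ((K:ℝ) + ε))) with hB
  set c : Fin I → Fin K → ℝ :=
    fun i k => Real.log ((∑ j', p i j' k) / (nGrp i)) with hc
  set S : Fin K → Ω → ℝ :=
    fun k ω => ∑ i, ∑ j, (X i j ω k - p i j k) * c i k with hS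
  -- per-category, per-sign Chernoff bound
  have tail : ∀ (k : Fin K) (σ : ℝ), (σ = 1 ∨ σ = -1) →
      μ {ω | (n:ℝ) * ε / K ≤ σ * S k ω} ≤ ENNReal.ofReal B := by
    intro k σ hσ
    set Y : (Σ i : Fin I, Fin (nGrp i)) → Ω → ℝ :=
      fun q ω => (X q.1 q.2 ω k - p q.1 q.2 k) * (σ * c q.1 k) with hY
    have hXkmeas : ∀ q : (Σ i : Fin I, Fin (nGrp i)),
        Measurable fun ω => X q.1 q.2 ω k :=
      fun q => (measurable_pi_apply k).comp (hmeas q.1 q.2)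
    have hYmeas : ∀ q, Measurable (Y q) :=
      fun q => ((hXkmeas q).sub measurable_const).mul_const _
    have hYindep : iIndepFun Y μ :=
      hindep.comp (fun q => fun (v : Fin K → ℝ) => (v k - p q.1 q.2 k) * (σ * c q.1 k))
        (fun q => ((measurable_pi_apply k).sub measurable_const).mul_const _)
    have hber : ∀ q : (Σ i : Fin I, Fin (nGrp i)),
        Integrable (fun ω => Real.exp (t * Y q ω)) μ ∧
        mgf (Y q) μ t ≤ Real.exp (p q.1 q.2 k *
          (Real.exp (t * (σ * c q.1 k)) - 1 - t * (σ * c q.1 k))) :=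
      fun q => aux_bernoulli_mgf μ (fun ω => X q.1 q.2 ω k) (hXkmeas q)
        (fun ω => hval q.1 q.2 ω k) (p q.1 q.2 k) (σ * c q.1 k) t
        (hp q.1 q.2 k).1 (hdist q.1 q.2 k)
    have hint_sum : Integrable (fun ω => Real.exp (t * (∑ q, Y q) ω)) μ :=
      hYindep.integrable_exp_mul_sum hYmeas (fun q _ => (hber q).1)
    have hchern := measure_ge_le_exp_mul_mgf ((n:ℝ) * ε / K) ht0 hint_sum
    have hmgf_sum : mgf (∑ q, Y q) μ t = ∏ q, mgf (Y q) μ t :=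
      hYindep.mgf_sum hYmeas Finset.univ
    -- bound the product of mgfs
    have hprod : ∏ q, mgf (Y q) μ t ≤ Real.exp ((n:ℝ) * (t ^ 2 / (2 * (1 - t)))) := by
      calc ∏ q, mgf (Y q) μ t
          ≤ ∏ q : (Σ i : Fin I, Fin (nGrp i)), Real.exp (p q.1 q.2 k *
              (Real.exp (t * (σ * c q.1 k)) - 1 - t * (σ * c q.1 k))) :=
            Finset.prod_le_prod (fun q _ => mgf_nonneg) (fun q _ => (hber q).2)
        _ = Real.exp (∑ q : (Σ i : Fin I, Fin (nGrp i)), p q.1 q.2 k *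
              (Real.exp (t * (σ * c q.1 k)) - 1 - t * (σ * c q.1 k))) :=
            (Real.exp_sum _ _).symm
        _ ≤ Real.exp ((n:ℝ) * (t ^ 2 / (2 * (1 - t)))) := by
            apply Real.exp_le_exp.2
            rw [← Finset.univ_sigma_univ, Finset.sum_sigma]
            have hgroup : ∀ i : Fin I, (∑ j, p i j k *
                (Real.exp (t * (σ * c i k)) - 1 - t * (σ * c i k)))
                ≤ (nGrp i : ℝ) * (t ^ 2 / (2 * (1 - t))) := by
              intro i
              rw [← Finset.sum_mul]
              set Sp : ℝ := ∑ j, p i j k with hSp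
              set m : ℝ := (nGrp i : ℝ) with hm
              have hSp0 : 0 ≤ Sp := Finset.sum_nonneg fun j _ => (hp i j k).1
              have hSpm : Sp ≤ m := by
                rw [hSp, hm]
                calc ∑ j, p i j k ≤ ∑ j : Fin (nGrp i), (1:ℝ) :=
                      Finset.sum_le_sum fun j _ => (hp i j k).2
                  _ = (nGrp i : ℝ) := by simp
              have hm0 : 0 ≤ m := Nat.cast_nonneg _
              set x : ℝ := Sp / m with hx
              have hck : c i k = Real.log x := by rw [hc]
              rcases eq_or_lt_of_le hm0 with hm0' | hmpos
              · -- nGrp i = 0 : Sp = 0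
                have : Sp = 0 := le_antisymm (by rw [← hm0'] at hSpm; exact hSpm) hSp0
                rw [this, zero_mul, ← hm0', zero_mul]
              · have hx0 : 0 ≤ x := div_nonneg hSp0 hm0
                have hx1 : x ≤ 1 := by rw [hx, div_le_one hmpos]; exact hSpm
                have hSpx : Sp = m * x := by rw [hx]; field_simp
                have ha : t * (σ * c i k) = t * Real.log x ∨
                    t * (σ * c i k) = -(t * Real.log x) := by
                  rcases hσ with rfl | rfl
                  · left; rw [hck]; ring
                  · right; rw [hck]; ring
                have := aux_phi_bound x t (t * (σ * c i k)) hx0 hx1 ht0 ht1 ha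
                calc Sp * (Real.exp (t * (σ * c i k)) - 1 - t * (σ * c i k))
                    = m * (x * (Real.exp (t * (σ * c i k)) - 1 - t * (σ * c i k))) := by
                      rw [hSpx]; ring
                  _ ≤ m * (t ^ 2 / (2 * (1 - t))) :=
                      mul_le_mul_of_nonneg_left this hm0
            calc ∑ i, ∑ j, p i j k *
                  (Real.exp (t * (σ * c i k)) - 1 - t * (σ * c i k))
                ≤ ∑ i, (nGrp i : ℝ) * (t ^ 2 / (2 * (1 - t))) :=
                  Finset.sum_le_sum fun i _ => hgroup i
              _ = (n:ℝ) * (t ^ 2 / (2 * (1 - t))) := by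
                  rw [← Finset.sum_mul, hn]; push_cast; ring
    -- numeric identity
    have hnum : Real.exp (-t * ((n:ℝ) * ε / K)) *
        Real.exp ((n:ℝ) * (t ^ 2 / (2 * (1 - t)))) = B := by
      rw [← Real.exp_add, hB]
      congr 1
      have h1t : 1 - t = (K:ℝ) / ((K:ℝ) + ε) := by
        rw [htdef]; field_simp; ring
      rw [htdef, h1t]
      field_simp
      ring
    -- assemble
    have hset : {ω | (n:ℝ) * ε / K ≤ σ * S k ω}
        = {ω | (n:ℝ) * ε / K ≤ (∑ q, Y q) ω} := by
      ext ω
      simp only [Set.mem_setOf_eq, Finset.sum_apply]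
      have : (∑ q : (Σ i : Fin I, Fin (nGrp i)), Y q ω) = σ * S k ω := by
        rw [hY, hS]
        rw [← Finset.univ_sigma_univ, Finset.sum_sigma]
        rw [Finset.mul_sum]
        refine Finset.sum_congr rfl fun i _ => ?_
        rw [Finset.mul_sum]
        exact Finset.sum_congr rfl fun j _ => by ring
      rw [this]
    have htoReal : (μ {ω | (n:ℝ) * ε / K ≤ σ * S k ω}).toReal ≤ B := by
      rw [hset]
      calc (μ {ω | (n:ℝ) * ε / K ≤ (∑ q, Y q) ω}).toReal
          ≤ Real.exp (-t * ((n:ℝ) * ε / K)) * mgf (∑ q, Y q) μ t := hchern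
        _ ≤ Real.exp (-t * ((n:ℝ) * ε / K)) *
              Real.exp ((n:ℝ) * (t ^ 2 / (2 * (1 - t)))) := by
            apply mul_le_mul_of_nonneg_left _ (Real.exp_pos _).le
            rw [hmgf_sum]; exact hprod
        _ = B := hnum
    have hne : μ {ω | (n:ℝ) * ε / K ≤ σ * S k ω} ≠ ⊤ := measure_ne_top μ _
    calc μ {ω | (n:ℝ) * ε / K ≤ σ * S k ω}
        = ENNReal.ofReal ((μ {ω | (n:ℝ) * ε / K ≤ σ * S k ω}).toReal) :=
          (ENNReal.ofReal_toReal hne).symm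
      _ ≤ ENNReal.ofReal B := ENNReal.ofReal_le_ofReal htoReal
  -- union bound
  have hT : ∀ ω, (∑ i, ∑ j, ∑ k, (X i j ω k - p i j k) *
      Real.log ((∑ j', p i j' k) / (nGrp i))) = ∑ k, S k ω := by
    intro ω
    calc ∑ i, ∑ j, ∑ k, (X i j ω k - p i j k) * c i k
        = ∑ i, ∑ k, ∑ j, (X i j ω k - p i j k) * c i k :=
          Finset.sum_congr rfl fun i _ => Finset.sum_comm
      _ = ∑ k, ∑ i, ∑ j, (X i j ω k - p i j k) * c i k := Finset.sum_comm
      _ = ∑ k, S k ω := rfl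
  have hsub : {ω | (n:ℝ) * ε ≤ |∑ i, ∑ j, ∑ k, (X i j ω k - p i j k) *
        Real.log ((∑ j', p i j' k) / (nGrp i))|}
      ⊆ ⋃ k : Fin K, ({ω | (n:ℝ) * ε / K ≤ 1 * S k ω}
          ∪ {ω | (n:ℝ) * ε / K ≤ (-1) * S k ω}) := by
    intro ω hω
    simp only [Set.mem_setOf_eq] at hω
    rw [hT ω] at hω
    by_contra hnot
    simp only [Set.mem_iUnion, Set.mem_union, Set.mem_setOf_eq, not_exists, not_or,
      not_le, one_mul, neg_one_mul] at hnot
    have habs : ∀ k, |S k ω| < (n:ℝ) * ε / K := fun k => abs_lt.2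
      ⟨by linarith [(hnot k).2], (hnot k).1⟩
    have huniv : (Finset.univ : Finset (Fin K)).Nonempty := by
      exact Finset.univ_nonempty_iff.mpr (Fin.pos_iff_nonempty.mp hK)
    have hlt : |∑ k, S k ω| < (n:ℝ) * ε := by
      calc |∑ k, S k ω| ≤ ∑ k, |S k ω| := Finset.abs_sum_le_sum_abs _ _
        _ < ∑ _k : Fin K, (n:ℝ) * ε / K :=
            Finset.sum_lt_sum_of_nonempty huniv fun k _ => habs k
        _ = (n:ℝ) * ε := by
            rw [Finset.sum_const, Finset.card_univ, Fintype.card_fin, nsmul_eq_mul]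
            field_simp
    linarith
  have hBpos : 0 ≤ B := (Real.exp_pos _).le
  calc μ {ω | (n:ℝ) * ε ≤ |∑ i, ∑ j, ∑ k, (X i j ω k - p i j k) *
        Real.log ((∑ j', p i j' k) / (nGrp i))|}
      ≤ μ (⋃ k : Fin K, ({ω | (n:ℝ) * ε / K ≤ 1 * S k ω}
          ∪ {ω | (n:ℝ) * ε / K ≤ (-1) * S k ω})) := measure_mono hsub
    _ ≤ ∑' k : Fin K, μ ({ω | (n:ℝ) * ε / K ≤ 1 * S k ω}
          ∪ {ω | (n:ℝ) * ε / K ≤ (-1) * S k ω}) := measure_iUnion_le _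
    _ = ∑ k : Fin K, μ ({ω | (n:ℝ) * ε / K ≤ 1 * S k ω}
          ∪ {ω | (n:ℝ) * ε / K ≤ (-1) * S k ω}) := tsum_fintype _
    _ ≤ ∑ _k : Fin K, (ENNReal.ofReal B + ENNReal.ofReal B) := by
        refine Finset.sum_le_sum fun k _ => ?_
        refine (measure_union_le _ _).trans (add_le_add ?_ ?_)
        · exact tail k 1 (Or.inl rfl)
        · exact tail k (-1) (Or.inr rfl)
    _ = ENNReal.ofReal (2 * (K:ℝ) * B) := by
        rw [Finset.sum_const, Finset.card_univ, Fintype.card_fin, nsmul_eq_mul]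
        rw [← ENNReal.ofReal_add hBpos hBpos]
        rw [show ((K:ℕ) : ENNReal) = ENNReal.ofReal (K:ℝ) from (ENNReal.ofReal_natCast K).symm]
        rw [← ENNReal.ofReal_mul (by positivity : (0:ℝ) ≤ (K:ℝ))]
        congr 1
        ring
end
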